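/- arXiv:1102.3635 — 10 statements merged into one kernel-verified Lean document; each statement's English description precedes it below -/
import Mathlib

section
/- If K is a vertex cut of a graph G = (V,E) separating V₁ and V₂ (i.e., (V₁,K,V₂) partitions V and no edge joins V₁ to V₂), and G' is the disjoint union of the induced-edge graphs (V₁∪K, E₁) and (V₂∪K, E₂) for an appropriate partition (E₁,E₂) of E, then the number of connected components of G' is at least the number of connected components of G and at most the number of components of G plus |K|. -/
open Finset SimpleGraph

set_option linter.unusedVariables false

private lemma reach_insert' {α : Type} {S : Set (Sym2 α)} {a b u v : α}
    (w : (fromEdgeSet (insert s(a,b) S)).Walk u v) :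
    (fromEdgeSet S).Reachable u v ∨
      (((fromEdgeSet S).Reachable u a ∨ (fromEdgeSet S).Reachable u b) ∧
       ((fromEdgeSet S).Reachable v a ∨ (fromEdgeSet S).Reachable v b)) := by
  induction w with
  | nil => exact Or.inl (Reachable.refl _)
  | @cons u x v h p ih =>
    rw [fromEdgeSet_adj] at h
    obtain ⟨hmem, hne⟩ := h
    rcases Set.mem_insert_iff.mp hmem with heq | hS
    · have hux : ((fromEdgeSet S).Reachable u a ∨ (fromEdgeSet S).Reachable u b) ∧
          ((fromEdgeSet S).Reachable x a ∨ (fromEdgeSet S).Reachable x b) := by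
        rw [Sym2.eq_iff] at heq
        rcases heq with ⟨rfl, rfl⟩ | ⟨rfl, rfl⟩
        · exact ⟨Or.inl (Reachable.refl _), Or.inr (Reachable.refl _)⟩
        · exact ⟨Or.inr (Reachable.refl _), Or.inl (Reachable.refl _)⟩
      rcases ih with hxv | ⟨_, hv⟩
      · exact Or.inr ⟨hux.1, hux.2.imp (fun h' => hxv.symm.trans h') (fun h' => hxv.symm.trans h')⟩
      · exact Or.inr ⟨hux.1, hv⟩
    · have hadj : (fromEdgeSet S).Adj u x := (fromEdgeSet_adj _).mpr ⟨hS, hne⟩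
      rcases ih with hxv | ⟨hx, hv⟩
      · exact Or.inl (hadj.reachable.trans hxv)
      · exact Or.inr ⟨hx.imp (fun h' => hadj.reachable.trans h') (fun h' => hadj.reachable.trans h'), hv⟩

private lemma kappa_step' {α : Type} [Finite α] (S : Set (Sym2 α)) (e : Sym2 α) :
    Nat.card (fromEdgeSet S).ConnectedComponent ≤
      Nat.card (fromEdgeSet (insert e S)).ConnectedComponent + 1 := by
  classical
  induction e using Sym2.ind with
  | _ a b =>
  set G0 := fromEdgeSet S with hG0
  set G1 := fromEdgeSet (insert s(a,b) S) with hG1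
  have hle : G0 ≤ G1 := fromEdgeSet_mono (Set.subset_insert _ _)
  let f : G0.ConnectedComponent → G1.ConnectedComponent :=
    ConnectedComponent.map (Hom.ofLE hle)
  let g : G0.ConnectedComponent → G1.ConnectedComponent ⊕ Unit := fun c =>
    if c = G0.connectedComponentMk a then Sum.inr () else Sum.inl (f c)
  have hginj : Function.Injective g := by
    intro x y hxy
    by_cases hx : x = G0.connectedComponentMk a <;>
      by_cases hy : y = G0.connectedComponentMk a
    · exact hx.trans hy.symm
    · simp [g, hx, hy] at hxy
    · simp [g, hx, hy] at hxy
    · simp only [g, hx, hy, if_neg, reduceIte] at hxy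
      replace hxy : f x = f y := Sum.inl.inj hxy
      revert hx hy hxy
      refine ConnectedComponent.ind₂ (fun u v => ?_) x y
      intro hx hy hxy
      have : G1.connectedComponentMk u = G1.connectedComponentMk v := by
        simpa [f, ConnectedComponent.map_mk] using hxy
      obtain ⟨p⟩ := ConnectedComponent.exact this
      rcases reach_insert' p with hr | ⟨hu, hv⟩
      · exact ConnectedComponent.sound hr
      · have hub : G0.Reachable u b := by
          rcases hu with h' | h'
          · exact absurd (ConnectedComponent.sound h') hx
          · exact h'
        have hvb : G0.Reachable v b := by
          rcases hv with h' | h'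
          · exact absurd (ConnectedComponent.sound h') hy
          · exact h'
        exact ConnectedComponent.sound (hub.trans hvb.symm)
  calc Nat.card G0.ConnectedComponent ≤ Nat.card (G1.ConnectedComponent ⊕ Unit) :=
        Nat.card_le_card_of_injective g hginj
    _ = Nat.card G1.ConnectedComponent + 1 := by simp [Nat.card_sum]

private lemma card_le_comps_add_edges' {α : Type} [Finite α] (S : Finset (Sym2 α)) :
    Nat.card α ≤ Nat.card (fromEdgeSet (S : Set (Sym2 α))).ConnectedComponent + S.card := by
  classical
  induction S using Finset.induction with
  | empty =>
    have hinj : Function.Injective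
        ((fromEdgeSet (∅ : Set (Sym2 α))).connectedComponentMk) := by
      intro u v huv
      have := ConnectedComponent.exact huv
      rw [fromEdgeSet_empty] at this
      exact reachable_bot.mp (by exact this)
    simpa using Nat.card_le_card_of_injective _ hinj
  | @insert e S he ih =>
    have h1 := kappa_step' (S : Set (Sym2 α)) e
    rw [Finset.card_insert_of_notMem he, Finset.coe_insert]
    omega


variable {V : Type} [Fintype V] [DecidableEq V]

/-- `(V₁, K, V₂)` partitions the vertex set of the graph with edge set `E`, with no
`V₁`–`V₂` edges: `K` is a vertex cut separating `V₁` and `V₂`. -/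
def IsCutPartition (V₁ K V₂ : Finset V) (E : Finset (Sym2 V)) : Prop :=
  Disjoint V₁ K ∧ Disjoint V₁ V₂ ∧ Disjoint K V₂ ∧
  (∀ e ∈ E, ¬ e.IsDiag) ∧
  (∀ e ∈ E, ∀ v ∈ e, v ∈ V₁ ∪ K ∪ V₂) ∧
  (∀ a b : V, s(a, b) ∈ E → a ∈ V₁ → b ∉ V₂)

/-- `(E₁, E₂)` is an appropriate partition of `E` for the cut: `E₁` avoids `V₂`
and `E₂` avoids `V₁`. -/
def IsAppropriate (V₁ V₂ : Finset V) (E E₁ E₂ : Finset (Sym2 V)) : Prop :=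
  E₁ ∪ E₂ = E ∧ Disjoint E₁ E₂ ∧
  (∀ e ∈ E₁, ∀ v ∈ e, v ∉ V₂) ∧ (∀ e ∈ E₂, ∀ v ∈ e, v ∉ V₁)

/-- The number of connected components of the graph with vertex set `Vs` and edge set `S`. -/
noncomputable def kappa (Vs : Finset V) (S : Finset (Sym2 V)) : ℕ :=
  Nat.card ((SimpleGraph.fromEdgeSet (S : Set (Sym2 V))).induce (Vs : Set V)).ConnectedComponent

/-- The number of connected components of `G'` (the disjoint union of `(V₁∪K, E₁)` and
`(V₂∪K, E₂)`, obtained from `G` by splitting the vertices of the cut `K`) is at least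
the number of components of `G` and at most that number plus `|K|`. -/
theorem stmt0 (V₁ K V₂ : Finset V) (E E₁ E₂ : Finset (Sym2 V))
    (hcut : IsCutPartition V₁ K V₂ E) (happ : IsAppropriate V₁ V₂ E E₁ E₂) :
    kappa (V₁ ∪ K ∪ V₂) E ≤ kappa (V₁ ∪ K) E₁ + kappa (V₂ ∪ K) E₂ ∧
    kappa (V₁ ∪ K) E₁ + kappa (V₂ ∪ K) E₂ ≤ kappa (V₁ ∪ K ∪ V₂) E + K.card := by
  obtain ⟨hd1, hd2, hd3, hdiag, hinc, hsep⟩ := hcut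
  obtain ⟨hEu, hEd, hA1, hA2⟩ := happ
  unfold kappa
  classical
  set G := (fromEdgeSet (E : Set (Sym2 V))).induce ((V₁ ∪ K ∪ V₂ : Finset V) : Set V) with hGdef
  set G1 := (fromEdgeSet (E₁ : Set (Sym2 V))).induce ((V₁ ∪ K : Finset V) : Set V) with hG1def
  set G2 := (fromEdgeSet (E₂ : Set (Sym2 V))).induce ((V₂ ∪ K : Finset V) : Set V) with hG2def
  have hsub1 : ∀ {v : V}, v ∈ ((V₁ ∪ K : Finset V) : Set V) → v ∈ ((V₁ ∪ K ∪ V₂ : Finset V) : Set V) := by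
    intro v h
    exact Finset.mem_coe.mpr (Finset.mem_union_left _ (Finset.mem_coe.mp h))
  have hsub2 : ∀ {v : V}, v ∈ ((V₂ ∪ K : Finset V) : Set V) → v ∈ ((V₁ ∪ K ∪ V₂ : Finset V) : Set V) := by
    intro v h
    rcases Finset.mem_union.mp (Finset.mem_coe.mp h) with h | h
    · exact Finset.mem_coe.mpr (Finset.mem_union_right _ h)
    · exact Finset.mem_coe.mpr (Finset.mem_union_left _ (Finset.mem_union_right _ h))
  let φ₁ : G1 →g G := ⟨fun x => ⟨x.1, hsub1 x.2⟩, by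
    intro a b hab
    simp only [hG1def, hGdef, comap_adj, Function.Embedding.coe_subtype, fromEdgeSet_adj] at hab ⊢
    exact ⟨Finset.mem_coe.mpr (hEu ▸ Finset.mem_union_left _ (Finset.mem_coe.mp hab.1)), hab.2⟩⟩
  let φ₂ : G2 →g G := ⟨fun x => ⟨x.1, hsub2 x.2⟩, by
    intro a b hab
    simp only [hG2def, hGdef, comap_adj, Function.Embedding.coe_subtype, fromEdgeSet_adj] at hab ⊢
    exact ⟨Finset.mem_coe.mpr (hEu ▸ Finset.mem_union_right _ (Finset.mem_coe.mp hab.1)), hab.2⟩⟩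
  let m : G1.ConnectedComponent ⊕ G2.ConnectedComponent → G.ConnectedComponent :=
    Sum.elim (ConnectedComponent.map φ₁) (ConnectedComponent.map φ₂)
  -- Lower bound: m is surjective
  have hsurj : Function.Surjective m := by
    intro c
    induction c using SimpleGraph.ConnectedComponent.ind with
    | _ v =>
      rcases Finset.mem_union.mp (Finset.mem_coe.mp v.2) with h | h
      · exact ⟨Sum.inl (G1.connectedComponentMk ⟨v.1, Finset.mem_coe.mpr h⟩),
          congrArg G.connectedComponentMk (Subtype.ext rfl)⟩
      · exact ⟨Sum.inr (G2.connectedComponentMk ⟨v.1, Finset.mem_coe.mpr (Finset.mem_union_left _ h)⟩),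
          congrArg G.connectedComponentMk (Subtype.ext rfl)⟩
  have hlow : Nat.card G.ConnectedComponent ≤
      Nat.card (G1.ConnectedComponent ⊕ G2.ConnectedComponent) :=
    Nat.card_le_card_of_surjective m hsurj
  rw [Nat.card_sum] at hlow
  -- Upper bound
  have hk1 : ∀ {k : V}, k ∈ K → k ∈ ((V₁ ∪ K : Finset V) : Set V) :=
    fun h => Finset.mem_coe.mpr (Finset.mem_union_right _ h)
  have hk2 : ∀ {k : V}, k ∈ K → k ∈ ((V₂ ∪ K : Finset V) : Set V) :=
    fun h => Finset.mem_coe.mpr (Finset.mem_union_right _ h)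
  set S' : Finset (Sym2 (G1.ConnectedComponent ⊕ G2.ConnectedComponent)) :=
    K.attach.image (fun k => s(Sum.inl (G1.connectedComponentMk ⟨k.1, hk1 k.2⟩),
                               Sum.inr (G2.connectedComponentMk ⟨k.1, hk2 k.2⟩))) with hS'def
  set H := fromEdgeSet (S' : Set (Sym2 (G1.ConnectedComponent ⊕ G2.ConnectedComponent))) with hHdef
  set Over : (G1.ConnectedComponent ⊕ G2.ConnectedComponent) → V → Prop := fun n v =>
    (∃ h : v ∈ ((V₁ ∪ K : Finset V) : Set V), n = Sum.inl (G1.connectedComponentMk ⟨v, h⟩)) ∨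
    (∃ h : v ∈ ((V₂ ∪ K : Finset V) : Set V), n = Sum.inr (G2.connectedComponentMk ⟨v, h⟩))
    with hOverdef
  have key1 : ∀ (v : V) (n n' : _), Over n v → Over n' v → H.Reachable n n' := by
    intro v n n' hn hn'
    have hadjK : ∀ (h1 : v ∈ ((V₁ ∪ K : Finset V) : Set V)) (h2 : v ∈ ((V₂ ∪ K : Finset V) : Set V)),
        H.Adj (Sum.inl (G1.connectedComponentMk ⟨v, h1⟩)) (Sum.inr (G2.connectedComponentMk ⟨v, h2⟩)) := by
      intro h1 h2
      have hvK : v ∈ K := by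
        rcases Finset.mem_union.mp (Finset.mem_coe.mp h1) with hv1 | hv1
        · rcases Finset.mem_union.mp (Finset.mem_coe.mp h2) with hv2 | hv2
          · exact absurd hv2 (Finset.disjoint_left.mp hd2 hv1)
          · exact absurd hv2 (Finset.disjoint_left.mp hd1 hv1)
        · exact hv1
      refine (fromEdgeSet_adj _).mpr ⟨?_, by simp⟩
      refine Finset.mem_coe.mpr (Finset.mem_image.mpr ⟨⟨v, hvK⟩, Finset.mem_attach _ _, ?_⟩)
      rfl
    rcases hn with ⟨h1, rfl⟩ | ⟨h1, rfl⟩ <;> rcases hn' with ⟨h2, rfl⟩ | ⟨h2, rfl⟩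
    · exact Reachable.refl _
    · exact (hadjK h1 h2).reachable
    · exact (hadjK h2 h1).reachable.symm
    · exact Reachable.refl _
  have key2 : ∀ (u w : V), s(u,w) ∈ E → u ≠ w → u ∈ V₁ ∪ K ∪ V₂ → w ∈ V₁ ∪ K ∪ V₂ →
      ∀ n n', Over n u → Over n' w → H.Reachable n n' := by
    intro u w hEmem hne hu hw n n' hn hn'
    rw [← hEu] at hEmem
    rcases Finset.mem_union.mp hEmem with h1 | h2
    · have huA : u ∈ V₁ ∪ K := by
        have : u ∉ V₂ := hA1 _ h1 u (Sym2.mem_mk_left u w)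
        rcases Finset.mem_union.mp hu with h | h
        · exact h
        · exact absurd h this
      have hwA : w ∈ V₁ ∪ K := by
        have : w ∉ V₂ := hA1 _ h1 w (Sym2.mem_mk_right u w)
        rcases Finset.mem_union.mp hw with h | h
        · exact h
        · exact absurd h this
      have hcomp : G1.connectedComponentMk ⟨u, Finset.mem_coe.mpr huA⟩ =
          G1.connectedComponentMk ⟨w, Finset.mem_coe.mpr hwA⟩ := by
        refine ConnectedComponent.connectedComponentMk_eq_of_adj ?_
        simp only [hG1def, comap_adj, Function.Embedding.coe_subtype, fromEdgeSet_adj]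
        exact ⟨Finset.mem_coe.mpr h1, hne⟩
      refine (key1 u n _ hn (Or.inl ⟨Finset.mem_coe.mpr huA, rfl⟩)).trans ?_
      rw [hcomp]
      exact key1 w _ n' (Or.inl ⟨Finset.mem_coe.mpr hwA, rfl⟩) hn'
    · have huA : u ∈ V₂ ∪ K := by
        have : u ∉ V₁ := hA2 _ h2 u (Sym2.mem_mk_left u w)
        rcases Finset.mem_union.mp hu with h | h
        · rcases Finset.mem_union.mp h with h | h
          · exact absurd h this
          · exact Finset.mem_union_right _ h
        · exact Finset.mem_union_left _ h
      have hwA : w ∈ V₂ ∪ K := by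
        have : w ∉ V₁ := hA2 _ h2 w (Sym2.mem_mk_right u w)
        rcases Finset.mem_union.mp hw with h | h
        · rcases Finset.mem_union.mp h with h | h
          · exact absurd h this
          · exact Finset.mem_union_right _ h
        · exact Finset.mem_union_left _ h
      have hcomp : G2.connectedComponentMk ⟨u, Finset.mem_coe.mpr huA⟩ =
          G2.connectedComponentMk ⟨w, Finset.mem_coe.mpr hwA⟩ := by
        refine ConnectedComponent.connectedComponentMk_eq_of_adj ?_
        simp only [hG2def, comap_adj, Function.Embedding.coe_subtype, fromEdgeSet_adj]
        exact ⟨Finset.mem_coe.mpr h2, hne⟩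
      refine (key1 u n _ hn (Or.inr ⟨Finset.mem_coe.mpr huA, rfl⟩)).trans ?_
      rw [hcomp]
      exact key1 w _ n' (Or.inr ⟨Finset.mem_coe.mpr hwA, rfl⟩) hn'
  have key3 : ∀ (u w : ((V₁ ∪ K ∪ V₂ : Finset V) : Set V)) (p : G.Walk u w) (n n' : _),
      Over n ↑u → Over n' ↑w → H.Reachable n n' := by
    intro u w p
    induction p with
    | nil => exact fun n n' hn hn' => key1 _ n n' hn hn'
    | @cons u x w h p ih =>
      intro n n' hn hn'
      have hx : (↑x : V) ∈ V₁ ∪ K ∪ V₂ := Finset.mem_coe.mp x.2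
      obtain ⟨nx, hnx⟩ : ∃ nx, Over nx ↑x := by
        rcases Finset.mem_union.mp hx with h' | h'
        · exact ⟨Sum.inl (G1.connectedComponentMk ⟨x.1, Finset.mem_coe.mpr h'⟩),
            Or.inl ⟨Finset.mem_coe.mpr h', rfl⟩⟩
        · exact ⟨Sum.inr (G2.connectedComponentMk ⟨x.1, Finset.mem_coe.mpr (Finset.mem_union_left _ h')⟩),
            Or.inr ⟨Finset.mem_coe.mpr (Finset.mem_union_left _ h'), rfl⟩⟩
      have hadj : s((↑u : V), (↑x : V)) ∈ E ∧ (↑u : V) ≠ ↑x := by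
        simpa only [hGdef, comap_adj, Function.Embedding.coe_subtype, fromEdgeSet_adj,
          Finset.mem_coe] using h
      exact (key2 ↑u ↑x hadj.1 hadj.2 (Finset.mem_coe.mp u.2) hx n nx hn hnx).trans
        (ih nx n' hnx hn')
  have hover : ∀ n, ∃ v : ((V₁ ∪ K ∪ V₂ : Finset V) : Set V),
      m n = G.connectedComponentMk v ∧ Over n ↑v := by
    intro n
    rcases n with c | c
    · induction c using SimpleGraph.ConnectedComponent.ind with
      | _ x => exact ⟨⟨x.1, hsub1 x.2⟩, rfl, Or.inl ⟨x.2, by rfl⟩⟩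
    · induction c using SimpleGraph.ConnectedComponent.ind with
      | _ x => exact ⟨⟨x.1, hsub2 x.2⟩, rfl, Or.inr ⟨x.2, by rfl⟩⟩
  have hm_adj : ∀ n n', H.Adj n n' → m n = m n' := by
    intro n n' h
    rw [hHdef, fromEdgeSet_adj] at h
    obtain ⟨hmem, -⟩ := h
    obtain ⟨k, -, hk⟩ := Finset.mem_image.mp (Finset.mem_coe.mp hmem)
    rw [Sym2.eq_iff] at hk
    rcases hk with ⟨h1, h2⟩ | ⟨h1, h2⟩
    · rw [← h1, ← h2]; rfl
    · rw [← h1, ← h2]; rfl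
  have hwalkm : ∀ (n n' : _) (p : H.Walk n n'), m n = m n' := by
    intro n n' p
    induction p with
    | nil => rfl
    | cons h p ih => exact (hm_adj _ _ h).trans ih
  have hminj : Function.Injective
      (ConnectedComponent.lift m (fun v w p _ => hwalkm v w p) : H.ConnectedComponent → _) := by
    intro c c'
    refine ConnectedComponent.ind₂ (fun n n' => ?_) c c'
    intro h
    replace h : m n = m n' := h
    obtain ⟨v, hv1, hv2⟩ := hover n
    obtain ⟨w, hw1, hw2⟩ := hover n'
    have hvw : G.connectedComponentMk v = G.connectedComponentMk w := by rw [← hv1, ← hw1, h]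
    obtain ⟨p⟩ := ConnectedComponent.exact hvw
    exact ConnectedComponent.sound (key3 v w p n n' hv2 hw2)
  have hup1 : Nat.card (G1.ConnectedComponent ⊕ G2.ConnectedComponent) ≤
      Nat.card H.ConnectedComponent + S'.card := card_le_comps_add_edges' S'
  have hup2 : Nat.card H.ConnectedComponent ≤ Nat.card G.ConnectedComponent :=
    Nat.card_le_card_of_injective _ hminj
  have hS'card : S'.card ≤ K.card := by
    refine le_trans Finset.card_image_le ?_
    simp
  rw [Nat.card_sum] at hup1
  exact ⟨hlow, by omega⟩
end

section
/- Let G = (V,E) be a graph with vertex cut K separating V₁ and V₂, and let G' be the disjoint union of (V₁∪K,E₁) and (V₂∪K,E₂) for an appropriate partition (E₁,E₂). Then the 𝔽₂-rank of the adjacency matrix of G and the 𝔽₂-rank of the adjacency matrix of G' differ by at most 2|K|. -/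
open Finset Matrix

variable {V : Type} [Fintype V] [DecidableEq V]

/-- The `𝔽₂`-rank of the adjacency matrix of the graph with edge set `S`:
the `(a,b)` entry is `1` iff `a ≠ b` and `{a,b} ∈ S`. -/
noncomputable def adjRank (S : Finset (Sym2 V)) : ℕ :=
  (Matrix.of fun (a b : V) =>
    if s(a, b) ∈ S ∧ a ≠ b then (1 : ZMod 2) else 0).rank

/-- The submodule of functions supported on a set `s`. -/
def suppSub (s : Set V) : Submodule (ZMod 2) (V → ZMod 2) where
  carrier := {x | ∀ b, b ∉ s → x b = 0}
  add_mem' := by intro a b ha hb c hc; simp [Pi.add_apply, ha c hc, hb c hc]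
  zero_mem' := by intro b _; rfl
  smul_mem' := by intro c x hx b hb; simp [Pi.smul_apply, hx b hb]

lemma mem_suppSub {s : Set V} {x : V → ZMod 2} :
    x ∈ suppSub s ↔ ∀ b, b ∉ s → x b = 0 := Iff.rfl

lemma suppSub_le_span (K : Finset V) :
    suppSub (K : Set V) ≤ Submodule.span (ZMod 2)
      ((K.image fun k => Pi.single k (1 : ZMod 2)) : Set (V → ZMod 2)) := by
  intro x hx
  have hxeq : x = ∑ k ∈ K, x k • Pi.single k (1 : ZMod 2) := by
    funext b
    rw [Finset.sum_apply]
    by_cases hb : b ∈ K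
    · rw [Finset.sum_eq_single b]
      · simp
      · intro c hc hcb
        simp [Pi.single_apply, hcb.symm]
      · intro h; exact absurd hb h
    · rw [hx b hb]
      refine (Finset.sum_eq_zero ?_).symm
      intro c hc
      have : b ≠ c := by rintro rfl; exact hb hc
      simp [Pi.single_apply, this.symm]
  rw [hxeq]
  apply Submodule.sum_mem
  intro k hk
  exact Submodule.smul_mem _ _ (Submodule.subset_span
    (Finset.mem_coe.mpr (Finset.mem_image_of_mem _ hk)))

lemma finrank_suppSub_le (K : Finset V) :
    Module.finrank (ZMod 2) (suppSub (K : Set V)) ≤ K.card := by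
  calc Module.finrank (ZMod 2) (suppSub (K : Set V))
      ≤ Module.finrank (ZMod 2) (Submodule.span (ZMod 2)
        ((K.image fun k => Pi.single k (1 : ZMod 2)) : Set (V → ZMod 2))) :=
        Submodule.finrank_mono (suppSub_le_span K)
    _ ≤ (K.image fun k => Pi.single k (1 : ZMod 2)).card :=
        finrank_span_finset_le_card _
    _ ≤ K.card := Finset.card_image_le

/-- Splitting the vertices of a cut `K` (forming `G'`, the disjoint union of
`(V₁∪K, E₁)` and `(V₂∪K, E₂)`, whose adjacency rank is `adjRank E₁ + adjRank E₂`)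
changes the `𝔽₂`-rank of the adjacency matrix by at most `2|K|`. -/
theorem stmt2 (V₁ K V₂ : Finset V) (E E₁ E₂ : Finset (Sym2 V))
    (hcut : IsCutPartition V₁ K V₂ E) (happ : IsAppropriate V₁ V₂ E E₁ E₂) :
    adjRank E ≤ adjRank E₁ + adjRank E₂ + 2 * K.card ∧
    adjRank E₁ + adjRank E₂ ≤ adjRank E + 2 * K.card := by
  obtain ⟨hd1, hd2, hd3, _hdiag, hmem, _hcut'⟩ := hcut
  obtain ⟨hunion, _hdisj12, h1, h2⟩ := happ
  have hE1sub : E₁ ⊆ E := hunion ▸ Finset.subset_union_left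
  have hE2sub : E₂ ⊆ E := hunion ▸ Finset.subset_union_right
  set M : Finset (Sym2 V) → Matrix V V (ZMod 2) :=
    fun S => Matrix.of fun (a b : V) =>
      if s(a, b) ∈ S ∧ a ≠ b then (1 : ZMod 2) else 0 with hM
  -- entrywise sum
  have hsum : M E = M E₁ + M E₂ := by
    funext a b
    simp only [hM, Matrix.of_apply, Matrix.add_apply]
    by_cases hab : a ≠ b
    · by_cases he1 : s(a, b) ∈ E₁
      · have he2 : s(a, b) ∉ E₂ := fun h => Finset.disjoint_left.mp _hdisj12 he1 h
        have he : s(a, b) ∈ E := hE1sub he1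
        simp [he, he1, he2, hab]
      · by_cases he2 : s(a, b) ∈ E₂
        · have he : s(a, b) ∈ E := hE2sub he2
          simp [he, he1, he2, hab]
        · have he : s(a, b) ∉ E := by
            rw [← hunion]; simp [he1, he2]
          simp [he, he1, he2]
    · simp [hab]
  -- column spaces
  set C : Submodule (ZMod 2) (V → ZMod 2) := LinearMap.range (M E).mulVecLin with hC
  set C₁ : Submodule (ZMod 2) (V → ZMod 2) := LinearMap.range (M E₁).mulVecLin with hC₁
  set C₂ : Submodule (ZMod 2) (V → ZMod 2) := LinearMap.range (M E₂).mulVecLin with hC₂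
  have hCspan : C = Submodule.span (ZMod 2) (Set.range (M E)ᵀ) := Matrix.range_mulVecLin _
  have hC₁span : C₁ = Submodule.span (ZMod 2) (Set.range (M E₁)ᵀ) := Matrix.range_mulVecLin _
  have hC₂span : C₂ = Submodule.span (ZMod 2) (Set.range (M E₂)ᵀ) := Matrix.range_mulVecLin _
  have hrankE : adjRank E = Module.finrank (ZMod 2) C := rfl
  have hrankE₁ : adjRank E₁ = Module.finrank (ZMod 2) C₁ := rfl
  have hrankE₂ : adjRank E₂ = Module.finrank (ZMod 2) C₂ := rfl
  -- vanishing columns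
  have hcol1zero : ∀ a : V, a ∉ V₁ → a ∉ K → (M E₁)ᵀ a = 0 := by
    intro a ha1 haK
    funext b
    simp only [hM, Matrix.transpose_apply, Matrix.of_apply, Pi.zero_apply]
    rw [if_neg]
    rintro ⟨he, _⟩
    have haU : a ∈ V₁ ∪ K ∪ V₂ := hmem _ (hE1sub he) a (by simp)
    have ha2 : a ∈ V₂ := by
      simp only [Finset.mem_union] at haU
      tauto
    exact h1 _ he a (by simp) ha2
  have hcol2zero : ∀ a : V, a ∉ V₂ → a ∉ K → (M E₂)ᵀ a = 0 := by
    intro a ha2 haK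
    funext b
    simp only [hM, Matrix.transpose_apply, Matrix.of_apply, Pi.zero_apply]
    rw [if_neg]
    rintro ⟨he, _⟩
    have haU : a ∈ V₁ ∪ K ∪ V₂ := hmem _ (hE2sub he) a (by simp)
    have ha1 : a ∈ V₁ := by
      simp only [Finset.mem_union] at haU
      tauto
    exact h2 _ he a (by simp) ha1
  -- column sum
  have hcolsum : ∀ a : V, (M E)ᵀ a = (M E₁)ᵀ a + (M E₂)ᵀ a := by
    intro a; rw [hsum]; rfl
  -- char 2: rearrange
  have hsymm : ∀ (S : Finset (Sym2 V)) (a b : V), M S b a = M S a b := by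
    intro S a b
    have hiff : (s(b, a) ∈ S ∧ b ≠ a) ↔ (s(a, b) ∈ S ∧ a ≠ b) := by
      rw [Sym2.eq_swap]; exact and_congr Iff.rfl ne_comm
    simp only [hM, Matrix.of_apply]
    exact if_congr hiff rfl rfl
  have hcol1eq : ∀ a : V, (M E₁)ᵀ a = (M E)ᵀ a + (M E₂)ᵀ a := by
    intro a
    rw [hcolsum a]
    funext b
    simp only [Pi.add_apply]
    rw [add_assoc, CharTwo.add_self_eq_zero, add_zero]
  -- D: span of E₂-columns indexed by K
  set D : Submodule (ZMod 2) (V → ZMod 2) :=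
    Submodule.span (ZMod 2) ((K.image fun k => (M E₂)ᵀ k) : Set (V → ZMod 2)) with hD
  have hDle : Module.finrank (ZMod 2) D ≤ K.card :=
    le_trans (finrank_span_finset_le_card _) Finset.card_image_le
  have hmemD : ∀ k ∈ K, (M E₂)ᵀ k ∈ D :=
    fun k hk => Submodule.subset_span (Finset.mem_coe.mpr (Finset.mem_image_of_mem _ hk))
  have hmemC : ∀ a : V, (M E)ᵀ a ∈ C := by
    intro a; rw [hCspan]; exact Submodule.subset_span (Set.mem_range_self a)
  have hmemC₁ : ∀ a : V, (M E₁)ᵀ a ∈ C₁ := by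
    intro a; rw [hC₁span]; exact Submodule.subset_span (Set.mem_range_self a)
  have hmemC₂ : ∀ a : V, (M E₂)ᵀ a ∈ C₂ := by
    intro a; rw [hC₂span]; exact Submodule.subset_span (Set.mem_range_self a)
  -- C ≤ C₁ ⊔ C₂
  have hCle : C ≤ C₁ ⊔ C₂ := by
    rw [hCspan]
    rw [Submodule.span_le]
    rintro x ⟨a, rfl⟩
    rw [hcolsum a]
    exact Submodule.add_mem _ (Submodule.mem_sup_left (hmemC₁ a))
      (Submodule.mem_sup_right (hmemC₂ a))
  -- C₁ ≤ C ⊔ D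
  have hC₁le : C₁ ≤ C ⊔ D := by
    rw [hC₁span, Submodule.span_le]
    rintro x ⟨a, rfl⟩
    by_cases haK : a ∈ K
    · rw [hcol1eq a]
      exact Submodule.add_mem _ (Submodule.mem_sup_left (hmemC a))
        (Submodule.mem_sup_right (hmemD a haK))
    · by_cases ha1 : a ∈ V₁
      · have ha2 : a ∉ V₂ := Finset.disjoint_left.mp hd2 ha1
        have : (M E₂)ᵀ a = 0 := hcol2zero a ha2 haK
        rw [hcol1eq a, this, add_zero]
        exact Submodule.mem_sup_left (hmemC a)
      · rw [hcol1zero a ha1 haK]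
        exact Submodule.zero_mem _
  -- C₂ ≤ C ⊔ D
  have hC₂le : C₂ ≤ C ⊔ D := by
    rw [hC₂span, Submodule.span_le]
    rintro x ⟨a, rfl⟩
    by_cases haK : a ∈ K
    · exact Submodule.mem_sup_right (hmemD a haK)
    · by_cases ha2 : a ∈ V₂
      · have ha1 : a ∉ V₁ := fun h => Finset.disjoint_left.mp hd2 h ha2
        have h0 : (M E₁)ᵀ a = 0 := hcol1zero a ha1 haK
        have : (M E₂)ᵀ a = (M E)ᵀ a := by rw [hcolsum a, h0, zero_add]
        rw [this]
        exact Submodule.mem_sup_left (hmemC a)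
      · rw [hcol2zero a ha2 haK]
        exact Submodule.zero_mem _
  -- C₁ ⊓ C₂ is supported on K
  have hC₁supp : C₁ ≤ suppSub ((V₁ ∪ K : Finset V) : Set V) := by
    rw [hC₁span, Submodule.span_le]
    rintro x ⟨a, rfl⟩
    intro b hb
    simp only [Finset.coe_union, Set.mem_union, Finset.mem_coe] at hb
    push_neg at hb
    have h0 : (M E₁)ᵀ b = 0 := hcol1zero b hb.1 hb.2
    have h0' := congrFun h0 a
    simp only [Matrix.transpose_apply] at h0'
    show (M E₁)ᵀ a b = 0
    rw [Matrix.transpose_apply, hsymm, h0']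
    rfl
  have hC₂supp : C₂ ≤ suppSub ((V₂ ∪ K : Finset V) : Set V) := by
    rw [hC₂span, Submodule.span_le]
    rintro x ⟨a, rfl⟩
    intro b hb
    simp only [Finset.coe_union, Set.mem_union, Finset.mem_coe] at hb
    push_neg at hb
    have h0 : (M E₂)ᵀ b = 0 := hcol2zero b hb.1 hb.2
    have h0' := congrFun h0 a
    simp only [Matrix.transpose_apply] at h0'
    show (M E₂)ᵀ a b = 0
    rw [Matrix.transpose_apply, hsymm, h0']
    rfl
  have hinf : C₁ ⊓ C₂ ≤ suppSub (K : Set V) := by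
    intro x hx
    intro b hbK
    have hx1 := hC₁supp hx.1
    have hx2 := hC₂supp hx.2
    by_cases hb1 : b ∈ V₁
    · apply hx2
      simp only [Finset.coe_union, Set.mem_union, Finset.mem_coe]
      push_neg
      exact ⟨Finset.disjoint_left.mp hd2 hb1, fun h => hbK (Finset.mem_coe.mpr h)⟩
    · apply hx1
      simp only [Finset.coe_union, Set.mem_union, Finset.mem_coe]
      push_neg
      exact ⟨hb1, fun h => hbK (Finset.mem_coe.mpr h)⟩
  have hinfrank : Module.finrank (ZMod 2) ↥(C₁ ⊓ C₂) ≤ K.card :=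
    le_trans (Submodule.finrank_mono hinf) (finrank_suppSub_le K)
  -- finrank arithmetic
  have key := Submodule.finrank_sup_add_finrank_inf_eq C₁ C₂
  constructor
  · -- rank E ≤ rank E₁ + rank E₂ + 2|K|
    rw [hrankE, hrankE₁, hrankE₂]
    have h1' : Module.finrank (ZMod 2) C ≤ Module.finrank (ZMod 2) ↥(C₁ ⊔ C₂) :=
      Submodule.finrank_mono hCle
    have h2' : Module.finrank (ZMod 2) ↥(C₁ ⊔ C₂) ≤
        Module.finrank (ZMod 2) C₁ + Module.finrank (ZMod 2) C₂ :=
      Submodule.finrank_add_le_finrank_add_finrank C₁ C₂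
    omega
  · -- rank E₁ + rank E₂ ≤ rank E + 2|K|
    rw [hrankE, hrankE₁, hrankE₂]
    have hsuple : C₁ ⊔ C₂ ≤ C ⊔ D := sup_le hC₁le hC₂le
    have h3' : Module.finrank (ZMod 2) ↥(C₁ ⊔ C₂) ≤ Module.finrank (ZMod 2) ↥(C ⊔ D) :=
      Submodule.finrank_mono hsuple
    have h4' : Module.finrank (ZMod 2) ↥(C ⊔ D) ≤
        Module.finrank (ZMod 2) C + Module.finrank (ZMod 2) D :=
      Submodule.finrank_add_le_finrank_add_finrank C D
    omega
end

section
/- For fixed q, μ > 0, the weight function w((V,S)) = q^{κ(S)} μ^{|S|} (where κ(S) is the number of connected components of (V,S)) is λ-multiplicative with λ = q: for any graph G=(V,E), any vertex cut K separating V₁ and V₂, and any appropriate partition (E₁,E₂) of E, λ̂^{-|K|} ≤ w((V₁∪K,E₁))·w((V₂∪K,E₂))/w(G) ≤ λ̂^{|K|}, where λ̂ = max{λ, 1/λ}. -/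
open Finset

variable {V : Type} [Fintype V] [DecidableEq V]

/-- `λ̂ = max {λ, 1/λ}`. -/
noncomputable def lamHat (l : ℝ) : ℝ := max l l⁻¹

/-- A weight function `w` on graphs (given by vertex set and edge set) is
`λ`-multiplicative: for every graph, vertex cut `K` separating `V₁, V₂` and
appropriate edge partition `(E₁, E₂)`,
`λ̂ ^ (-|K|) ≤ w(V₁∪K, E₁) · w(V₂∪K, E₂) / w(G) ≤ λ̂ ^ |K|`. -/
noncomputable def EdgeLamMult (w : Finset V → Finset (Sym2 V) → ℝ) (l : ℝ) : Prop :=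
  ∀ (V₁ K V₂ : Finset V) (E E₁ E₂ : Finset (Sym2 V)),
    IsCutPartition V₁ K V₂ E → IsAppropriate V₁ V₂ E E₁ E₂ →
    lamHat l ^ (-(K.card : ℤ)) ≤ w (V₁ ∪ K) E₁ * w (V₂ ∪ K) E₂ / w (V₁ ∪ K ∪ V₂) E ∧
    w (V₁ ∪ K) E₁ * w (V₂ ∪ K) E₂ / w (V₁ ∪ K ∪ V₂) E ≤ lamHat l ^ (K.card : ℤ)

section Aux

open SimpleGraph

variable {α : Type*}


lemma cc_map_surj {β : Type*} {G : SimpleGraph α} {G' : SimpleGraph β} (φ : G →g G')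
    (h : Function.Surjective φ) :
    Function.Surjective (ConnectedComponent.map φ) := by
  intro C
  induction C using SimpleGraph.ConnectedComponent.ind with
  | _ v =>
    obtain ⟨x, rfl⟩ := h v
    exact ⟨G.connectedComponentMk x, rfl⟩

lemma card_cc_le_of_le {G H : SimpleGraph α} [Finite α] (h : G ≤ H) :
    Nat.card H.ConnectedComponent ≤ Nat.card G.ConnectedComponent :=
  Nat.card_le_card_of_surjective _ (cc_map_surj (SimpleGraph.Hom.ofLE h) (fun x => ⟨x, rfl⟩))

lemma reach_sup_edge {G : SimpleGraph α} {u v x y : α}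
    (h : (G ⊔ edge u v).Reachable x y) :
    G.Reachable x y ∨ (G.Reachable x u ∧ G.Reachable v y) ∨
      (G.Reachable x v ∧ G.Reachable u y) := by
  obtain ⟨w⟩ := h
  induction w with
  | nil => exact Or.inl (Reachable.refl _)
  | @cons a b c hadj w ih =>
    rcases hadj with hG | hE
    · have hab : G.Reachable a b := hG.reachable
      rcases ih with h1 | ⟨h1, h2⟩ | ⟨h1, h2⟩
      · exact Or.inl (hab.trans h1)
      · exact Or.inr (Or.inl ⟨hab.trans h1, h2⟩)
      · exact Or.inr (Or.inr ⟨hab.trans h1, h2⟩)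
    · rw [edge_adj] at hE
      rcases hE.1 with ⟨rfl, rfl⟩ | ⟨rfl, rfl⟩
      · rcases ih with h1 | ⟨h1, h2⟩ | ⟨h1, h2⟩
        · exact Or.inr (Or.inl ⟨Reachable.refl _, h1⟩)
        · exact Or.inr (Or.inl ⟨Reachable.refl _, h2⟩)
        · exact Or.inl h2
      · rcases ih with h1 | ⟨h1, h2⟩ | ⟨h1, h2⟩
        · exact Or.inr (Or.inr ⟨Reachable.refl _, h1⟩)
        · exact Or.inl h2
        · exact Or.inr (Or.inr ⟨Reachable.refl _, h2⟩)

lemma card_cc_sup_edge_of_reach {G : SimpleGraph α} [Finite α] {u v : α}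
    (h : G.Reachable u v) :
    Nat.card (G ⊔ edge u v).ConnectedComponent = Nat.card G.ConnectedComponent := by
  have key : ∀ x y : α, (G ⊔ edge u v).Reachable x y → G.Reachable x y := by
    intro x y hxy
    rcases reach_sup_edge hxy with h1 | ⟨h1, h2⟩ | ⟨h1, h2⟩
    · exact h1
    · exact h1.trans (h.trans h2)
    · exact h1.trans (h.symm.trans h2)
  refine le_antisymm (card_cc_le_of_le le_sup_left) ?_
  refine Nat.card_le_card_of_injective (ConnectedComponent.map (SimpleGraph.Hom.ofLE le_sup_left)) ?_
  intro C D hCD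
  induction C using SimpleGraph.ConnectedComponent.ind with
  | _ x =>
  induction D using SimpleGraph.ConnectedComponent.ind with
  | _ y =>
    simp only [ConnectedComponent.map_mk] at hCD
    have : (G ⊔ edge u v).Reachable x y := SimpleGraph.ConnectedComponent.exact hCD
    exact SimpleGraph.ConnectedComponent.sound (key x y this)

open Classical in
lemma card_cc_sup_edge_of_not_reach {G : SimpleGraph α} [Finite α] {u v : α}
    (hne : u ≠ v) (h : ¬ G.Reachable u v) :
    Nat.card (G ⊔ edge u v).ConnectedComponent + 1 = Nat.card G.ConnectedComponent := by
  classical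
  set m : G.ConnectedComponent → (G ⊔ edge u v).ConnectedComponent :=
    ConnectedComponent.map (SimpleGraph.Hom.ofLE le_sup_left) with hm
  have hmk : ∀ x : α, m (G.connectedComponentMk x) = (G ⊔ edge u v).connectedComponentMk x :=
    fun x => rfl
  set f : G.ConnectedComponent → (G ⊔ edge u v).ConnectedComponent ⊕ Unit :=
    fun D => if D = G.connectedComponentMk u then Sum.inr () else Sum.inl (m D) with hf
  have hbij : Function.Bijective f := by
    constructor
    · intro C D hCD
      induction C using SimpleGraph.ConnectedComponent.ind with
      | _ x =>
      induction D using SimpleGraph.ConnectedComponent.ind with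
      | _ y =>
        by_cases hx : G.connectedComponentMk x = G.connectedComponentMk u <;>
          by_cases hy : G.connectedComponentMk y = G.connectedComponentMk u
        · rw [hx, hy]
        · simp only [hf, if_pos hx, if_neg hy] at hCD
          exact absurd hCD (by simp)
        · simp only [hf, if_neg hx, if_pos hy] at hCD
          exact absurd hCD (by simp)
        · simp only [hf, if_neg hx, if_neg hy, Sum.inl.injEq] at hCD
          have hCD' : (G ⊔ edge u v).connectedComponentMk x
              = (G ⊔ edge u v).connectedComponentMk y := hCD
          have hr : (G ⊔ edge u v).Reachable x y := SimpleGraph.ConnectedComponent.exact hCD'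
          rcases reach_sup_edge hr with h1 | ⟨h1, h2⟩ | ⟨h1, h2⟩
          · exact SimpleGraph.ConnectedComponent.sound h1
          · exact absurd (SimpleGraph.ConnectedComponent.sound h1) hx
          · exact absurd (SimpleGraph.ConnectedComponent.sound h2.symm) hy
    · intro C
      rcases C with C | u'
      · induction C using SimpleGraph.ConnectedComponent.ind with
        | _ x =>
          by_cases hx : G.connectedComponentMk x = G.connectedComponentMk u
          · refine ⟨G.connectedComponentMk v, ?_⟩
            have hv : G.connectedComponentMk v ≠ G.connectedComponentMk u := by
              intro hc
              exact h (SimpleGraph.ConnectedComponent.exact hc).symm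
            simp only [hf, if_neg hv]
            have : (G ⊔ edge u v).connectedComponentMk v
                = (G ⊔ edge u v).connectedComponentMk x := by
              refine SimpleGraph.ConnectedComponent.sound ?_
              have huv : (G ⊔ edge u v).Reachable u v :=
                (SimpleGraph.sup_adj _ _ _ _).2 (Or.inr (by rw [edge_adj]; tauto)) |>.reachable
              have hux : (G ⊔ edge u v).Reachable u x := by
                have := SimpleGraph.ConnectedComponent.exact hx
                exact (this.map (SimpleGraph.Hom.ofLE le_sup_left)).symm
              exact huv.symm.trans hux
            rw [hmk, this]
          · exact ⟨G.connectedComponentMk x, by simp only [hf, if_neg hx, hmk]⟩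
      · exact ⟨G.connectedComponentMk u, by simp [hf]⟩
  calc Nat.card (G ⊔ edge u v).ConnectedComponent + 1
      = Nat.card ((G ⊔ edge u v).ConnectedComponent ⊕ Unit) := by simp [Nat.card_sum]
    _ = Nat.card G.ConnectedComponent := (Nat.card_eq_of_bijective f hbij).symm

variable {V : Type} [Fintype V] [DecidableEq V]

abbrev Gr (Vs : Finset V) (S : Finset (Sym2 V)) : SimpleGraph ((Vs : Set V) : Type) :=
  (SimpleGraph.fromEdgeSet (S : Set (Sym2 V))).induce (Vs : Set V)

lemma gr_adj {Vs : Finset V} {S : Finset (Sym2 V)} (a b : (Vs : Set V)) :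
    (Gr Vs S).Adj a b ↔ s((a : V), (b : V)) ∈ S ∧ (a : V) ≠ (b : V) := by
  simp only [Gr, SimpleGraph.induce, SimpleGraph.comap_adj, SimpleGraph.fromEdgeSet_adj,
    Function.Embedding.coe_subtype, ne_eq, Subtype.coe_ne_coe]
  exact Iff.rfl

def grHom {A B : Finset V} {S T : Finset (Sym2 V)} (hV : A ⊆ B) (hS : S ⊆ T) :
    Gr A S →g Gr B T where
  toFun x := ⟨x.1, by simpa using hV (by simpa using x.2)⟩
  map_rel' := by
    intro a b hab
    rw [gr_adj] at hab ⊢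
    exact ⟨hS hab.1, hab.2⟩

lemma kappa_mono {Vs : Finset V} {S T : Finset (Sym2 V)} (h : S ⊆ T) :
    kappa Vs T ≤ kappa Vs S := by
  refine Nat.card_le_card_of_surjective
    (SimpleGraph.ConnectedComponent.map (grHom (Finset.Subset.refl Vs) h)) ?_
  exact cc_map_surj _ (fun x => ⟨⟨x.1, x.2⟩, rfl⟩)

lemma kappa_empty (Vs : Finset V) : kappa Vs ∅ = Vs.card := by
  have hbot : Gr Vs (∅ : Finset (Sym2 V)) = ⊥ := by
    ext a b; simp [gr_adj]
  have : kappa Vs ∅ = Nat.card ((⊥ : SimpleGraph ((Vs : Set V) : Type)).ConnectedComponent) := by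
    rw [kappa]; rw [show ((SimpleGraph.fromEdgeSet ((∅ : Finset (Sym2 V)) : Set (Sym2 V))).induce
      (Vs : Set V)) = ⊥ from hbot]
  rw [this]
  have hequiv : Function.Bijective
      ((⊥ : SimpleGraph ((Vs : Set V) : Type)).connectedComponentMk) := by
    constructor
    · intro x y hxy
      exact SimpleGraph.reachable_bot.mp (SimpleGraph.ConnectedComponent.exact hxy)
    · intro C
      induction C using SimpleGraph.ConnectedComponent.ind with
      | _ x => exact ⟨x, rfl⟩
  rw [← Nat.card_eq_of_bijective _ hequiv]
  simp [Nat.card_eq_fintype_card]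

lemma gr_insert {Vs : Finset V} {S : Finset (Sym2 V)} {u v : V} (hu : u ∈ Vs) (hv : v ∈ Vs) :
    Gr Vs (insert s(u,v) S)
      = Gr Vs S ⊔ SimpleGraph.edge (⟨u, Finset.mem_coe.mpr hu⟩ : (Vs : Set V))
          ⟨v, Finset.mem_coe.mpr hv⟩ := by
  ext a b
  rw [SimpleGraph.sup_adj, gr_adj, gr_adj, SimpleGraph.edge_adj, Finset.mem_insert]
  have h1 : (a = (⟨u, Finset.mem_coe.mpr hu⟩ : (Vs : Set V))) ↔ (a : V) = u := ⟨fun h => congrArg Subtype.val h, fun h => Subtype.ext h⟩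
  have h2 : (b = (⟨v, Finset.mem_coe.mpr hv⟩ : (Vs : Set V))) ↔ (b : V) = v := ⟨fun h => congrArg Subtype.val h, fun h => Subtype.ext h⟩
  have h3 : (a = (⟨v, Finset.mem_coe.mpr hv⟩ : (Vs : Set V))) ↔ (a : V) = v := ⟨fun h => congrArg Subtype.val h, fun h => Subtype.ext h⟩
  have h4 : (b = (⟨u, Finset.mem_coe.mpr hu⟩ : (Vs : Set V))) ↔ (b : V) = u := ⟨fun h => congrArg Subtype.val h, fun h => Subtype.ext h⟩
  have h5 : (s((a : V), (b : V)) = s(u, v)) ↔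
      ((a : V) = u ∧ (b : V) = v ∨ (a : V) = v ∧ (b : V) = u) := Sym2.eq_iff
  have h6 : (a ≠ b) ↔ ((a : V) ≠ (b : V)) := Subtype.coe_ne_coe.symm
  rw [h5, h1, h2, h3, h4, h6, or_and_right]
  exact or_comm

lemma kappa_insert_of_reach {Vs : Finset V} {S : Finset (Sym2 V)} {u v : V}
    (hu : u ∈ Vs) (hv : v ∈ Vs)
    (h : (Gr Vs S).Reachable ⟨u, Finset.mem_coe.mpr hu⟩ ⟨v, Finset.mem_coe.mpr hv⟩) :
    kappa Vs (insert s(u,v) S) = kappa Vs S := by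
  show Nat.card (Gr Vs (insert s(u,v) S)).ConnectedComponent
    = Nat.card (Gr Vs S).ConnectedComponent
  rw [gr_insert hu hv]
  exact card_cc_sup_edge_of_reach h

lemma kappa_insert_of_not_reach {Vs : Finset V} {S : Finset (Sym2 V)} {u v : V}
    (hu : u ∈ Vs) (hv : v ∈ Vs) (hne : u ≠ v)
    (h : ¬ (Gr Vs S).Reachable ⟨u, Finset.mem_coe.mpr hu⟩ ⟨v, Finset.mem_coe.mpr hv⟩) :
    kappa Vs (insert s(u,v) S) + 1 = kappa Vs S := by
  show Nat.card (Gr Vs (insert s(u,v) S)).ConnectedComponent + 1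
    = Nat.card (Gr Vs S).ConnectedComponent
  rw [gr_insert hu hv]
  exact card_cc_sup_edge_of_not_reach (fun hc => hne (congrArg Subtype.val hc)) h

lemma kappa_le_insert {Vs : Finset V} {S : Finset (Sym2 V)} {u v : V}
    (hu : u ∈ Vs) (hv : v ∈ Vs) :
    kappa Vs S ≤ kappa Vs (insert s(u,v) S) + 1 := by
  by_cases h : (Gr Vs S).Reachable ⟨u, Finset.mem_coe.mpr hu⟩ ⟨v, Finset.mem_coe.mpr hv⟩
  · rw [kappa_insert_of_reach hu hv h]
    exact Nat.le_succ _
  · have hne : u ≠ v := by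
      rintro rfl
      exact h (SimpleGraph.Reachable.refl _)
    rw [kappa_insert_of_not_reach hu hv hne h]

lemma reach_transfer {A B : Finset V} {S T : Finset (Sym2 V)} (hV : A ⊆ B) (hS : S ⊆ T)
    {u v : V} (hu : u ∈ A) (hv : v ∈ A)
    (h : (Gr A S).Reachable ⟨u, Finset.mem_coe.mpr hu⟩ ⟨v, Finset.mem_coe.mpr hv⟩) :
    (Gr B T).Reachable ⟨u, Finset.mem_coe.mpr (hV hu)⟩ ⟨v, Finset.mem_coe.mpr (hV hv)⟩ := by
  have := h.map (grHom hV hS)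
  convert this using 2 <;> exact rfl

lemma kappa_def (Vs : Finset V) (S : Finset (Sym2 V)) :
    kappa Vs S = Nat.card (Gr Vs S).ConnectedComponent := rfl

lemma kappa_lower {A B W : Finset V} (hAW : A ⊆ W) (hBW : B ⊆ W) (hW : W ⊆ A ∪ B)
    {E E₁ E₂ : Finset (Sym2 V)} (h1 : E₁ ⊆ E) (h2 : E₂ ⊆ E) :
    kappa W E ≤ kappa A E₁ + kappa B E₂ := by
  set f : (Gr A E₁).ConnectedComponent ⊕ (Gr B E₂).ConnectedComponent →
      (Gr W E).ConnectedComponent :=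
    Sum.elim (SimpleGraph.ConnectedComponent.map (grHom hAW h1))
      (SimpleGraph.ConnectedComponent.map (grHom hBW h2)) with hf
  have hs : Function.Surjective f := by
    intro C
    induction C using SimpleGraph.ConnectedComponent.ind with
    | _ x =>
      rcases Finset.mem_union.mp (hW (Finset.mem_coe.mp x.2)) with hx | hx
      · refine ⟨Sum.inl ((Gr A E₁).connectedComponentMk ⟨(x : V), Finset.mem_coe.mpr hx⟩), ?_⟩
        simp only [hf, Sum.elim_inl, SimpleGraph.ConnectedComponent.map_mk]
        exact congrArg _ (Subtype.ext rfl)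
      · refine ⟨Sum.inr ((Gr B E₂).connectedComponentMk ⟨(x : V), Finset.mem_coe.mpr hx⟩), ?_⟩
        simp only [hf, Sum.elim_inr, SimpleGraph.ConnectedComponent.map_mk]
        exact congrArg _ (Subtype.ext rfl)
  calc kappa W E ≤ Nat.card ((Gr A E₁).ConnectedComponent ⊕ (Gr B E₂).ConnectedComponent) :=
        Nat.card_le_card_of_surjective f hs
    _ = kappa A E₁ + kappa B E₂ := by rw [Nat.card_sum, kappa_def, kappa_def]

lemma kappa_upper {A B W : Finset V} (hAW : A ⊆ W) (hBW : B ⊆ W) :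
    ∀ (E E₁ E₂ : Finset (Sym2 V)), E₁ ∪ E₂ = E → Disjoint E₁ E₂ →
    (∀ e ∈ E, ¬ e.IsDiag) →
    (∀ e ∈ E₁, ∀ v ∈ e, v ∈ A) → (∀ e ∈ E₂, ∀ v ∈ e, v ∈ B) →
    kappa A E₁ + kappa B E₂ + W.card ≤ kappa W E + A.card + B.card := by
  intro E
  induction E using Finset.induction_on with
  | empty =>
    intro E₁ E₂ hU _ _ _ _
    obtain ⟨rfl, rfl⟩ := Finset.union_eq_empty.mp hU
    rw [kappa_empty, kappa_empty, kappa_empty]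
    omega
  | @insert e E' heE' ih =>
    intro E₁ E₂ hU hD hdiag h1 h2
    have he : e ∈ E₁ ∪ E₂ := hU ▸ Finset.mem_insert_self e E'
    induction e using Sym2.ind with
    | _ u v =>
    have hne : u ≠ v := by
      have := hdiag s(u,v) (Finset.mem_insert_self _ _)
      rwa [Sym2.mk_isDiag_iff] at this
    have hdiag' : ∀ e ∈ E', ¬ e.IsDiag := fun e heq => hdiag e (Finset.mem_insert_of_mem heq)
    rcases Finset.mem_union.mp he with he1 | he2
    · have hu : u ∈ A := h1 _ he1 u (Sym2.mem_mk_left u v)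
      have hv : v ∈ A := h1 _ he1 v (Sym2.mem_mk_right u v)
      have heE2 : s(u,v) ∉ E₂ := Finset.disjoint_left.mp hD he1
      have hE₁ : insert s(u,v) (E₁.erase s(u,v)) = E₁ := Finset.insert_erase he1
      have hE'U : E₁.erase s(u,v) ∪ E₂ = E' := by
        have : (E₁ ∪ E₂).erase s(u,v) = E₁.erase s(u,v) ∪ E₂.erase s(u,v) :=
          Finset.erase_union_distrib _ _ _
        rw [Finset.erase_eq_of_notMem heE2] at this
        rw [← this, hU, Finset.erase_insert heE']
      have IH := ih (E₁.erase s(u,v)) E₂ hE'U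
        (hD.mono_left (Finset.erase_subset _ _)) hdiag'
        (fun e heq => h1 e (Finset.mem_of_mem_erase heq)) h2
      by_cases hr : (Gr A (E₁.erase s(u,v))).Reachable ⟨u, Finset.mem_coe.mpr hu⟩
          ⟨v, Finset.mem_coe.mpr hv⟩
      · have k1 : kappa A E₁ = kappa A (E₁.erase s(u,v)) := by
          nth_rewrite 1 [← hE₁]; exact kappa_insert_of_reach hu hv hr
        have hrW := reach_transfer hAW (hE'U ▸ Finset.subset_union_left) hu hv hr
        have kW : kappa W (insert s(u,v) E') = kappa W E' :=
          kappa_insert_of_reach (hAW hu) (hAW hv) hrW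
        omega
      · have k1 : kappa A E₁ + 1 = kappa A (E₁.erase s(u,v)) := by
          nth_rewrite 1 [← hE₁]; exact kappa_insert_of_not_reach hu hv hne hr
        have kW : kappa W E' ≤ kappa W (insert s(u,v) E') + 1 :=
          kappa_le_insert (hAW hu) (hAW hv)
        omega
    · have hu : u ∈ B := h2 _ he2 u (Sym2.mem_mk_left u v)
      have hv : v ∈ B := h2 _ he2 v (Sym2.mem_mk_right u v)
      have heE1 : s(u,v) ∉ E₁ := Finset.disjoint_right.mp hD he2
      have hE₂ : insert s(u,v) (E₂.erase s(u,v)) = E₂ := Finset.insert_erase he2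
      have hE'U : E₁ ∪ E₂.erase s(u,v) = E' := by
        have : (E₁ ∪ E₂).erase s(u,v) = E₁.erase s(u,v) ∪ E₂.erase s(u,v) :=
          Finset.erase_union_distrib _ _ _
        rw [Finset.erase_eq_of_notMem heE1] at this
        rw [← this, hU, Finset.erase_insert heE']
      have IH := ih E₁ (E₂.erase s(u,v)) hE'U
        (hD.mono_right (Finset.erase_subset _ _)) hdiag' h1
        (fun e heq => h2 e (Finset.mem_of_mem_erase heq))
      by_cases hr : (Gr B (E₂.erase s(u,v))).Reachable ⟨u, Finset.mem_coe.mpr hu⟩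
          ⟨v, Finset.mem_coe.mpr hv⟩
      · have k1 : kappa B E₂ = kappa B (E₂.erase s(u,v)) := by
          nth_rewrite 1 [← hE₂]; exact kappa_insert_of_reach hu hv hr
        have hrW := reach_transfer hBW (hE'U ▸ Finset.subset_union_right) hu hv hr
        have kW : kappa W (insert s(u,v) E') = kappa W E' :=
          kappa_insert_of_reach (hBW hu) (hBW hv) hrW
        omega
      · have k1 : kappa B E₂ + 1 = kappa B (E₂.erase s(u,v)) := by
          nth_rewrite 1 [← hE₂]; exact kappa_insert_of_not_reach hu hv hne hr
        have kW : kappa W E' ≤ kappa W (insert s(u,v) E') + 1 :=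
          kappa_le_insert (hBW hu) (hBW hv)
        omega

lemma one_le_lamHat {q : ℝ} (hq : 0 < q) : 1 ≤ lamHat q := by
  rcases le_total 1 q with h | h
  · exact le_trans h (le_max_left _ _)
  · exact le_trans ((one_le_inv₀ hq).mpr h) (le_max_right _ _)

lemma zpow_le_lamHat {q : ℝ} (hq : 0 < q) {n : ℤ} {k : ℕ} (h : |n| ≤ (k : ℤ)) :
    q ^ n ≤ lamHat q ^ (k : ℤ) := by
  have hL1 : 1 ≤ lamHat q := one_le_lamHat hq
  have aux : ∀ (r : ℝ), 0 ≤ r → r ≤ lamHat q → ∀ m : ℕ, (m : ℤ) ≤ (k : ℤ) →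
      r ^ m ≤ lamHat q ^ (k : ℤ) := by
    intro r hr0 hrL m hmk
    rw [zpow_natCast]
    exact le_trans (pow_le_pow_left₀ hr0 hrL m) (pow_le_pow_right₀ hL1 (by exact_mod_cast hmk))
  rcases le_or_gt 0 n with hn | hn
  · have : q ^ n = q ^ n.toNat := by rw [← zpow_natCast, Int.toNat_of_nonneg hn]
    rw [this]
    refine aux q hq.le (le_max_left _ _) n.toNat ?_
    rw [Int.toNat_of_nonneg hn]
    rwa [abs_of_nonneg hn] at h
  · have : q ^ n = (q⁻¹) ^ (-n).toNat := by
      rw [← zpow_natCast, Int.toNat_of_nonneg (by omega), zpow_neg, inv_zpow, inv_inv]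
    rw [this]
    refine aux q⁻¹ (inv_nonneg.mpr hq.le) (le_max_right _ _) (-n).toNat ?_
    rw [Int.toNat_of_nonneg (by omega)]
    rwa [abs_of_neg hn] at h
    
lemma zpow_bounds {q : ℝ} (hq : 0 < q) {n : ℤ} {k : ℕ} (h : |n| ≤ (k : ℤ)) :
    lamHat q ^ (-(k : ℤ)) ≤ q ^ n ∧ q ^ n ≤ lamHat q ^ (k : ℤ) := by
  refine ⟨?_, zpow_le_lamHat hq h⟩
  have hup : q ^ (-n) ≤ lamHat q ^ (k : ℤ) := zpow_le_lamHat hq (by rwa [abs_neg])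
  have hqn : (0:ℝ) < q ^ (-n) := zpow_pos hq _
  calc lamHat q ^ (-(k:ℤ)) = (lamHat q ^ (k:ℤ))⁻¹ := by rw [zpow_neg]
    _ ≤ (q ^ (-n))⁻¹ := by
        apply inv_anti₀ hqn hup
    _ = q ^ n := by rw [← zpow_neg, neg_neg]


end Aux

/-- The random-cluster weight function `w((V,S)) = q^{κ(S)} μ^{|S|}` is
`λ`-multiplicative with `λ = q`, for any fixed `q, μ > 0`. -/
theorem stmt3 (q μ : ℝ) (hq : 0 < q) (hμ : 0 < μ) :
    EdgeLamMult (fun (Vs : Finset V) (S : Finset (Sym2 V)) =>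
      q ^ kappa Vs S * μ ^ S.card) q := by
  intro V₁ K V₂ E E₁ E₂ hcut happ
  obtain ⟨hd1, hd2, hd3, hdiag, hEW, hsep⟩ := hcut
  obtain ⟨hU, hD, hA1, hA2⟩ := happ
  have hE₁E : E₁ ⊆ E := hU ▸ Finset.subset_union_left
  have hE₂E : E₂ ⊆ E := hU ▸ Finset.subset_union_right
  have hAW : V₁ ∪ K ⊆ V₁ ∪ K ∪ V₂ := Finset.subset_union_left
  have hBW : V₂ ∪ K ⊆ V₁ ∪ K ∪ V₂ := by
    intro x hx
    simp only [Finset.mem_union] at hx ⊢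
    tauto
  have hWAB : V₁ ∪ K ∪ V₂ ⊆ (V₁ ∪ K) ∪ (V₂ ∪ K) := by
    intro x hx
    simp only [Finset.mem_union] at hx ⊢
    tauto
  have h1 : ∀ e ∈ E₁, ∀ v ∈ e, v ∈ V₁ ∪ K := by
    intro e he v hv
    have hw := hEW e (hE₁E he) v hv
    have hnv := hA1 e he v hv
    simp only [Finset.mem_union] at hw ⊢
    tauto
  have h2 : ∀ e ∈ E₂, ∀ v ∈ e, v ∈ V₂ ∪ K := by
    intro e he v hv
    have hw := hEW e (hE₂E he) v hv
    have hnv := hA2 e he v hv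
    simp only [Finset.mem_union] at hw ⊢
    tauto
  have hupper := kappa_upper hAW hBW E E₁ E₂ hU hD hdiag h1 h2
  have hlower := kappa_lower hAW hBW hWAB hE₁E hE₂E
  have hcA : (V₁ ∪ K).card = V₁.card + K.card := Finset.card_union_of_disjoint hd1
  have hcB : (V₂ ∪ K).card = V₂.card + K.card := Finset.card_union_of_disjoint hd3.symm
  have hcW : (V₁ ∪ K ∪ V₂).card = V₁.card + K.card + V₂.card := by
    rw [Finset.card_union_of_disjoint (Finset.disjoint_union_left.mpr ⟨hd2, hd3⟩), hcA]
  have hcE : E₁.card + E₂.card = E.card := by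
    rw [← hU, Finset.card_union_of_disjoint hD]
  set n₁ := kappa (V₁ ∪ K) E₁ with hn₁
  set n₂ := kappa (V₂ ∪ K) E₂ with hn₂
  set n := kappa (V₁ ∪ K ∪ V₂) E with hn
  have habs : |(n₁ : ℤ) + n₂ - n| ≤ (K.card : ℤ) := by
    rw [abs_le]
    omega
  have hne : q ^ n * μ ^ E.card ≠ 0 := by positivity
  have hratio : (q ^ n₁ * μ ^ E₁.card) * (q ^ n₂ * μ ^ E₂.card) / (q ^ n * μ ^ E.card)
      = q ^ ((n₁ : ℤ) + n₂ - n) := by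
    rw [div_eq_iff hne, zpow_sub₀ hq.ne', zpow_add₀ hq.ne', zpow_natCast, zpow_natCast,
      zpow_natCast, ← hcE, pow_add]
    field_simp
  exact ⟨le_of_le_of_eq (zpow_bounds hq habs).1 hratio.symm,
    le_of_eq_of_le hratio (zpow_bounds hq habs).2⟩
end

section
/- Let σ = (e₁,…,e_m) be an ordering of the edges of G, let I, F ⊆ E, let H = H_j be the j-th state on the canonical path γ_{σ,I→F}, and let Q = {e₁,…,e_{i_j}} where e_{i_j} is the j-th edge of I⊕F in σ-order. Then H = (F ∩ Q) ∪ (I ∩ (E∖Q)) and I ⊕ F ⊕ H = (I ∩ Q) ∪ (F ∩ (E∖Q)). -/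
open Finset

lemma scanl_getD {α β : Type*} (f : β → α → β) (d : β) :
    ∀ (l : List α) (b : β) (j : ℕ), j ≤ l.length →
    (l.scanl f b).getD j d = (l.take j).foldl f b := by
  intro l
  induction l with
  | nil =>
    intro b j hj
    simp only [List.length_nil, Nat.le_zero] at hj
    subst hj
    simp [List.scanl]
  | cons a l ih =>
    intro b j hj
    cases j with
    | zero => simp [List.scanl]
    | succ j =>
      simp only [List.scanl_cons, List.take, List.foldl]
      rw [List.getD_cons_succ, ih (f b a) j (by simpa using hj)]

lemma foldl_symmDiff {α : Type*} [DecidableEq α] :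
    ∀ (l : List α), l.Nodup → ∀ (I : Finset α),
    l.foldl (fun H e => symmDiff H {e}) I = symmDiff I l.toFinset := by
  intro l
  induction l with
  | nil => intro _ I; ext x; simp [Finset.mem_symmDiff]
  | cons a l ih =>
    intro hnd I
    simp only [List.foldl, List.toFinset_cons]
    rw [ih hnd.of_cons]
    have ha : a ∉ l.toFinset := by simpa using hnd.notMem
    ext x
    simp only [Finset.mem_symmDiff, Finset.mem_insert, Finset.mem_singleton] at *
    by_cases hx : x = a
    · subst hx; tauto
    · tauto

lemma take_filter_indexOf {α : Type*} [DecidableEq α] (p : α → Bool) :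
    ∀ (L : List α), L.Nodup → ∀ (j : ℕ) (h : j < (L.filter p).length),
    (L.take (L.idxOf ((L.filter p)[j]) + 1)).filter p = (L.filter p).take (j + 1) := by
  intro L
  induction L with
  | nil => simp
  | cons a L ih =>
    intro hnd j hj
    by_cases hpa : p a
    · simp only [List.filter_cons_of_pos hpa] at hj ⊢
      cases j with
      | zero =>
        simp [List.idxOf_cons_self, List.filter_cons_of_pos hpa]
      | succ j =>
        simp only [List.getElem_cons_succ]
        have hj' : j < (L.filter p).length := by simpa using hj
        have hmem : (L.filter p)[j] ∈ L := List.mem_of_mem_filter (List.getElem_mem _)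
        have hne : (L.filter p)[j] ≠ a := fun h => hnd.notMem (h ▸ hmem)
        rw [List.idxOf_cons_ne _ (fun h => hne h.symm)]
        simp only [List.take_succ_cons, List.filter_cons_of_pos hpa]
        rw [ih hnd.of_cons j hj']
    · simp only [List.filter_cons_of_neg hpa] at hj ⊢
      have hmem : (L.filter p)[j] ∈ L := List.mem_of_mem_filter (List.getElem_mem _)
      have hne : (L.filter p)[j] ≠ a := fun h => hnd.notMem (h ▸ hmem)
      rw [List.idxOf_cons_ne _ (fun h => hne h.symm)]
      simp only [List.take_succ_cons, List.filter_cons_of_neg hpa]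
      exact ih hnd.of_cons j hj

variable {V : Type} [Fintype V] [DecidableEq V] [Inhabited V]

/-- The canonical path `γ_{σ,I→F}`: the list of states `H₀,…,H_k` obtained from `I` by
flipping the elements of `I ⊕ F` one at a time, in the order given by `L`. -/
def canonPath {α : Type} [DecidableEq α] (L : List α) (I F : Finset α) :
    List (Finset α) :=
  (L.filter fun e => e ∈ symmDiff I F).scanl (fun H e => symmDiff H {e}) I

/-- Statement (14) of the paper: if `H = H_j` is the `j`-th state on the canonical path
`γ_{σ,I→F}` and `Q = {e₁,…,e_{i_j}}` is the prefix of `σ` up to the `j`-th edge of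
`I ⊕ F`, then `H = (F ∩ Q) ∪ (I ∩ (E ∖ Q))` and `I ⊕ F ⊕ H = (I ∩ Q) ∪ (F ∩ (E ∖ Q))`. -/
theorem stmt7 (L : List (Sym2 V)) (hnodup : L.Nodup)
    (I F : Finset (Sym2 V)) (hI : I ⊆ L.toFinset) (hF : F ⊆ L.toFinset)
    (j : ℕ) (hj : j < (canonPath L I F).length) :
    ∀ D : List (Sym2 V), D = L.filter (fun e => e ∈ symmDiff I F) →
    ∀ t : ℕ, t = (if j = 0 then 0 else L.idxOf (D.getD (j - 1) (Sym2.diag default)) + 1) →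
    ∀ Q : Finset (Sym2 V), Q = (L.take t).toFinset →
    (canonPath L I F).getD j ∅ = (F ∩ Q) ∪ (I ∩ (L.toFinset \ Q)) ∧
    symmDiff (symmDiff I F) ((canonPath L I F).getD j ∅) =
      (I ∩ Q) ∪ (F ∩ (L.toFinset \ Q)) := by
  intro D hD t ht Q hQ
  subst hD
  have hjlen : j ≤ (L.filter (fun e => e ∈ symmDiff I F)).length := by
    have := hj
    simp only [canonPath, List.length_scanl] at this
    omega
  have hDnodup : (L.filter (fun e => e ∈ symmDiff I F)).Nodup := hnodup.filter _
  have h1 : (canonPath L I F).getD j ∅ =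
      symmDiff I ((L.filter (fun e => e ∈ symmDiff I F)).take j).toFinset := by
    rw [canonPath, scanl_getD _ _ _ _ _ hjlen,
      foldl_symmDiff _ (hDnodup.sublist (List.take_sublist _ _))]
  have h2 : (L.take t).filter (fun e => e ∈ symmDiff I F) =
      (L.filter (fun e => e ∈ symmDiff I F)).take j := by
    rcases Nat.eq_zero_or_pos j with hj0 | hj0
    · subst hj0
      simp only [if_pos rfl] at ht
      subst ht
      simp
    · have hj0' : j ≠ 0 := Nat.pos_iff_ne_zero.mp hj0
      rw [if_neg hj0'] at ht
      have hlt : j - 1 < (L.filter (fun e => e ∈ symmDiff I F)).length := by omega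
      have hget : (L.filter (fun e => e ∈ symmDiff I F)).getD (j - 1) (Sym2.diag default) =
          (L.filter (fun e => e ∈ symmDiff I F))[j-1] := List.getD_eq_getElem _ _ hlt
      have key := take_filter_indexOf (fun e => e ∈ symmDiff I F) L hnodup (j - 1) hlt
      rw [Nat.sub_add_cancel hj0] at key
      rw [ht, hget]
      exact key
  have h3 : ((L.filter (fun e => e ∈ symmDiff I F)).take j).toFinset = symmDiff I F ∩ Q := by
    rw [← h2, List.toFinset_filter, hQ]
    ext x
    simp [and_comm]
  have hQsub : Q ⊆ L.toFinset := by
    rw [hQ]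
    intro x hx
    rw [List.mem_toFinset] at hx ⊢
    exact List.take_subset _ _ hx
  rw [h1, h3]
  refine ⟨?_, ?_⟩ <;>
  · ext x
    have h4 := @hI x
    have h5 := @hF x
    have h6 := @hQsub x
    simp only [Finset.mem_symmDiff, Finset.mem_inter, Finset.mem_union, Finset.mem_sdiff]
      at h4 h5 h6 ⊢
    by_cases hxI : x ∈ I <;> by_cases hxF : x ∈ F <;> by_cases hxQ : x ∈ Q <;>
      simp_all
end

section
/- Fix an ordering σ of the edges of G and a state H ⊆ E. The map (I,F) ↦ I ⊕ F ⊕ H, defined on the set of pairs (I,F) of edge subsets whose canonical path γ_{σ,I→F} passes through H, is injective. -/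
open Finset

variable {V : Type} [Fintype V] [DecidableEq V]

/-- The canonical path from `I` to `F` passes through the transition `(H, H')`,
i.e. `H` and `H'` are consecutive states on `γ_{σ,I→F}`. -/
def ConsecOn {α : Type} [DecidableEq α] (L : List α) (I F H H' : Finset α) : Prop :=
  ∃ j : ℕ, j + 1 < (canonPath L I F).length ∧
    (canonPath L I F).getD j ∅ = H ∧ (canonPath L I F).getD (j + 1) ∅ = H'

lemma symmDiff_singleton_of_not_mem {α : Type} [DecidableEq α] {e : α} {s : Finset α}
    (he : e ∉ s) : symmDiff ({e} : Finset α) s = insert e s := by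
  ext a
  by_cases h : a = e
  · subst h; simp [Finset.mem_symmDiff, he]
  · simp [Finset.mem_symmDiff, h]

lemma scanl_getD_s8 {α : Type} [DecidableEq α] :
    ∀ (l : List α), l.Nodup → ∀ (I : Finset α) (i : ℕ), i ≤ l.length →
      (l.scanl (fun H e => symmDiff H {e}) I).getD i ∅ = symmDiff I (l.take i).toFinset
  | [], _, I, i, hi => by
    have : i = 0 := Nat.le_zero.mp hi
    subst this
    simp [List.scanl, ← Finset.bot_eq_empty]
  | e :: tl, hl, I, 0, _ => by
    simp [List.scanl, ← Finset.bot_eq_empty]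
  | e :: tl, hl, I, i + 1, hi => by
    have he : e ∉ tl := (List.nodup_cons.mp hl).1
    have ih := scanl_getD_s8 tl (List.nodup_cons.mp hl).2 (symmDiff I {e}) i
      (by simpa using Nat.succ_le_succ_iff.mp hi)
    have het : e ∉ (tl.take i).toFinset := fun hmem =>
      he (List.mem_of_mem_take (List.mem_toFinset.mp hmem))
    simp only [List.scanl_cons, List.getD_cons_succ, List.take_succ_cons, List.toFinset_cons]
    rw [ih, symmDiff_assoc, symmDiff_singleton_of_not_mem het]

lemma not_mem_take_of_nodup {α : Type} (l : List α) (hl : l.Nodup) (j : ℕ)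
    (hj : j < l.length) : l.get ⟨j, hj⟩ ∉ l.take j := by
  intro hmem
  have hsplit : l.take j ++ l.drop j = l := List.take_append_drop j l
  have hnd : (l.take j ++ l.drop j).Nodup := by rw [hsplit]; exact hl
  have hdis := (List.nodup_append'.mp hnd).2.2
  have hd : l.get ⟨j, hj⟩ ∈ l.drop j := by
    rw [List.drop_eq_getElem_cons hj]; exact List.mem_cons_self
  exact hdis hmem hd

lemma take_succ_toFinset {α : Type} [DecidableEq α] (l : List α) (j : ℕ)
    (hj : j < l.length) :
    (l.take (j + 1)).toFinset = insert (l.get ⟨j, hj⟩) (l.take j).toFinset := by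
  have h1 : l.take (j + 1) = (l.take j).concat (l.get ⟨j, hj⟩) :=
    (List.take_concat_get hj).symm
  rw [h1, List.concat_eq_append, List.toFinset_append, Finset.union_comm]
  simp [Finset.insert_eq, -Finset.singleton_union]

/-- The map `(I,F) ↦ I ⊕ F ⊕ H`, defined on the set `cp(H,H')` of pairs `(I,F)` whose
canonical path `γ_{σ,I→F}` passes through the transition out of `H`, is injective:
from `I ⊕ F ⊕ H` together with `H`, the ordering `σ` and the position of `H` on the
path, one recovers `I` and `F` uniquely. -/
theorem stmt8 (L : List (Sym2 V)) (hnodup : L.Nodup) (H H' : Finset (Sym2 V)) :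
    ∀ I F I' F' : Finset (Sym2 V),
      I ⊆ L.toFinset → F ⊆ L.toFinset → I' ⊆ L.toFinset → F' ⊆ L.toFinset →
      ConsecOn L I F H H' → ConsecOn L I' F' H H' →
      symmDiff (symmDiff I F) H = symmDiff (symmDiff I' F') H →
      I = I' ∧ F = F' := by
  intro I F I' F' _ _ _ _ hc hc' h
  have hD : symmDiff I F = symmDiff I' F' := symmDiff_left_injective H h
  obtain ⟨j, hj, hHj, hH'j⟩ := hc
  obtain ⟨j', hj', hHj', hH'j'⟩ := hc'
  set Lf := L.filter (fun e => e ∈ symmDiff I F) with hLfdef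
  have hLf : Lf.Nodup := hnodup.filter _
  have hcp : canonPath L I F = Lf.scanl (fun H e => symmDiff H {e}) I := rfl
  have hcp' : canonPath L I' F' = Lf.scanl (fun H e => symmDiff H {e}) I' := by
    simp only [canonPath, hLfdef, hD]
  rw [hcp, List.length_scanl] at hj
  rw [hcp', List.length_scanl] at hj'
  have hjlt : j < Lf.length := by omega
  have hjlt' : j' < Lf.length := by omega
  rw [hcp, scanl_getD_s8 Lf hLf I j (le_of_lt hjlt)] at hHj
  rw [hcp, scanl_getD_s8 Lf hLf I (j + 1) hjlt] at hH'j
  rw [hcp', scanl_getD_s8 Lf hLf I' j' (le_of_lt hjlt')] at hHj'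
  rw [hcp', scanl_getD_s8 Lf hLf I' (j' + 1) hjlt'] at hH'j'
  -- H ∆ H' determines the flipped edge
  have key : ∀ (J : Finset (Sym2 V)) (k : ℕ) (hk : k < Lf.length),
      symmDiff (symmDiff J (Lf.take k).toFinset) (symmDiff J (Lf.take (k + 1)).toFinset)
        = {Lf.get ⟨k, hk⟩} := by
    intro J k hk
    have hnm : Lf.get ⟨k, hk⟩ ∉ (Lf.take k).toFinset := fun hmem =>
      not_mem_take_of_nodup Lf hLf k hk (List.mem_toFinset.mp hmem)
    rw [take_succ_toFinset Lf k hk, symmDiff_symmDiff_symmDiff_comm, symmDiff_self,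
      bot_symmDiff, ← symmDiff_singleton_of_not_mem hnm,
      symmDiff_comm ({Lf.get ⟨k, hk⟩} : Finset (Sym2 V)) (List.take k Lf).toFinset,
      symmDiff_symmDiff_cancel_left]
  have e1 : symmDiff H H' = {Lf.get ⟨j, hjlt⟩} := by
    rw [← hHj, ← hH'j]; exact key I j hjlt
  have e2 : symmDiff H H' = {Lf.get ⟨j', hjlt'⟩} := by
    rw [← hHj', ← hH'j']; exact key I' j' hjlt'
  have hget : Lf.get ⟨j, hjlt⟩ = Lf.get ⟨j', hjlt'⟩ :=
    Finset.singleton_injective (e1 ▸ e2)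
  have hjj' : j = j' := by
    have := (List.Nodup.get_inj_iff hLf).mp hget
    exact Fin.mk.inj_iff.mp this
  subst hjj'
  have hI : I = I' := symmDiff_left_injective _ (hHj.trans hHj'.symm)
  refine ⟨hI, ?_⟩
  rw [hI] at hD
  exact symmDiff_right_injective I' hD
end

section
/- For every finite graph G on n vertices, pw(G) + 1 ≤ (tw(G)+1)(⌊log₂ n⌋ + 1) + 1, where pw denotes path-width and tw denotes tree-width. -/
open Finset

variable {V : Type} [Fintype V] [DecidableEq V]

def IsPathDecomp (G : SimpleGraph V) (n : ℕ) (B : Fin n → Finset V) : Prop :=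
  (∀ v : V, ∃ i, v ∈ B i) ∧
  (∀ u v : V, G.Adj u v → ∃ i, u ∈ B i ∧ v ∈ B i) ∧
  (∀ i j k : Fin n, i ≤ j → j ≤ k → ∀ v : V, v ∈ B i → v ∈ B k → v ∈ B j)

/-- The path-width of `G`. -/
noncomputable def pathwidth (G : SimpleGraph V) : ℕ :=
  sInf {ℓ : ℕ | ∃ (n : ℕ) (B : Fin n → Finset V),
    IsPathDecomp G n B ∧ ∀ i, (B i).card ≤ ℓ + 1}

/-- `G` has a tree decomposition of width at most `ℓ`: bags indexed by a finite tree,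
covering all vertices and edges, such that for each vertex the set of bags containing
it induces a connected subtree, and all bags have size at most `ℓ + 1`. -/
def twAtMost (G : SimpleGraph V) (ℓ : ℕ) : Prop :=
  ∃ (ι : Type) (_ : Fintype ι) (T : SimpleGraph ι) (B : ι → Finset V),
    T.Connected ∧ T.IsAcyclic ∧
    (∀ v : V, ∃ i, v ∈ B i) ∧
    (∀ u v : V, G.Adj u v → ∃ i, u ∈ B i ∧ v ∈ B i) ∧
    (∀ v : V, (T.induce {i : ι | v ∈ B i}).Connected) ∧
    (∀ i, (B i).card ≤ ℓ + 1)

/-- The tree-width of `G`. -/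
noncomputable def treewidth (G : SimpleGraph V) : ℕ := sInf {ℓ : ℕ | twAtMost G ℓ}


namespace Stmt10Aux
open scoped Classical
set_option linter.unusedSectionVars false
set_option linter.unusedVariables false
set_option maxHeartbeats 1000000

def Lace {V : Type} (l : List (Finset V)) : Prop :=
  ∀ (i j k : ℕ) (hij : i ≤ j) (hjk : j ≤ k) (hk : k < l.length) (v : V),
    v ∈ l[i]'(by omega) → v ∈ l[k]'hk → v ∈ l[j]'(by omega)

def Good {V : Type} (G : SimpleGraph V) (C : Finset V) (b0 : ℕ)
    (l : List (Finset V)) : Prop :=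
  (∀ v ∈ C, ∃ b ∈ l, v ∈ b) ∧
  (∀ u v, u ∈ C → v ∈ C → G.Adj u v → ∃ b ∈ l, u ∈ b ∧ v ∈ b) ∧
  Lace l ∧ (∀ b ∈ l, b ⊆ C) ∧ (∀ b ∈ l, b.card ≤ b0)


lemma lace_singleton {V : Type} (b : Finset V) : Lace [b] := by
  intro i j k hij hjk hk v h1 h2
  simp only [List.length_singleton] at hk
  have hj : j = 0 := by omega
  have hi : i = 0 := by omega
  subst hj; subst hi
  exact h1

lemma lace_map_union {V : Type} [DecidableEq V] (X : Finset V)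
    {l : List (Finset V)} (hl : Lace l) : Lace (l.map (· ∪ X)) := by
  intro i j k hij hjk hk v h1 h2
  simp only [List.length_map] at hk
  simp only [List.getElem_map, Finset.mem_union] at h1 h2 ⊢
  by_cases hvX : v ∈ X
  · exact Or.inr hvX
  · rcases h1 with h1 | h1
    · rcases h2 with h2 | h2
      · exact Or.inl (hl i j k hij hjk hk v h1 h2)
      · exact absurd h2 hvX
    · exact absurd h1 hvX

lemma lace_append {V : Type} {l1 l2 : List (Finset V)}
    (h1 : Lace l1) (h2 : Lace l2)
    (hmix : ∀ v, (∃ b ∈ l1, v ∈ b) → (∃ b ∈ l2, v ∈ b) →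
      (∀ b ∈ l1, v ∈ b) ∧ (∀ b ∈ l2, v ∈ b)) :
    Lace (l1 ++ l2) := by
  intro i j k hij hjk hk v hi' hk'
  simp only [List.length_append] at hk
  by_cases hkl : k < l1.length
  · -- all in l1
    have hil : i < l1.length := by omega
    have hjl : j < l1.length := by omega
    rw [List.getElem_append_left hil] at hi'
    rw [List.getElem_append_left hkl] at hk'
    rw [List.getElem_append_left hjl]
    exact h1 i j k hij hjk hkl v hi' hk'
  · by_cases hil : i < l1.length
    · -- i in l1, k in l2 : v everywhere
      rw [List.getElem_append_left hil] at hi'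
      rw [List.getElem_append_right (by omega)] at hk'
      have hv := hmix v ⟨_, List.getElem_mem _, hi'⟩ ⟨_, List.getElem_mem _, hk'⟩
      by_cases hjl : j < l1.length
      · rw [List.getElem_append_left hjl]
        exact hv.1 _ (List.getElem_mem _)
      · rw [List.getElem_append_right (by omega)]
        exact hv.2 _ (List.getElem_mem _)
    · -- all in l2
      have hjl : ¬ j < l1.length := by omega
      rw [List.getElem_append_right (by omega)] at hi'
      rw [List.getElem_append_right (by omega)] at hk'
      rw [List.getElem_append_right (by omega)]
      exact h2 (i - l1.length) (j - l1.length) (k - l1.length)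
        (by omega) (by omega) (by omega) v hi' hk'


lemma glue {V : Type} [DecidableEq V] (G : SimpleGraph V) (X : Finset V) (b0 : ℕ)
    (F : Finset V → List (Finset V)) :
    ∀ (L : List (Finset V)),
    L.Pairwise (fun C D => Disjoint C D) →
    (∀ C ∈ L, Disjoint X C) →
    (∀ C ∈ L, Good G C b0 (F C)) →
    ∃ lc : List (Finset V),
      lc ≠ [] ∧
      (∀ b ∈ lc, X ⊆ b) ∧
      (∀ b ∈ lc, ∀ x ∈ b, x ∈ X ∨ ∃ C ∈ L, x ∈ C) ∧
      Lace lc ∧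
      (∀ v C, C ∈ L → v ∈ C → ∃ b ∈ lc, v ∈ b) ∧
      (∀ u v C, C ∈ L → u ∈ C → v ∈ C → G.Adj u v → ∃ b ∈ lc, u ∈ b ∧ v ∈ b) ∧
      (∀ b ∈ lc, b.card ≤ X.card + b0) := by
  intro L
  induction L with
  | nil =>
    intro _ _ _
    refine ⟨[X], by simp, by simp, by simp, lace_singleton X, by simp, by simp, ?_⟩
    simp
  | cons C L ih =>
    intro hpw hXd hgood
    obtain ⟨lc', hne', hX', hsub', hlace', hcov', hedge', hcard'⟩ :=
      ih hpw.of_cons (fun D hD => hXd D (List.mem_cons_of_mem _ hD))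
        (fun D hD => hgood D (List.mem_cons_of_mem _ hD))
    obtain ⟨gcov, gedge, glace, gsub, gcard⟩ := hgood C (List.mem_cons_self)
    have hCdisj : ∀ D ∈ L, Disjoint C D := fun D hD => (List.pairwise_cons.mp hpw).1 D hD
    have hXC : Disjoint X C := hXd C (List.mem_cons_self)
    refine ⟨(F C).map (· ∪ X) ++ lc', by simp [hne'], ?_, ?_, ?_, ?_, ?_, ?_⟩
    · intro b hb
      rcases List.mem_append.mp hb with hb | hb
      · obtain ⟨b', _, rfl⟩ := List.mem_map.mp hb
        exact Finset.subset_union_right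
      · exact hX' b hb
    · intro b hb x hx
      rcases List.mem_append.mp hb with hb | hb
      · obtain ⟨b', hb', rfl⟩ := List.mem_map.mp hb
        rcases Finset.mem_union.mp hx with hx | hx
        · exact Or.inr ⟨C, List.mem_cons_self, gsub b' hb' hx⟩
        · exact Or.inl hx
      · rcases hsub' b hb x hx with h | ⟨D, hD, hxD⟩
        · exact Or.inl h
        · exact Or.inr ⟨D, List.mem_cons_of_mem _ hD, hxD⟩
    · refine lace_append (lace_map_union X glace) hlace' ?_
      intro v hv1 hv2
      have hvX : v ∈ X := by
        by_contra hvX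
        obtain ⟨b, hb, hvb⟩ := hv1
        obtain ⟨b', hb', rfl⟩ := List.mem_map.mp hb
        have hvC : v ∈ C := gsub b' hb' (by
          rcases Finset.mem_union.mp hvb with h | h
          · exact h
          · exact absurd h hvX)
        obtain ⟨b2, hb2, hvb2⟩ := hv2
        rcases hsub' b2 hb2 v hvb2 with h | ⟨D, hD, hvD⟩
        · exact hvX h
        · exact absurd ((hCdisj D hD).le_bot (Finset.mem_inter.mpr ⟨hvC, hvD⟩)) (Finset.notMem_empty v)
      constructor
      · intro b hb
        obtain ⟨b', _, rfl⟩ := List.mem_map.mp hb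
        exact Finset.mem_union_right _ hvX
      · intro b hb
        exact hX' b hb hvX
    · intro v D hD hvD
      rcases List.mem_cons.mp hD with rfl | hD
      · obtain ⟨b, hb, hvb⟩ := gcov v hvD
        exact ⟨b ∪ X, List.mem_append_left _ (List.mem_map_of_mem hb),
          Finset.mem_union_left _ hvb⟩
      · obtain ⟨b, hb, hvb⟩ := hcov' v D hD hvD
        exact ⟨b, List.mem_append_right _ hb, hvb⟩
    · intro u v D hD huD hvD hadj
      rcases List.mem_cons.mp hD with rfl | hD
      · obtain ⟨b, hb, hub, hvb⟩ := gedge u v huD hvD hadj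
        exact ⟨b ∪ X, List.mem_append_left _ (List.mem_map_of_mem hb),
          Finset.mem_union_left _ hub, Finset.mem_union_left _ hvb⟩
      · obtain ⟨b, hb, h⟩ := hedge' u v D hD huD hvD hadj
        exact ⟨b, List.mem_append_right _ hb, h⟩
    · intro b hb
      rcases List.mem_append.mp hb with hb | hb
      · obtain ⟨b', hb', rfl⟩ := List.mem_map.mp hb
        calc (b' ∪ X).card ≤ b'.card + X.card := Finset.card_union_le _ _
        _ ≤ X.card + b0 := by have := gcard b' hb'; omega
      · exact hcard' b hb


section Tree

variable {V : Type} [Fintype V] [DecidableEq V]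
variable {ι : Type} [Fintype ι] {T : SimpleGraph ι} {B : ι → Finset V}

def R (T : SimpleGraph ι) (t i j : ι) : Prop :=
  ∃ w : T.Walk i j, ∀ x ∈ w.support, x ≠ t

lemma R.refl' {t i : ι} (h : i ≠ t) : R T t i i :=
  ⟨SimpleGraph.Walk.nil, by simpa using h⟩

lemma R.symm' {t i j : ι} (h : R T t i j) : R T t j i := by
  obtain ⟨w, hw⟩ := h
  exact ⟨w.reverse, by simpa [SimpleGraph.Walk.support_reverse] using hw⟩

lemma R.trans' {t i j k : ι} (h1 : R T t i j) (h2 : R T t j k) : R T t i k := by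
  obtain ⟨w1, hw1⟩ := h1
  obtain ⟨w2, hw2⟩ := h2
  refine ⟨w1.append w2, ?_⟩
  intro x hx
  rcases List.mem_append.mp (by
    simpa [SimpleGraph.Walk.support_append] using hx) with h | h
  · exact hw1 x h
  · exact hw2 x (List.tail_subset _ h)

lemma R.ne_left' {t i j : ι} (h : R T t i j) : i ≠ t := by
  obtain ⟨w, hw⟩ := h
  exact hw i w.start_mem_support

lemma R.ne_right' {t i j : ι} (h : R T t i j) : j ≠ t := by
  obtain ⟨w, hw⟩ := h
  exact hw j w.end_mem_support

/-- all bags containing `v` are in the same component of `T - t` when `v ∉ B t` -/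
lemma bags_R (hsub : ∀ v : V, (T.induce {i : ι | v ∈ B i}).Connected)
    {v : V} {t i j : ι} (hv : v ∉ B t) (hi : v ∈ B i) (hj : v ∈ B j) :
    R T t i j := by
  have hreach := (hsub v).preconnected ⟨i, hi⟩ ⟨j, hj⟩
  obtain ⟨w⟩ := hreach
  refine ⟨w.map (SimpleGraph.Embedding.induce {i : ι | v ∈ B i}).toHom, ?_⟩
  intro x hx
  replace hx : x ∈ (w.map (SimpleGraph.Embedding.induce {i : ι | v ∈ B i}).toHom).support := hx
  rw [SimpleGraph.Walk.support_map] at hx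
  obtain ⟨y, _, rfl⟩ := List.mem_map.mp hx
  intro hxt
  apply hv
  rw [← hxt]
  exact y.2


lemma separator (hconn : T.Connected) (hacyc : T.IsAcyclic)
    (idx : V → ι) (hidx : ∀ v, v ∈ B (idx v))
    (S : Finset V) :
    ∃ t : ι, ∀ i : ι,
      2 * (S.filter (fun v => v ∉ B t ∧ R T t (idx v) i)).card ≤ S.card := by
  classical
  by_contra hcon
  push_neg at hcon
  choose it hit using hcon
  set H : ι → Finset V := fun t => S.filter (fun v => v ∉ B t ∧ R T t (idx v) (it t)) with hH
  have hHne : ∀ t, (H t).Nonempty := by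
    intro t
    rw [← Finset.card_pos]
    have h := hit t
    simp only [hH]
    omega
  choose vt hvt using hHne
  have hvtB : ∀ t, vt t ∉ B t := fun t => ((Finset.mem_filter.mp (hvt t)).2).1
  have hvtR : ∀ t, R T t (idx (vt t)) (it t) := fun t => ((Finset.mem_filter.mp (hvt t)).2).2
  have key : ∀ (t j : ι), t ≠ j → ∀ (w : T.Walk t j), w.IsPath →
      ∃ t', T.Adj t t' ∧ R T t t' j := by
    intro t j hne w hp
    cases w with
    | nil => exact absurd rfl hne
    | cons h q =>
      rw [SimpleGraph.Walk.cons_isPath_iff] at hp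
      exact ⟨_, h, ⟨q, fun x hx hxeq => hp.2 (hxeq ▸ hx)⟩⟩
  have hf : ∀ t, ∃ t', T.Adj t t' ∧ R T t t' (idx (vt t)) := by
    intro t
    have hne : t ≠ idx (vt t) := Ne.symm (R.ne_left' (hvtR t))
    obtain ⟨w⟩ : T.Reachable t (idx (vt t)) := hconn t (idx (vt t))
    obtain ⟨p, hp⟩ := w.toPath
    exact key t _ hne p hp
  choose f hfadj hfR using hf
  -- pigeonhole on edges of the tree
  have hcards : T.edgeFinset.card + 1 = Fintype.card ι :=
    SimpleGraph.IsTree.card_edgeFinset ⟨hconn, hacyc⟩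
  have hpos : 0 < Fintype.card ι := Fintype.card_pos_iff.mpr hconn.nonempty
  have hlt : T.edgeFinset.card < (Finset.univ : Finset ι).card := by
    rw [Finset.card_univ]; omega
  have hmaps : ∀ t ∈ (Finset.univ : Finset ι), s(t, f t) ∈ T.edgeFinset := by
    intro t _
    rw [SimpleGraph.mem_edgeFinset, SimpleGraph.mem_edgeSet]
    exact hfadj t
  obtain ⟨t, -, u, -, htu, heq⟩ :=
    Finset.exists_ne_map_eq_of_card_lt_of_maps_to hlt hmaps
  have hmut : f t = u ∧ f u = t := by
    rcases Sym2.eq_iff.mp heq with ⟨h1, h2⟩ | ⟨h1, h2⟩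
    · exact absurd h1 htu
    · exact ⟨h2, h1.symm⟩
  have hAdj : T.Adj t u := hmut.1 ▸ hfadj t
  -- membership in both heavy sets is contradictory
  have hdisj : Disjoint (H t) (H u) := by
    rw [Finset.disjoint_left]
    intro v hv1 hv2
    have h1 : R T t (idx v) u := by
      have hr := (Finset.mem_filter.mp hv1).2.2
      exact (hr.trans' (hvtR t).symm').trans' ((hmut.1 ▸ hfR t : R T t u (idx (vt t))).symm')
    have h2 : R T u (idx v) t := by
      have hr := (Finset.mem_filter.mp hv2).2.2
      exact (hr.trans' (hvtR u).symm').trans' ((hmut.2 ▸ hfR u : R T u t (idx (vt u))).symm')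
    obtain ⟨w1, hw1⟩ := h1
    obtain ⟨w2, hw2⟩ := h2
    have hp1 : (SimpleGraph.Walk.cons hAdj w1.bypass.reverse).IsPath := by
      rw [SimpleGraph.Walk.cons_isPath_iff]
      refine ⟨w1.bypass_isPath.reverse, ?_⟩
      intro hmem
      rw [SimpleGraph.Walk.support_reverse] at hmem
      exact hw1 t (w1.support_bypass_subset (List.mem_reverse.mp hmem)) rfl
    have hp2 : (w2.bypass.reverse).IsPath := w2.bypass_isPath.reverse
    have hpeq := SimpleGraph.isAcyclic_iff_path_unique.mp hacyc
      ⟨SimpleGraph.Walk.cons hAdj w1.bypass.reverse, hp1⟩ ⟨w2.bypass.reverse, hp2⟩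
    have hueq : u ∈ (w2.bypass.reverse).support := by
      have : u ∈ (SimpleGraph.Walk.cons hAdj w1.bypass.reverse).support := by
        rw [SimpleGraph.Walk.support_cons]
        exact List.mem_cons_of_mem _ (w1.bypass.reverse.start_mem_support)
      rwa [show (SimpleGraph.Walk.cons hAdj w1.bypass.reverse) = w2.bypass.reverse from
        congrArg Subtype.val hpeq] at this
    rw [SimpleGraph.Walk.support_reverse] at hueq
    exact hw2 u (w2.support_bypass_subset (List.mem_reverse.mp hueq)) rfl
  -- cardinality contradiction
  have hsubS : H t ∪ H u ⊆ S := by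
    apply Finset.union_subset <;> exact Finset.filter_subset _ _
  have hcard := Finset.card_le_card hsubS
  rw [Finset.card_union_of_disjoint hdisj] at hcard
  have h1 : S.card < 2 * (H t).card := by simpa only [hH] using hit t
  have h2 : S.card < 2 * (H u).card := by simpa only [hH] using hit u
  have := Finset.card_univ (α := ι)
  omega


/-- walks in `G` avoiding the bag `B t` stay in one component of `T - t` -/
lemma lemWalk {G : SimpleGraph V}
    (hedge : ∀ u v : V, G.Adj u v → ∃ i, u ∈ B i ∧ v ∈ B i)
    (hsub : ∀ v : V, (T.induce {i : ι | v ∈ B i}).Connected)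
    (idx : V → ι) (hidx : ∀ v, v ∈ B (idx v)) {t : ι} :
    ∀ {u w : V} (wk : G.Walk u w), (∀ x ∈ wk.support, x ∉ B t) →
      R T t (idx u) (idx w) := by
  intro u w wk
  induction wk with
  | nil =>
    intro h
    refine R.refl' (fun heq => ?_)
    exact h _ (SimpleGraph.Walk.start_mem_support _) (heq ▸ hidx _)
  | @cons a b c hab q ih =>
    intro h
    simp only [SimpleGraph.Walk.support_cons, List.mem_cons] at h
    have ha : a ∉ B t := h a (Or.inl rfl)
    have hb : b ∉ B t := h b (Or.inr (SimpleGraph.Walk.start_mem_support _))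
    obtain ⟨i, hai, hbi⟩ := hedge a b hab
    have h1 : R T t (idx a) i := bags_R hsub ha (hidx a) hai
    have h2 : R T t i (idx b) := (bags_R hsub hb (hidx b) hbi).symm'
    exact (h1.trans' h2).trans' (ih (fun x hx => h x (Or.inr hx)))

/-- connectivity through vertices satisfying `P` -/
def Conn {V : Type} (G : SimpleGraph V) (P : V → Prop) (u v : V) : Prop :=
  ∃ w : G.Walk u v, ∀ x ∈ w.support, P x

lemma Conn.refl {V : Type} {G : SimpleGraph V} {P : V → Prop} {u : V} (h : P u) :
    Conn G P u u := ⟨SimpleGraph.Walk.nil, by simpa using h⟩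

lemma Conn.symm {V : Type} {G : SimpleGraph V} {P : V → Prop} {u v : V}
    (h : Conn G P u v) : Conn G P v u := by
  obtain ⟨w, hw⟩ := h
  exact ⟨w.reverse, by simpa [SimpleGraph.Walk.support_reverse] using hw⟩

lemma Conn.trans {V : Type} {G : SimpleGraph V} {P : V → Prop} {u v x : V}
    (h1 : Conn G P u v) (h2 : Conn G P v x) : Conn G P u x := by
  obtain ⟨w1, hw1⟩ := h1
  obtain ⟨w2, hw2⟩ := h2
  refine ⟨w1.append w2, ?_⟩
  intro y hy
  rcases List.mem_append.mp (by
    simpa [SimpleGraph.Walk.support_append] using hy) with h | h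
  · exact hw1 y h
  · exact hw2 y (List.tail_subset _ h)

lemma Conn.of_adj {V : Type} {G : SimpleGraph V} {P : V → Prop} {u v : V}
    (h : G.Adj u v) (hu : P u) (hv : P v) : Conn G P u v :=
  ⟨SimpleGraph.Walk.cons h SimpleGraph.Walk.nil, by
    intro x hx
    simp only [SimpleGraph.Walk.support_cons, SimpleGraph.Walk.support_nil,
      List.mem_cons, List.mem_singleton] at hx
    rcases hx with rfl | hx | hx
    · exact hu
    · exact hx ▸ hv
    · simp at hx⟩


lemma main {G : SimpleGraph V}
    (hconn : T.Connected) (hacyc : T.IsAcyclic)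
    (hedge : ∀ u v : V, G.Adj u v → ∃ i, u ∈ B i ∧ v ∈ B i)
    (hsub : ∀ v : V, (T.induce {i : ι | v ∈ B i}).Connected)
    (idx : V → ι) (hidx : ∀ v, v ∈ B (idx v))
    (k : ℕ) (hwidth : ∀ i, (B i).card ≤ k + 1) :
    ∀ (n : ℕ) (S : Finset V), S.card ≤ n →
      ∃ l : List (Finset V), Good G S ((k + 1) * (Nat.log 2 n + 1)) l := by
  intro n
  induction n using Nat.strong_induction_on with
  | _ n ih =>
  intro S hS
  have hb1 : 1 ≤ (k + 1) * (Nat.log 2 n + 1) :=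
    Nat.one_le_iff_ne_zero.mpr (by positivity)
  by_cases hS1 : S.card ≤ 1
  · refine ⟨[S], ?_, ?_, lace_singleton S, ?_, ?_⟩
    · intro v hv; exact ⟨S, by simp, hv⟩
    · intro u v hu hv hadj
      have : u = v := Finset.card_le_one.mp hS1 u hu v hv
      subst this
      exact absurd hadj (G.irrefl)
    · intro b hb
      simp only [List.mem_singleton] at hb
      subst hb; exact Finset.Subset.refl _
    · intro b hb
      simp only [List.mem_singleton] at hb
      subst hb; omega
  · push_neg at hS1
    have hn2 : 2 ≤ n := le_trans hS1 hS
    obtain ⟨t, hsep⟩ := separator hconn hacyc idx hidx S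
    set X := B t ∩ S with hX
    set P : V → Prop := fun x => x ∈ S ∧ x ∉ B t with hP
    set D := S.filter (fun v => v ∉ B t) with hD
    set compOf : V → Finset V := fun v => D.filter (Conn G P v) with hcomp
    set Comps := D.image compOf with hComps
    have hmemD : ∀ v ∈ D, v ∈ S ∧ v ∉ B t := by
      intro v hv
      rw [hD, Finset.mem_filter] at hv
      exact hv
    have hcompD : ∀ v, compOf v ⊆ D := by
      intro v
      rw [hcomp]
      exact Finset.filter_subset _ _
    have f1 : ∀ v ∈ D, v ∈ compOf v := by
      intro v hv
      simp only [hcomp, Finset.mem_filter]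
      exact ⟨hv, Conn.refl ⟨(hmemD v hv).1, (hmemD v hv).2⟩⟩
    have fmem : ∀ v u, u ∈ compOf v → Conn G P v u := by
      intro v u hu
      simp only [hcomp, Finset.mem_filter] at hu
      exact hu.2
    have f2 : ∀ u v, Conn G P u v → compOf u = compOf v := by
      intro u v hc
      ext w
      simp only [hcomp, Finset.mem_filter]
      constructor
      · rintro ⟨hw, hcw⟩; exact ⟨hw, hc.symm.trans hcw⟩
      · rintro ⟨hw, hcw⟩; exact ⟨hw, hc.trans hcw⟩
    have f4 : ∀ v ∈ D, 2 * (compOf v).card ≤ S.card := by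
      intro v hv
      have hsubf : compOf v ⊆ S.filter (fun u => u ∉ B t ∧ R T t (idx u) (idx v)) := by
        intro u hu
        have huD := hcompD v hu
        obtain ⟨w, hw⟩ := fmem v u hu
        have hR : R T t (idx v) (idx u) :=
          lemWalk hedge hsub idx hidx w (fun x hx => (hw x hx).2)
        rw [Finset.mem_filter]
        exact ⟨(hmemD u huD).1, (hmemD u huD).2, hR.symm'⟩
      calc 2 * (compOf v).card
          ≤ 2 * (S.filter (fun u => u ∉ B t ∧ R T t (idx u) (idx v))).card :=
            Nat.mul_le_mul_left _ (Finset.card_le_card hsubf)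
        _ ≤ S.card := hsep (idx v)
    set b0 := (k + 1) * (Nat.log 2 (n / 2) + 1) with hb0
    have hIH : ∀ C ∈ Comps, ∃ l, Good G C b0 l := by
      intro C hC
      rw [hComps] at hC
      obtain ⟨v, hvD, rfl⟩ := Finset.mem_image.mp hC
      refine ih (n / 2) (by omega) _ ?_
      have := f4 v hvD
      omega
    set F : Finset V → List (Finset V) := fun C =>
      if h : ∃ l, Good G C b0 l then h.choose else [] with hF
    have hFgood : ∀ C ∈ Comps.toList, Good G C b0 (F C) := by
      intro C hC
      rw [Finset.mem_toList] at hC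
      rw [hF]
      simp only
      rw [dif_pos (hIH C hC)]
      exact (hIH C hC).choose_spec
    have hpairwise : Comps.toList.Pairwise (fun C D' => Disjoint C D') := by
      refine List.Pairwise.imp_of_mem ?_ (Comps.nodup_toList)
      intro C C' hC hC' hne
      rw [Finset.mem_toList] at hC hC'
      rw [hComps] at hC hC'
      obtain ⟨v, hv, rfl⟩ := Finset.mem_image.mp hC
      obtain ⟨v', hv', rfl⟩ := Finset.mem_image.mp hC'
      rw [Finset.disjoint_left]
      intro u hu hu'
      exact hne (((f2 v u (fmem v u hu)).trans (f2 v' u (fmem v' u hu')).symm))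
    have hXdisj : ∀ C ∈ Comps.toList, Disjoint X C := by
      intro C hC
      rw [Finset.mem_toList, hComps] at hC
      obtain ⟨v, hv, rfl⟩ := Finset.mem_image.mp hC
      rw [Finset.disjoint_left]
      intro x hx hx'
      have hxD := hcompD v hx'
      exact (hmemD x hxD).2 (Finset.mem_inter.mp hx).1
    obtain ⟨lc, hlcne, hlcX, hlcsub, hlclace, hlccov, hlcedge, hlccard⟩ :=
      glue G X b0 F Comps.toList hpairwise hXdisj hFgood
    have hcovD : ∀ v ∈ D, ∃ b ∈ lc, v ∈ b := by
      intro v hvD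
      exact hlccov v (compOf v)
        (Finset.mem_toList.mpr (by rw [hComps]; exact Finset.mem_image_of_mem _ hvD))
        (f1 v hvD)
    refine ⟨lc, ?_, ?_, hlclace, ?_, ?_⟩
    · intro v hv
      by_cases hvB : v ∈ B t
      · obtain ⟨b, hb⟩ := List.exists_mem_of_ne_nil lc hlcne
        exact ⟨b, hb, hlcX b hb (Finset.mem_inter.mpr ⟨hvB, hv⟩)⟩
      · exact hcovD v (by rw [hD, Finset.mem_filter]; exact ⟨hv, hvB⟩)
    · intro u v hu hv hadj
      by_cases huB : u ∈ B t
      · by_cases hvB : v ∈ B t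
        · obtain ⟨b, hb⟩ := List.exists_mem_of_ne_nil lc hlcne
          exact ⟨b, hb, hlcX b hb (Finset.mem_inter.mpr ⟨huB, hu⟩),
            hlcX b hb (Finset.mem_inter.mpr ⟨hvB, hv⟩)⟩
        · obtain ⟨b, hb, hvb⟩ := hcovD v (by rw [hD, Finset.mem_filter]; exact ⟨hv, hvB⟩)
          exact ⟨b, hb, hlcX b hb (Finset.mem_inter.mpr ⟨huB, hu⟩), hvb⟩
      · by_cases hvB : v ∈ B t
        · obtain ⟨b, hb, hub⟩ := hcovD u (by rw [hD, Finset.mem_filter]; exact ⟨hu, huB⟩)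
          exact ⟨b, hb, hub, hlcX b hb (Finset.mem_inter.mpr ⟨hvB, hv⟩)⟩
        · have huD : u ∈ D := by rw [hD, Finset.mem_filter]; exact ⟨hu, huB⟩
          have hvD : v ∈ D := by rw [hD, Finset.mem_filter]; exact ⟨hv, hvB⟩
          have hc : Conn G P u v := Conn.of_adj hadj ⟨hu, huB⟩ ⟨hv, hvB⟩
          have hvc : v ∈ compOf u := by
            simp only [hcomp, Finset.mem_filter]; exact ⟨hvD, hc⟩
          exact hlcedge u v (compOf u)
            (Finset.mem_toList.mpr (by rw [hComps]; exact Finset.mem_image_of_mem _ huD))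
            (f1 u huD) hvc hadj
    · intro b hb x hx
      rcases hlcsub b hb x hx with h | ⟨C, hC, hxC⟩
      · exact (Finset.mem_inter.mp h).2
      · rw [Finset.mem_toList, hComps] at hC
        obtain ⟨v, hv, rfl⟩ := Finset.mem_image.mp hC
        exact (hmemD x (hcompD v hxC)).1
    · intro b hb
      have h1 := hlccard b hb
      have h2 : X.card ≤ k + 1 :=
        le_trans (Finset.card_le_card Finset.inter_subset_left) (hwidth t)
      have hlog : Nat.log 2 n = Nat.log 2 (n / 2) + 1 := by
        have hd := Nat.log_div_base 2 n
        have hp := Nat.log_pos (b := 2) (n := n) (by norm_num) hn2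
        omega
      calc b.card ≤ X.card + b0 := h1
        _ ≤ (k + 1) + (k + 1) * (Nat.log 2 (n / 2) + 1) := by rw [hb0] at h1 ⊢; omega
        _ = (k + 1) * (Nat.log 2 (n / 2) + 2) := by ring
        _ = (k + 1) * (Nat.log 2 n + 1) := by rw [hlog]


end Tree
end Stmt10Aux

/-- For every finite graph `G` on `n` vertices,
`pw(G) + 1 ≤ (tw(G)+1)(⌊log₂ n⌋ + 1) + 1`. -/
theorem stmt10 (G : SimpleGraph V) :
    pathwidth G + 1 ≤ (treewidth G + 1) * (Nat.log 2 (Fintype.card V) + 1) + 1 := by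
  classical
  have hne : {ℓ : ℕ | twAtMost G ℓ}.Nonempty := by
    refine ⟨Fintype.card V, PUnit, inferInstance, ⊥, fun _ => Finset.univ, ?_, ?_,
      fun v => ⟨PUnit.unit, Finset.mem_univ v⟩,
      fun u v _ => ⟨PUnit.unit, Finset.mem_univ u, Finset.mem_univ v⟩, ?_, ?_⟩
    · constructor
      intro u v
      cases u; cases v
      exact SimpleGraph.Reachable.refl _
    · intro v c hc
      cases c with
      | nil => exact hc.ne_nil rfl
      | cons h q => simp at h
    · intro v
      rw [SimpleGraph.connected_iff]
      refine ⟨fun a b => ?_, ⟨⟨PUnit.unit, by simp⟩⟩⟩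
      have : a = b := Subsingleton.elim a b
      rw [this]
    · intro i
      exact le_trans Finset.card_univ.le (Nat.le_succ _)
  have hmem : twAtMost G (treewidth G) := Nat.sInf_mem hne
  obtain ⟨ι, hι, T, B, hconn, hacyc, hcover, hedge, hsub, hwidth⟩ := hmem
  haveI := hι
  have hidx : ∀ v, v ∈ B ((hcover v).choose) := fun v => (hcover v).choose_spec
  obtain ⟨l, hcov, hedg, hlace, hsubS, hcard⟩ :=
    Stmt10Aux.main hconn hacyc hedge hsub (fun v => (hcover v).choose) hidx
      (treewidth G) hwidth (Fintype.card V) Finset.univ Finset.card_univ.le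
  have hpw : pathwidth G ≤ (treewidth G + 1) * (Nat.log 2 (Fintype.card V) + 1) := by
    apply Nat.sInf_le
    refine ⟨l.length, fun i => l.get i, ⟨?_, ?_, ?_⟩, ?_⟩
    · intro v
      obtain ⟨b, hb, hvb⟩ := hcov v (Finset.mem_univ v)
      obtain ⟨i, hi⟩ := List.mem_iff_get.mp hb
      exact ⟨i, show v ∈ l.get i by rw [hi]; exact hvb⟩
    · intro u v hadj
      obtain ⟨b, hb, hub, hvb⟩ := hedg u v (Finset.mem_univ u) (Finset.mem_univ v) hadj
      obtain ⟨i, hi⟩ := List.mem_iff_get.mp hb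
      exact ⟨i, show u ∈ l.get i by rw [hi]; exact hub, show v ∈ l.get i by rw [hi]; exact hvb⟩
    · intro i j k hij hjk v hvi hvk
      have := hlace i.1 j.1 k.1 hij hjk k.isLt v
        (by simpa [List.get_eq_getElem] using hvi)
        (by simpa [List.get_eq_getElem] using hvk)
      simpa [List.get_eq_getElem] using this
    · intro i
      exact le_trans (hcard _ (List.getElem_mem _)) (Nat.le_succ _)
  exact Nat.add_le_add_right hpw 1
end

section
/- For every finite graph G, the vertex-separation number of G equals its path-width: vs(G) = pw(G). -/
open Finset

variable {V : Type} [Fintype V] [DecidableEq V]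

/-- The ordering `L` of the vertices has vertex-separation at most `ℓ` in `G`: for each
`i`, at most `ℓ` of the first `i` vertices have a neighbour among the remaining
vertices. -/
def vsAtMost (G : SimpleGraph V) [DecidableRel G.Adj] (L : List V) (ℓ : ℕ) : Prop :=
  ∀ i : ℕ, ((L.take i).toFinset.filter fun u : V =>
    ∃ v ∈ L.drop i, G.Adj u v).card ≤ ℓ

/-- The vertex-separation number of `G`: the least `ℓ` such that some ordering of the
vertices has vertex-separation at most `ℓ`. -/
noncomputable def vertexSep (G : SimpleGraph V) [DecidableRel G.Adj] : ℕ :=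
  sInf {ℓ : ℕ | ∃ L : List V, L.Nodup ∧ L.toFinset = Finset.univ ∧ vsAtMost G L ℓ}

omit [Fintype V] [DecidableEq V] in
lemma mem_take_iff_lt {L : List V} (hnd : L.Nodup) {p : ℕ} (hp : p < L.length) (i : ℕ) :
    L[p] ∈ L.take i ↔ p < i := by
  constructor
  · intro h
    obtain ⟨j, hj, hje⟩ := List.mem_iff_getElem.1 h
    have hj' : j < L.length := lt_of_lt_of_le hj (by simp [List.length_take])
    rw [List.getElem_take] at hje
    have : j = p := hnd.getElem_inj_iff.1 hje
    subst this
    exact lt_of_lt_of_le hj (by simp [List.length_take])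
  · intro h
    have hlt : p < (L.take i).length := by simp [List.length_take]; omega
    have : (L.take i)[p] = L[p] := List.getElem_take
    exact this ▸ List.getElem_mem hlt

lemma vs_to_pw (G : SimpleGraph V) [DecidableRel G.Adj] {L : List V} {ℓ : ℕ}
    (hnd : L.Nodup) (huniv : L.toFinset = Finset.univ) (hvs : vsAtMost G L ℓ) :
    ∃ (n : ℕ) (B : Fin n → Finset V), IsPathDecomp G n B ∧ ∀ i, (B i).card ≤ ℓ + 1 := by
  classical
  set B : Fin L.length → Finset V := fun i =>
    insert L[(i : ℕ)] ((L.take i).toFinset.filter fun u : V =>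
      ∃ v ∈ L.drop (i : ℕ), G.Adj u v) with hB
  -- membership characterization
  have hmem : ∀ (p : ℕ) (hp : p < L.length) (i : Fin L.length),
      L[p] ∈ B i ↔ p = (i : ℕ) ∨ (p < (i : ℕ) ∧ ∃ v ∈ L.drop (i : ℕ), G.Adj L[p] v) := by
    intro p hp i
    rw [hB]
    simp only [Finset.mem_insert, Finset.mem_filter, List.mem_toFinset]
    rw [mem_take_iff_lt hnd hp, hnd.getElem_inj_iff]
  refine ⟨L.length, B, ⟨?_, ?_, ?_⟩, ?_⟩
  · intro v
    have hv : v ∈ L := by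
      rw [← List.mem_toFinset, huniv]; exact Finset.mem_univ v
    obtain ⟨p, hp, rfl⟩ := List.mem_iff_getElem.1 hv
    exact ⟨⟨p, hp⟩, by rw [hmem p hp]; left; rfl⟩
  · intro u v huv
    have hu : u ∈ L := by rw [← List.mem_toFinset, huniv]; exact Finset.mem_univ u
    have hv : v ∈ L := by rw [← List.mem_toFinset, huniv]; exact Finset.mem_univ v
    obtain ⟨p, hp, rfl⟩ := List.mem_iff_getElem.1 hu
    obtain ⟨q, hq, rfl⟩ := List.mem_iff_getElem.1 hv
    have key : ∀ (p q : ℕ) (hp : p < L.length) (hq : q < L.length), p < q →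
        G.Adj L[p] L[q] → L[p] ∈ B ⟨q, hq⟩ ∧ L[q] ∈ B ⟨q, hq⟩ := by
      intro p q hp hq hlt hadj
      constructor
      · rw [hmem p hp]
        right
        refine ⟨hlt, L[q], ?_, hadj⟩
        have h0 : 0 < (L.drop q).length := by rw [List.length_drop]; omega
        have he : (L.drop q)[0]'h0 = L[q] := by
          rw [List.getElem_drop]; congr 1
        exact he ▸ List.getElem_mem h0
      · rw [hmem q hq]; left; rfl
    rcases lt_trichotomy p q with h | h | h
    · exact ⟨⟨q, hq⟩, key p q hp hq h huv⟩
    · exfalso; exact G.loopless.irrefl _ (by subst h; exact huv)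
    · obtain ⟨h1, h2⟩ := key q p hq hp h huv.symm
      exact ⟨⟨p, hp⟩, h2, h1⟩
  · intro i j k hij hjk v hvi hvk
    have hv : v ∈ L := by rw [← List.mem_toFinset, huniv]; exact Finset.mem_univ v
    obtain ⟨p, hp, rfl⟩ := List.mem_iff_getElem.1 hv
    rw [hmem p hp] at hvi hvk ⊢
    rcases hvi with h | ⟨h, _⟩
    · -- p = i ≤ j
      rcases hvk with h' | ⟨h', hadj⟩
      · -- p = i, p = k, so i = k, j = i
        have : (i : ℕ) = (k : ℕ) := h ▸ h'
        have hji : (j : ℕ) = (i : ℕ) := by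
          have := (Fin.le_def.1 hij); have := (Fin.le_def.1 hjk); omega
        left; omega
      · -- p = i ≤ j; p < k, adj to drop k
        rcases eq_or_lt_of_le (show p ≤ (j : ℕ) from h ▸ Fin.le_def.1 hij) with he | hl
        · left; exact he
        · right
          refine ⟨hl, ?_⟩
          obtain ⟨w, hw, hadjw⟩ := hadj
          obtain ⟨m, hm, rfl⟩ := List.mem_iff_getElem.1 hw
          refine ⟨(L.drop k)[m], ?_, hadjw⟩
          rw [List.getElem_drop]
          have hkm : (k : ℕ) + m < L.length := by
            have := hm; rw [List.length_drop] at this; omega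
          have hjle : (j : ℕ) ≤ (k : ℕ) + m := le_trans (Fin.le_def.1 hjk) (Nat.le_add_right _ _)
          have : (L.drop j)[(k : ℕ) + m - (j : ℕ)]'(by rw [List.length_drop]; omega) =
              L[(k : ℕ) + m]'hkm := by
            rw [List.getElem_drop]; congr 1; omega
          exact this ▸ List.getElem_mem _
    · -- p < i ≤ j
      have hpj : p < (j : ℕ) := lt_of_lt_of_le h (Fin.le_def.1 hij)
      rcases hvk with h' | ⟨h', hadj⟩
      · -- p = k, but p < i ≤ j ≤ k contradiction
        exfalso
        have := Fin.le_def.1 hjk; omega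
      · right
        refine ⟨hpj, ?_⟩
        obtain ⟨w, hw, hadjw⟩ := hadj
        obtain ⟨m, hm, rfl⟩ := List.mem_iff_getElem.1 hw
        have hkm : (k : ℕ) + m < L.length := by
          have := hm; rw [List.length_drop] at this; omega
        refine ⟨(L.drop k)[m], ?_, hadjw⟩
        rw [List.getElem_drop]
        have hjle : (j : ℕ) ≤ (k : ℕ) + m := le_trans (Fin.le_def.1 hjk) (Nat.le_add_right _ _)
        have : (L.drop j)[(k : ℕ) + m - (j : ℕ)]'(by rw [List.length_drop]; omega) =
            L[(k : ℕ) + m]'hkm := by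
          rw [List.getElem_drop]; congr 1; omega
        exact this ▸ List.getElem_mem _
  · intro i
    rw [hB]
    calc (insert L[(i : ℕ)] ((L.take i).toFinset.filter fun u : V =>
        ∃ v ∈ L.drop (i : ℕ), G.Adj u v)).card
        ≤ ((L.take i).toFinset.filter fun u : V =>
          ∃ v ∈ L.drop (i : ℕ), G.Adj u v).card + 1 := Finset.card_insert_le _ _
      _ ≤ ℓ + 1 := by exact Nat.add_le_add_right (hvs i) 1

lemma pw_to_vs (G : SimpleGraph V) [DecidableRel G.Adj] {n ℓ : ℕ} {B : Fin n → Finset V}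
    (hdec : IsPathDecomp G n B) (hcard : ∀ i, (B i).card ≤ ℓ + 1) :
    ∃ L : List V, L.Nodup ∧ L.toFinset = Finset.univ ∧ vsAtMost G L ℓ := by
  classical
  set f : V → ℕ := fun v => sInf {j | ∃ h : j < n, v ∈ B ⟨j, h⟩} with hf
  have hfne : ∀ v : V, {j | ∃ h : j < n, v ∈ B ⟨j, h⟩}.Nonempty := by
    intro v
    obtain ⟨i, hi⟩ := hdec.1 v
    exact ⟨i, i.isLt, by simpa using hi⟩
  have hfmem : ∀ v : V, ∃ h : f v < n, v ∈ B ⟨f v, h⟩ := fun v => Nat.sInf_mem (hfne v)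
  have hfle : ∀ (v : V) (i : Fin n), v ∈ B i → f v ≤ (i : ℕ) := by
    intro v i hv
    exact Nat.sInf_le ⟨i.isLt, by simpa using hv⟩
  set L : List V := (Finset.univ : Finset V).toList.mergeSort (fun u v => decide (f u ≤ f v))
    with hL
  have hperm : L.Perm (Finset.univ : Finset V).toList := List.mergeSort_perm _ _
  have hnd : L.Nodup := hperm.nodup_iff.2 (Finset.nodup_toList _)
  have huniv : L.toFinset = Finset.univ := by
    rw [List.toFinset_eq_of_perm _ _ hperm, Finset.toList_toFinset]
  have hsorted : ∀ (p q : ℕ) (hp : p < L.length) (hq : q < L.length), p ≤ q →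
      f L[p] ≤ f L[q] := by
    have hs := List.pairwise_mergeSort (le := fun u v : V => decide (f u ≤ f v))
      (fun a b c hab hbc => by
        simp only [decide_eq_true_eq] at *; exact le_trans hab hbc)
      (fun a b => by
        simp only [Bool.or_eq_true, decide_eq_true_eq]; exact le_total (f a) (f b))
      (Finset.univ : Finset V).toList
    rw [← hL] at hs
    intro p q hp hq hpq
    rcases eq_or_lt_of_le hpq with rfl | hlt
    · exact le_rfl
    · have := List.pairwise_iff_getElem.1 hs p q hp hq hlt
      simpa using this
  refine ⟨L, hnd, huniv, ?_⟩
  intro i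
  by_cases hi : i < L.length
  · set w := L[i] with hw
    obtain ⟨htn, hwB⟩ := hfmem w
    have hsub : ((L.take i).toFinset.filter fun u : V => ∃ v ∈ L.drop i, G.Adj u v) ⊆
        (B ⟨f w, htn⟩).erase w := by
      intro u hu
      rw [Finset.mem_filter, List.mem_toFinset] at hu
      obtain ⟨hutake, v, hvdrop, hadj⟩ := hu
      -- position of u
      have huL : u ∈ L := List.mem_of_mem_take hutake
      obtain ⟨p, hp, rfl⟩ := List.mem_iff_getElem.1 huL
      have hpi : p < i := (mem_take_iff_lt hnd hp i).1 hutake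
      -- position of v
      obtain ⟨m, hm, rfl⟩ := List.mem_iff_getElem.1 hvdrop
      have him : i + m < L.length := by rw [List.length_drop] at hm; omega
      have hvL : (L.drop i)[m] = L[i + m]'him := List.getElem_drop
      -- f inequalities
      have hfu : f L[p] ≤ f w := hsorted p i hp hi (le_of_lt hpi)
      have hfv : f w ≤ f ((L.drop i)[m]) := by
        rw [hvL]; exact hsorted i (i + m) hi him (Nat.le_add_right _ _)
      -- edge bag
      obtain ⟨s, hus, hvs⟩ := hdec.2.1 _ _ hadj
      have hfvs : f ((L.drop i)[m]) ≤ (s : ℕ) := hfle _ s hvs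
      have hts : f w ≤ (s : ℕ) := le_trans hfv hfvs
      obtain ⟨hfun, huB⟩ := hfmem L[p]
      have huBt : L[p] ∈ B ⟨f w, htn⟩ :=
        hdec.2.2 ⟨f L[p], hfun⟩ ⟨f w, htn⟩ s (by simpa [Fin.le_def] using hfu)
          (by simpa [Fin.le_def] using hts) _ huB hus
      rw [Finset.mem_erase]
      refine ⟨?_, huBt⟩
      rw [hw]
      intro heq
      exact absurd (hnd.getElem_inj_iff.1 heq) (by omega)
    calc ((L.take i).toFinset.filter fun u : V => ∃ v ∈ L.drop i, G.Adj u v).card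
        ≤ ((B ⟨f w, htn⟩).erase w).card := Finset.card_le_card hsub
      _ = (B ⟨f w, htn⟩).card - 1 := Finset.card_erase_of_mem hwB
      _ ≤ ℓ := by have := hcard ⟨f w, htn⟩; omega
  · have hdrop : L.drop i = [] := List.drop_eq_nil_of_le (le_of_not_gt hi)
    rw [hdrop]
    simp

/-- Kinnersley's theorem: the vertex-separation number equals the path-width. -/
theorem stmt11 (G : SimpleGraph V) [DecidableRel G.Adj] :
    vertexSep G = pathwidth G := by
  unfold vertexSep pathwidth
  congr 1
  ext ℓ
  constructor
  · rintro ⟨L, hnd, huniv, hvs⟩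
    exact vs_to_pw G hnd huniv hvs
  · rintro ⟨n, B, hdec, hcard⟩
    exact pw_to_vs G hdec hcard
end

section
/- Suppose G = (V,E) has an edge ordering σ of linear-width at most ℓ and w is a strictly positive λ-multiplicative weight function. Then the congestion of the canonical path family Γ_σ for the single bond flip chain satisfies ϱ(Γ_σ) ≤ 2m²·λ̂^{4ℓ}, where m = |E| and λ̂ = max{λ,1/λ}. -/
open Finset
open scoped Classical

variable {V : Type} [Fintype V] [DecidableEq V]

def lwAtMost (L : List (Sym2 V)) (ℓ : ℕ) : Prop :=
  ∀ i : ℕ, (Finset.univ.filter fun v : V =>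
    (∃ e ∈ L.take i, v ∈ e) ∧ (∃ e ∈ L.drop i, v ∈ e)).card ≤ ℓ

noncomputable def transP (E : Finset (Sym2 V)) (w : Finset (Sym2 V) → ℝ)
    (S S' : Finset (Sym2 V)) : ℝ :=
  if S' = S then
    1 - ∑ e ∈ E, 1 / (2 * (E.card : ℝ)) * min 1 (w (symmDiff S {e}) / w S)
  else if (symmDiff S S').card = 1 ∧ symmDiff S S' ⊆ E then
    1 / (2 * (E.card : ℝ)) * min 1 (w S' / w S)
  else 0

noncomputable def statDist (E : Finset (Sym2 V)) (w : Finset (Sym2 V) → ℝ)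
    (S : Finset (Sym2 V)) : ℝ :=
  w S / ∑ T ∈ E.powerset, w T


lemma sd_singleton {α : Type} [DecidableEq α] {e : α} {T : Finset α} (h : e ∉ T) :
    symmDiff {e} T = insert e T := by
  ext a
  simp only [Finset.mem_symmDiff, Finset.mem_singleton, Finset.mem_insert]
  by_cases hae : a = e
  · subst hae; simp [h]
  · simp [hae]

lemma scanl_symmDiff_getD {α : Type} [DecidableEq α] :
    ∀ (L : List α), L.Nodup → ∀ (I : Finset α) (k : ℕ), k ≤ L.length →
      (List.scanl (fun H e => symmDiff H {e}) I L).getD k ∅ =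
        symmDiff I (L.take k).toFinset
  | [], _, I, 0, _ => by
      simp only [List.scanl_nil, List.getD_cons_zero, List.take_nil, List.toFinset_nil]
      rw [show (∅ : Finset α) = ⊥ from rfl, symmDiff_bot]
  | [], _, I, (k+1), h => by simp at h
  | (e :: t), hN, I, 0, _ => by
      simp only [List.scanl_cons, List.getD_cons_zero, List.take_zero, List.toFinset_nil]
      rw [show (∅ : Finset α) = ⊥ from rfl, symmDiff_bot]
  | (e :: t), hN, I, (k+1), h => by
      have ht : t.Nodup := (List.nodup_cons.mp hN).2
      have hnot : e ∉ t := (List.nodup_cons.mp hN).1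
      have ih := scanl_symmDiff_getD t ht (symmDiff I {e}) k (by simpa using h)
      have hnt : e ∉ (t.take k).toFinset := fun hc =>
        hnot (List.take_subset _ _ (List.mem_toFinset.mp hc))
      simp only [List.scanl_cons, List.getD_cons_succ]
      rw [ih, symmDiff_assoc, List.take_cons, List.toFinset_cons, sd_singleton hnt]
      simp
      omega

lemma pair_struct {α : Type} [DecidableEq α] {L : List α} (hN : L.Nodup)
    {I F H H' : Finset α} (h : ConsecOn L I F H H') :
    ∃ e, e ∈ symmDiff I F ∧ e ∈ L ∧ symmDiff H H' = {e} ∧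
      H = symmDiff I (symmDiff I F ∩ (L.take (L.idxOf e)).toFinset) ∧
      H' = symmDiff I (symmDiff I F ∩ (L.take (L.idxOf e + 1)).toFinset) := by
  obtain ⟨j, hj, hHe, hH'e⟩ := h
  classical
  set D := symmDiff I F with hD
  set LD := L.filter (fun e => decide (e ∈ D)) with hLDdef
  have hcanon : canonPath L I F = List.scanl (fun H e => symmDiff H {e}) I LD := rfl
  have hlen : (canonPath L I F).length = LD.length + 1 := by
    rw [hcanon, List.length_scanl]
  have hjlt : j < LD.length := by omega
  have hLDnd : LD.Nodup := hN.filter _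
  set e := LD.get ⟨j, hjlt⟩ with he
  have heLD : e ∈ LD := List.get_mem LD ⟨j, hjlt⟩
  have heD : e ∈ D := by
    have := (List.mem_filter.mp heLD).2
    simpa using this
  have heL : e ∈ L := (List.mem_filter.mp heLD).1
  have hH1 : H = symmDiff I (LD.take j).toFinset := by
    rw [← hHe, hcanon]
    exact scanl_symmDiff_getD LD hLDnd I j (by omega)
  have hH2 : H' = symmDiff I (LD.take (j+1)).toFinset := by
    rw [← hH'e, hcanon]
    exact scanl_symmDiff_getD LD hLDnd I (j+1) (by omega)
  set p := L.idxOf e with hp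
  have hpl : p < L.length := List.idxOf_lt_length_iff.mpr heL
  have hdecomp : L = L.take p ++ (e :: L.drop (p+1)) := by
    conv_lhs => rw [← List.take_append_drop p L]
    rw [List.drop_eq_getElem_cons hpl, List.getElem_idxOf]
  set A := (L.take p).filter (fun x => decide (x ∈ D)) with hA
  set B := (L.drop (p+1)).filter (fun x => decide (x ∈ D)) with hB
  have hLDdec : LD = A ++ e :: B := by
    rw [hLDdef]
    conv_lhs => rw [hdecomp]
    rw [List.filter_append, List.filter_cons]
    simp [heD]
    rfl
  have hAlt : A.length < LD.length := by rw [hLDdec]; simp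
  have hgetA : LD.get ⟨A.length, hAlt⟩ = e := by
    have h1 : LD[A.length]? = some e := by
      rw [hLDdec, List.getElem?_append_right (le_refl _)]
      simp
    have h2 := List.getElem?_eq_getElem hAlt
    rw [h1] at h2
    rw [List.get_eq_getElem]; exact (Option.some.inj h2).symm
  have hjA : j = A.length := by
    have hfe : LD.get ⟨j, hjlt⟩ = LD.get ⟨A.length, hAlt⟩ := by rw [hgetA, ← he]
    have := hLDnd.get_inj_iff.mp hfe
    exact congrArg Fin.val this
  have htakej : LD.take j = A := by
    rw [hjA, hLDdec]; exact List.take_left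
  have htakej1 : LD.take (j+1) = A ++ [e] := by
    rw [hjA, hLDdec, List.take_append]
    simp
  have htakeL : L.take (p+1) = L.take p ++ [e] := by
    have h1 : L[p]? = some e :=
      (List.getElem?_eq_getElem hpl).trans (congrArg some (List.getElem_idxOf hpl))
    rw [List.take_succ, h1]
    rfl
  have hY : (A ++ [e]).toFinset = insert e A.toFinset := by
    ext a; simp [or_comm]
  have hndA : e ∉ A.toFinset := by
    have hnd := hLDdec ▸ hLDnd
    rw [List.nodup_append] at hnd
    exact fun hc => hnd.2.2 e (List.mem_toFinset.mp hc) e (by simp) rfl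
  have hAD : A.toFinset = D ∩ (L.take p).toFinset := by
    ext a
    simp only [hA, List.toFinset_filter, Finset.mem_filter, List.mem_toFinset,
      Finset.mem_inter, decide_eq_true_eq]
    tauto
  have hLp1 : (L.take (p+1)).toFinset = insert e (L.take p).toFinset := by
    rw [htakeL]
    ext a; simp [or_comm]
  refine ⟨e, heD, heL, ?_, ?_, ?_⟩
  · rw [hH1, hH2, htakej, htakej1, symmDiff_comm I A.toFinset, symmDiff_assoc,
      symmDiff_symmDiff_cancel_left, hY]
    ext a
    by_cases hae : a = e
    · subst hae; simp [Finset.mem_symmDiff, hndA]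
    · simp only [Finset.mem_symmDiff, Finset.mem_insert, Finset.mem_singleton, hae]
      tauto
  · rw [hH1, htakej, hAD]
  · rw [hH2, htakej1, hY, hAD, hLp1]
    congr 1
    ext a
    simp only [Finset.mem_insert, Finset.mem_inter]
    by_cases hae : a = e
    · subst hae; simp [heD]
    · simp [hae]


lemma mix_invol {α : Type} [DecidableEq α] {T₁ T₂ E A B : Finset α} (hU : T₁ ∪ T₂ = E)
    (hd : Disjoint T₁ T₂) (hA : A ⊆ E) :
    (A ∩ T₁ ∪ B ∩ T₂) ∩ T₁ ∪ (B ∩ T₁ ∪ A ∩ T₂) ∩ T₂ = A := by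
  ext a
  have h1 : a ∈ A → a ∈ T₁ ∨ a ∈ T₂ := fun h => by
    have := hA h; rw [← hU] at this; simpa using this
  have h3 : a ∈ T₁ → a ∈ T₂ → False := fun x y => Finset.disjoint_left.mp hd x y
  simp only [Finset.mem_union, Finset.mem_inter]
  tauto

lemma symmDiff_to_mix {α : Type} [DecidableEq α] {T₁ T₂ E I F : Finset α} (hU : T₁ ∪ T₂ = E)
    (hd : Disjoint T₁ T₂) (hI : I ⊆ E) (hF : F ⊆ E) :
    symmDiff I (symmDiff I F ∩ T₁) = F ∩ T₁ ∪ I ∩ T₂ := by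
  ext a
  have h1 : a ∈ I → a ∈ T₁ ∨ a ∈ T₂ := fun h => by
    have := hI h; rw [← hU] at this; simpa using this
  have h2 : a ∈ F → a ∈ T₁ ∨ a ∈ T₂ := fun h => by
    have := hF h; rw [← hU] at this; simpa using this
  have h3 : a ∈ T₁ → a ∈ T₂ → False := fun x y => Finset.disjoint_left.mp hd x y
  simp only [Finset.mem_symmDiff, Finset.mem_union, Finset.mem_inter]
  tauto

lemma one_le_lamHat_s15 (w : Finset V → Finset (Sym2 V) → ℝ) (l : ℝ)
    (hpos : ∀ U S, 0 < w U S) (hmult : EdgeLamMult w l) (v : V) : 1 ≤ lamHat l := by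
  have hcut : IsCutPartition (∅ : Finset V) {v} (∅ : Finset V) (∅ : Finset (Sym2 V)) :=
    ⟨by simp, by simp, by simp, by simp, by simp, by simp⟩
  have happ : IsAppropriate (∅ : Finset V) (∅ : Finset V) (∅ : Finset (Sym2 V)) ∅ ∅ :=
    ⟨by simp, by simp, by simp, by simp⟩
  have h := (hmult ∅ {v} ∅ ∅ ∅ ∅ hcut happ).2
  simp only [Finset.empty_union, Finset.union_empty, Finset.card_singleton] at h
  have hx := hpos {v} ∅
  have hxx : w {v} ∅ * w {v} ∅ / w {v} ∅ = w {v} ∅ := by field_simp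
  rw [hxx] at h
  norm_num at h
  have hl0 : 0 < lamHat l := lt_of_lt_of_le hx h
  rcases le_or_gt 1 l with hl | hl
  · exact le_trans hl (le_max_left _ _)
  · have hlpos : 0 < l := by
      by_contra hc
      push_neg at hc
      have : lamHat l ≤ 0 := max_le hc (inv_nonpos.mpr hc)
      linarith
    calc (1:ℝ) ≤ l⁻¹ := (one_le_inv₀ hlpos).mpr (le_of_lt hl)
      _ ≤ lamHat l := le_max_right _ _

lemma swap_bound (w : Finset V → Finset (Sym2 V) → ℝ) (l : ℝ)
    (hpos : ∀ U S, 0 < w U S) (hmult : EdgeLamMult w l) (hlam : 1 ≤ lamHat l)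
    (E : Finset (Sym2 V)) (hsimple : ∀ e ∈ E, ¬ e.IsDiag)
    (L : List (Sym2 V)) (hnodup : L.Nodup) (hLE : L.toFinset = E)
    (ℓ : ℕ) (hlw : lwAtMost L ℓ) (i : ℕ)
    {A B : Finset (Sym2 V)} (hA : A ⊆ E) (hB : B ⊆ E) :
    w Finset.univ (A ∩ (L.take i).toFinset ∪ B ∩ (L.drop i).toFinset) *
      w Finset.univ (B ∩ (L.take i).toFinset ∪ A ∩ (L.drop i).toFinset) ≤
    lamHat l ^ (4 * ℓ) * (w Finset.univ A * w Finset.univ B) := by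
  classical
  have hlam0 : (0:ℝ) < lamHat l := lt_of_lt_of_le one_pos hlam
  set T₁ := (L.take i).toFinset with hT1
  set T₂ := (L.drop i).toFinset with hT2
  have hTU : T₁ ∪ T₂ = E := by
    rw [hT1, hT2, ← List.toFinset_append, List.take_append_drop, hLE]
  have hTd : Disjoint T₁ T₂ := by
    have hnd2 : (L.take i ++ L.drop i).Nodup := by
      rw [List.take_append_drop]; exact hnodup
    rw [List.nodup_append] at hnd2
    exact List.disjoint_toFinset_iff_disjoint.mpr fun a ha hb => hnd2.2.2 a ha a hb rfl
  set K := Finset.univ.filter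
    (fun v : V => (∃ e ∈ L.take i, v ∈ e) ∧ (∃ e ∈ L.drop i, v ∈ e)) with hK
  set V₁ := (Finset.univ.filter (fun v : V => ∃ e ∈ L.take i, v ∈ e)) \ K with hV1
  set V₂ := Finset.univ \ (V₁ ∪ K) with hV2
  have hKl : K.card ≤ ℓ := hlw i
  have hVU : V₁ ∪ K ∪ V₂ = Finset.univ := by
    rw [hV2]; exact Finset.union_sdiff_of_subset (Finset.subset_univ _)
  have hbounds : ∀ S : Finset (Sym2 V), S ⊆ E →
      (w (V₁ ∪ K) (S ∩ T₁) * w (V₂ ∪ K) (S ∩ T₂) ≤ lamHat l ^ ℓ * w Finset.univ S ∧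
       w Finset.univ S ≤ lamHat l ^ ℓ * (w (V₁ ∪ K) (S ∩ T₁) * w (V₂ ∪ K) (S ∩ T₂))) := by
    intro S hS
    have hcut : IsCutPartition V₁ K V₂ S := by
      refine ⟨Finset.sdiff_disjoint, ?_, ?_,
        fun e he => hsimple e (hS he),
        fun e he v hv => by rw [hVU]; exact Finset.mem_univ v, ?_⟩
      · exact (Finset.disjoint_sdiff).mono_left Finset.subset_union_left
      · exact (Finset.disjoint_sdiff).mono_left Finset.subset_union_right
      · intro a b hab ha hb
        have habL : s(a,b) ∈ L := by
          have := hS hab; rw [← hLE] at this; exact List.mem_toFinset.mp this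
        have hsplit : s(a,b) ∈ L.take i ∨ s(a,b) ∈ L.drop i := by
          conv at habL => rw [← List.take_append_drop i L]
          exact List.mem_append.mp habL
        rcases hsplit with h | h
        · have hbt : ∃ e ∈ L.take i, b ∈ e := ⟨_, h, Sym2.mem_mk_right a b⟩
          have hbV : b ∈ V₁ ∪ K := by
            by_cases hbk : b ∈ K
            · exact Finset.mem_union_right _ hbk
            · exact Finset.mem_union_left _ (by
                rw [hV1]
                exact Finset.mem_sdiff.mpr
                  ⟨Finset.mem_filter.mpr ⟨Finset.mem_univ _, hbt⟩, hbk⟩)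
          rw [hV2] at hb
          exact (Finset.mem_sdiff.mp hb).2 hbV
        · have hat' : ∃ e ∈ L.drop i, a ∈ e := ⟨_, h, Sym2.mem_mk_left a b⟩
          rw [hV1] at ha
          obtain ⟨haf, hak⟩ := Finset.mem_sdiff.mp ha
          exact hak (Finset.mem_filter.mpr
            ⟨Finset.mem_univ _, (Finset.mem_filter.mp haf).2, hat'⟩)
    have happ : IsAppropriate V₁ V₂ S (S ∩ T₁) (S ∩ T₂) := by
      refine ⟨?_, hTd.mono Finset.inter_subset_right Finset.inter_subset_right, ?_, ?_⟩
      · rw [← Finset.inter_union_distrib_left, hTU, Finset.inter_eq_left.mpr hS]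
      · intro x hx v hv hc
        have hvt : ∃ e ∈ L.take i, v ∈ e :=
          ⟨x, List.mem_toFinset.mp (Finset.mem_inter.mp hx).2, hv⟩
        rw [hV2] at hc
        obtain ⟨-, hc2⟩ := Finset.mem_sdiff.mp hc
        apply hc2
        by_cases hvk : v ∈ K
        · exact Finset.mem_union_right _ hvk
        · exact Finset.mem_union_left _ (by
            rw [hV1]
            exact Finset.mem_sdiff.mpr
              ⟨Finset.mem_filter.mpr ⟨Finset.mem_univ _, hvt⟩, hvk⟩)
      · intro x hx v hv hc
        have hvd : ∃ e ∈ L.drop i, v ∈ e :=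
          ⟨x, List.mem_toFinset.mp (Finset.mem_inter.mp hx).2, hv⟩
        rw [hV1] at hc
        obtain ⟨hcf, hck⟩ := Finset.mem_sdiff.mp hc
        exact hck (Finset.mem_filter.mpr
          ⟨Finset.mem_univ _, (Finset.mem_filter.mp hcf).2, hvd⟩)
    obtain ⟨hlo, hup⟩ := hmult V₁ K V₂ S (S ∩ T₁) (S ∩ T₂) hcut happ
    rw [hVU] at hlo hup
    have hwS := hpos Finset.univ S
    have hzk : lamHat l ^ (K.card : ℤ) = lamHat l ^ K.card := zpow_natCast _ _
    have hkl : lamHat l ^ K.card ≤ lamHat l ^ ℓ := pow_le_pow_right₀ hlam hKl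
    constructor
    · have h1 := (div_le_iff₀ hwS).mp hup
      calc w (V₁ ∪ K) (S ∩ T₁) * w (V₂ ∪ K) (S ∩ T₂)
          ≤ lamHat l ^ (K.card : ℤ) * w Finset.univ S := h1
        _ = lamHat l ^ K.card * w Finset.univ S := by rw [hzk]
        _ ≤ lamHat l ^ ℓ * w Finset.univ S :=
            mul_le_mul_of_nonneg_right hkl (le_of_lt hwS)
    · have h1 := (le_div_iff₀ hwS).mp hlo
      have hzpos : (0:ℝ) < lamHat l ^ (K.card : ℤ) := zpow_pos hlam0 _
      calc w Finset.univ S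
          = lamHat l ^ (K.card : ℤ) * (lamHat l ^ (-(K.card : ℤ)) * w Finset.univ S) := by
            rw [← mul_assoc, ← zpow_add₀ (ne_of_gt hlam0)]
            simp
        _ ≤ lamHat l ^ (K.card : ℤ) *
            (w (V₁ ∪ K) (S ∩ T₁) * w (V₂ ∪ K) (S ∩ T₂)) :=
            mul_le_mul_of_nonneg_left h1 (le_of_lt hzpos)
        _ = lamHat l ^ K.card * (w (V₁ ∪ K) (S ∩ T₁) * w (V₂ ∪ K) (S ∩ T₂)) := by rw [hzk]
        _ ≤ lamHat l ^ ℓ * (w (V₁ ∪ K) (S ∩ T₁) * w (V₂ ∪ K) (S ∩ T₂)) :=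
            mul_le_mul_of_nonneg_right hkl
              (le_of_lt (mul_pos (hpos _ _) (hpos _ _)))
  -- intersections of the mixed sets
  have hd' := Finset.disjoint_left.mp hTd
  have hmix1 : (A ∩ T₁ ∪ B ∩ T₂) ∩ T₁ = A ∩ T₁ := by
    ext x; simp only [Finset.mem_inter, Finset.mem_union]
    constructor
    · rintro ⟨h1 | h1, h2⟩
      · exact ⟨h1.1, h2⟩
      · exact absurd h2 (fun hc => hd' hc h1.2)
    · exact fun h => ⟨Or.inl h, h.2⟩
  have hmix2 : (A ∩ T₁ ∪ B ∩ T₂) ∩ T₂ = B ∩ T₂ := by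
    ext x; simp only [Finset.mem_inter, Finset.mem_union]
    constructor
    · rintro ⟨h1 | h1, h2⟩
      · exact absurd h2 (fun hc => hd' h1.2 hc)
      · exact ⟨h1.1, h2⟩
    · exact fun h => ⟨Or.inr h, h.2⟩
  have hmix3 : (B ∩ T₁ ∪ A ∩ T₂) ∩ T₁ = B ∩ T₁ := by
    ext x; simp only [Finset.mem_inter, Finset.mem_union]
    constructor
    · rintro ⟨h1 | h1, h2⟩
      · exact ⟨h1.1, h2⟩
      · exact absurd h2 (fun hc => hd' hc h1.2)
    · exact fun h => ⟨Or.inl h, h.2⟩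
  have hmix4 : (B ∩ T₁ ∪ A ∩ T₂) ∩ T₂ = A ∩ T₂ := by
    ext x; simp only [Finset.mem_inter, Finset.mem_union]
    constructor
    · rintro ⟨h1 | h1, h2⟩
      · exact absurd h2 (fun hc => hd' h1.2 hc)
      · exact ⟨h1.1, h2⟩
    · exact fun h => ⟨Or.inr h, h.2⟩
  have hsubAB : A ∩ T₁ ∪ B ∩ T₂ ⊆ E := by
    rw [← hTU]
    exact Finset.union_subset
      (le_trans Finset.inter_subset_right Finset.subset_union_left)
      (le_trans Finset.inter_subset_right Finset.subset_union_right)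
  have hsubBA : B ∩ T₁ ∪ A ∩ T₂ ⊆ E := by
    rw [← hTU]
    exact Finset.union_subset
      (le_trans Finset.inter_subset_right Finset.subset_union_left)
      (le_trans Finset.inter_subset_right Finset.subset_union_right)
  have hmAB := (hbounds _ hsubAB).2
  have hmBA := (hbounds _ hsubBA).2
  rw [hmix1, hmix2] at hmAB
  rw [hmix3, hmix4] at hmBA
  have hA' := (hbounds A hA).1
  have hB' := (hbounds B hB).1
  set c := lamHat l ^ ℓ with hc
  have hc0 : (0:ℝ) < c := pow_pos hlam0 _
  set a1 := w (V₁ ∪ K) (A ∩ T₁)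
  set b1 := w (V₂ ∪ K) (A ∩ T₂)
  set a2 := w (V₁ ∪ K) (B ∩ T₁)
  set b2 := w (V₂ ∪ K) (B ∩ T₂)
  have ha1 : 0 < a1 := hpos _ _
  have hb1 : 0 < b1 := hpos _ _
  have ha2 : 0 < a2 := hpos _ _
  have hb2 : 0 < b2 := hpos _ _
  have hwA : 0 < w Finset.univ A := hpos _ _
  have hwB : 0 < w Finset.univ B := hpos _ _
  have hwmAB : 0 < w Finset.univ (A ∩ T₁ ∪ B ∩ T₂) := hpos _ _
  have hwmBA : 0 < w Finset.univ (B ∩ T₁ ∪ A ∩ T₂) := hpos _ _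
  calc w Finset.univ (A ∩ T₁ ∪ B ∩ T₂) * w Finset.univ (B ∩ T₁ ∪ A ∩ T₂)
      ≤ (c * (a1 * b2)) * (c * (a2 * b1)) := by
        apply mul_le_mul hmAB hmBA (le_of_lt hwmBA)
        positivity
    _ = c^2 * ((a1 * b1) * (a2 * b2)) := by ring
    _ ≤ c^2 * ((c * w Finset.univ A) * (c * w Finset.univ B)) := by
        apply mul_le_mul_of_nonneg_left _ (by positivity)
        exact mul_le_mul hA' hB' (by positivity) (by positivity)
    _ = c^4 * (w Finset.univ A * w Finset.univ B) := by ring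
    _ = lamHat l ^ (4 * ℓ) * (w Finset.univ A * w Finset.univ B) := by
        rw [hc, ← pow_mul, mul_comm ℓ 4]


lemma my_div_helper (x m Z : ℝ) (hZ : Z ≠ 0) : x * Z * m / Z^2 = m * x / Z := by
  field_simp

lemma my_den_helper (a z m mn : ℝ) (ha : a ≠ 0) (hz : z ≠ 0) (hm : m ≠ 0) :
    a / z * (1 / (2 * m) * (mn / a)) = mn / (2 * m * z) := by
  field_simp

lemma my_heq_helper (m lp mn Z : ℝ) (hm : m ≠ 0) (hZ : Z ≠ 0) :
    2 * m^2 * lp * (mn / (2 * m * Z)) = m * lp * mn / Z := by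
  field_simp

/-- Theorem 3 of the paper: if `σ` is an edge ordering of `G` of linear-width at most
`ℓ` and `w` is a strictly positive `λ`-multiplicative weight function, then the
congestion of the canonical path family `Γ_σ` for the single bond flip chain satisfies
`ϱ(Γ_σ) ≤ 2 m² λ̂^{4ℓ}`: for every transition `(H,H')` with `P(H,H') > 0`,
`(1/(π(H)P(H,H'))) Σ_{(I,F) : (H,H') ∈ γ_{σ,I→F}} π(I) π(F) |γ_{σ,I→F}| ≤ 2 m² λ̂^{4ℓ}`. -/
theorem stmt15 (w : Finset V → Finset (Sym2 V) → ℝ) (l : ℝ)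
    (hpos : ∀ U S, 0 < w U S) (hmult : EdgeLamMult w l)
    (E : Finset (Sym2 V)) (hE : E.Nonempty) (hsimple : ∀ e ∈ E, ¬ e.IsDiag)
    (L : List (Sym2 V)) (hnodup : L.Nodup) (hLE : L.toFinset = E)
    (ℓ : ℕ) (hlw : lwAtMost L ℓ)
    (H H' : Finset (Sym2 V)) (hH : H ⊆ E) (hH' : H' ⊆ E)
    (hPpos : 0 < transP E (w Finset.univ) H H') :
    (∑ p ∈ (E.powerset ×ˢ E.powerset).filter
        (fun p : Finset (Sym2 V) × Finset (Sym2 V) => ConsecOn L p.1 p.2 H H'),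
      statDist E (w Finset.univ) p.1 * statDist E (w Finset.univ) p.2 *
        ((symmDiff p.1 p.2).card : ℝ)) /
      (statDist E (w Finset.univ) H * transP E (w Finset.univ) H H') ≤
    2 * (E.card : ℝ) ^ 2 * lamHat l ^ (4 * ℓ) := by
  classical
  set W := w Finset.univ with hW
  set Z := ∑ T ∈ E.powerset, W T with hZdef
  have hZ : 0 < Z :=
    Finset.sum_pos (fun T _ => hpos _ _) ⟨∅, Finset.mem_powerset.mpr (Finset.empty_subset E)⟩
  obtain ⟨e0, he0⟩ := hE
  obtain ⟨⟨v0, v0'⟩, -⟩ := Quot.exists_rep e0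
  have hlam : 1 ≤ lamHat l := one_le_lamHat_s15 w l hpos hmult v0
  have hlam0 : (0:ℝ) < lamHat l := lt_of_lt_of_le one_pos hlam
  have hpow : (0:ℝ) < lamHat l ^ (4 * ℓ) := pow_pos hlam0 _
  have hm : 0 < E.card := Finset.card_pos.mpr ⟨e0, he0⟩
  have hmR : (0:ℝ) < (E.card : ℝ) := by exact_mod_cast hm
  set Φ := (E.powerset ×ˢ E.powerset).filter
    (fun p : Finset (Sym2 V) × Finset (Sym2 V) => ConsecOn L p.1 p.2 H H') with hΦdef
  rcases eq_or_ne Φ ∅ with hΦ | hΦ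
  · rw [hΦ, Finset.sum_empty, zero_div]
    exact mul_nonneg (mul_nonneg (by norm_num) (sq_nonneg _)) (le_of_lt hpow)
  · obtain ⟨pr0, hpr0⟩ := Finset.nonempty_of_ne_empty hΦ
    have hcon0 := (Finset.mem_filter.mp hpr0).2
    obtain ⟨e, heD0, heL, heHH', -, -⟩ := pair_struct hnodup hcon0
    have heE : e ∈ E := by rw [← hLE]; exact List.mem_toFinset.mpr heL
    have hne : H' ≠ H := by
      intro hc
      rw [hc, symmDiff_self] at heHH'
      have : e ∈ (⊥ : Finset (Sym2 V)) := heHH' ▸ Finset.mem_singleton_self e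
      simp at this
    have hPeval : transP E W H H' = 1 / (2 * (E.card : ℝ)) * min 1 (W H' / W H) := by
      rw [transP, if_neg hne, if_pos]
      exact ⟨by rw [heHH']; exact Finset.card_singleton e,
        by rw [heHH']; exact Finset.singleton_subset_iff.mpr heE⟩
    set i := L.idxOf e with hi
    have hTU : ∀ c : ℕ, (L.take c).toFinset ∪ (L.drop c).toFinset = E := fun c => by
      rw [← List.toFinset_append, List.take_append_drop, hLE]
    have hTd : ∀ c : ℕ, Disjoint (L.take c).toFinset (L.drop c).toFinset := fun c => by
      have hnd2 : (L.take c ++ L.drop c).Nodup := by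
        rw [List.take_append_drop]; exact hnodup
      rw [List.nodup_append] at hnd2
      exact List.disjoint_toFinset_iff_disjoint.mpr fun a ha hb => hnd2.2.2 a ha a hb rfl
    have pairfact : ∀ pr : Finset (Sym2 V) × Finset (Sym2 V), pr ∈ Φ →
        pr.1 ⊆ E ∧ pr.2 ⊆ E ∧
        H = pr.2 ∩ (L.take i).toFinset ∪ pr.1 ∩ (L.drop i).toFinset ∧
        H' = pr.2 ∩ (L.take (i+1)).toFinset ∪ pr.1 ∩ (L.drop (i+1)).toFinset := by
      intro pr hpr
      have hmem := Finset.mem_filter.mp hpr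
      have hIE : pr.1 ⊆ E := Finset.mem_powerset.mp (Finset.mem_product.mp hmem.1).1
      have hFE : pr.2 ⊆ E := Finset.mem_powerset.mp (Finset.mem_product.mp hmem.1).2
      obtain ⟨e', he'D, he'L, he'HH', hHf, hH'f⟩ := pair_struct hnodup hmem.2
      have hee : e' = e := by
        have h2 : ({e'} : Finset (Sym2 V)) = {e} := by rw [← he'HH', heHH']
        exact Finset.singleton_injective h2
      subst hee
      rw [← hi] at hHf hH'f
      refine ⟨hIE, hFE, ?_, ?_⟩
      · rw [hHf]; exact symmDiff_to_mix (hTU i) (hTd i) hIE hFE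
      · rw [hH'f]; exact symmDiff_to_mix (hTU (i+1)) (hTd (i+1)) hIE hFE
    -- master bound
    have master : ∀ (c : ℕ) (G : Finset (Sym2 V)), G ⊆ E →
        (∀ pr : Finset (Sym2 V) × Finset (Sym2 V), pr ∈ Φ →
          G = pr.2 ∩ (L.take c).toFinset ∪ pr.1 ∩ (L.drop c).toFinset) →
        ∑ pr ∈ Φ, W pr.1 * W pr.2 ≤ lamHat l ^ (4*ℓ) * W G * Z := by
      intro c G hGE hGfact
      set g : Finset (Sym2 V) × Finset (Sym2 V) → Finset (Sym2 V) :=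
        fun pr => pr.1 ∩ (L.take c).toFinset ∪ pr.2 ∩ (L.drop c).toFinset with hg
      have hgapp : ∀ pr : Finset (Sym2 V) × Finset (Sym2 V),
          g pr = pr.1 ∩ (L.take c).toFinset ∪ pr.2 ∩ (L.drop c).toFinset := fun pr => rfl
      have hsubE : ∀ pr : Finset (Sym2 V) × Finset (Sym2 V), g pr ⊆ E := fun pr => by
        rw [hgapp, ← hTU c]
        exact Finset.union_subset
          (le_trans Finset.inter_subset_right Finset.subset_union_left)
          (le_trans Finset.inter_subset_right Finset.subset_union_right)
      have hrec : ∀ pr : Finset (Sym2 V) × Finset (Sym2 V), pr ∈ Φ →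
          pr.1 = g pr ∩ (L.take c).toFinset ∪ G ∩ (L.drop c).toFinset ∧
          pr.2 = G ∩ (L.take c).toFinset ∪ g pr ∩ (L.drop c).toFinset := by
        intro pr hpr
        obtain ⟨hIE, hFE, -, -⟩ := pairfact pr hpr
        have hGf := hGfact pr hpr
        constructor
        · rw [hgapp, hGf]
          exact (mix_invol (hTU c) (hTd c) hIE).symm
        · rw [hgapp, hGf]
          exact (mix_invol (hTU c) (hTd c) hFE).symm
      have hterm : ∀ pr ∈ Φ, W pr.1 * W pr.2 ≤ lamHat l ^ (4*ℓ) * (W (g pr) * W G) := by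
        intro pr hpr
        have hswap := swap_bound w l hpos hmult hlam E hsimple L hnodup hLE ℓ hlw c
          (hsubE pr) hGE
        obtain ⟨hrec1, hrec2⟩ := hrec pr hpr
        rw [← hrec1, ← hrec2] at hswap
        rw [hW]
        exact hswap
      have hinj : ∀ p ∈ Φ, ∀ q ∈ Φ, g p = g q → p = q := by
        intro p hp q hq hpq
        obtain ⟨hp1, hp2⟩ := hrec p hp
        obtain ⟨hq1, hq2⟩ := hrec q hq
        have h1 : p.1 = q.1 := by rw [hp1, hq1, hpq]
        have h2 : p.2 = q.2 := by rw [hp2, hq2, hpq]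
        exact Prod.ext h1 h2
      have himg : Φ.image g ⊆ E.powerset := by
        intro t ht
        obtain ⟨pr, -, rfl⟩ := Finset.mem_image.mp ht
        exact Finset.mem_powerset.mpr (hsubE pr)
      have hsumg : ∑ pr ∈ Φ, W (g pr) ≤ Z := by
        rw [← Finset.sum_image hinj]
        exact Finset.sum_le_sum_of_subset_of_nonneg himg fun t _ _ => (hpos _ _).le
      calc ∑ pr ∈ Φ, W pr.1 * W pr.2
          ≤ ∑ pr ∈ Φ, lamHat l ^ (4*ℓ) * (W (g pr) * W G) := Finset.sum_le_sum hterm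
        _ = ∑ pr ∈ Φ, (lamHat l ^ (4*ℓ) * W G) * W (g pr) := by
            refine Finset.sum_congr rfl fun pr _ => by ring
        _ = (lamHat l ^ (4*ℓ) * W G) * ∑ pr ∈ Φ, W (g pr) := by
            rw [← Finset.mul_sum]
        _ ≤ (lamHat l ^ (4*ℓ) * W G) * Z := by
            apply mul_le_mul_of_nonneg_left hsumg
            exact mul_nonneg (le_of_lt hpow) (hpos _ _).le
        _ = lamHat l ^ (4*ℓ) * W G * Z := by ring
    -- numerator term bound
    have htermN : ∀ pr ∈ Φ,
        statDist E W pr.1 * statDist E W pr.2 * ((symmDiff pr.1 pr.2).card : ℝ)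
          ≤ W pr.1 * W pr.2 * (E.card : ℝ) / Z^2 := by
      intro pr hpr
      obtain ⟨hIE, hFE, -, -⟩ := pairfact pr hpr
      have hsub : symmDiff pr.1 pr.2 ⊆ E := fun x hx => by
        rcases Finset.mem_symmDiff.mp hx with ⟨h, -⟩ | ⟨h, -⟩
        exacts [hIE h, hFE h]
      have hcard : ((symmDiff pr.1 pr.2).card : ℝ) ≤ (E.card : ℝ) := by
        exact_mod_cast Finset.card_le_card hsub
      have h1 : statDist E W pr.1 * statDist E W pr.2 * ((symmDiff pr.1 pr.2).card : ℝ)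
          = W pr.1 * W pr.2 * ((symmDiff pr.1 pr.2).card : ℝ) / Z^2 := by
        rw [statDist, statDist, ← hZdef]; ring
      rw [h1]
      gcongr
      exact mul_nonneg (hpos _ _).le (hpos _ _).le
    set minw := min (W H) (W H') with hminwdef
    have hminw0 : 0 < minw := lt_min (hpos _ _) (hpos _ _)
    have hsum2 : ∑ pr ∈ Φ, W pr.1 * W pr.2 ≤ lamHat l ^ (4*ℓ) * minw * Z := by
      rcases min_cases (W H) (W H') with ⟨hmeq, -⟩ | ⟨hmeq, -⟩
      · rw [hminwdef, hmeq]
        exact master i H hH fun pr hpr => (pairfact pr hpr).2.2.1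
      · rw [hminwdef, hmeq]
        exact master (i+1) H' hH' fun pr hpr => (pairfact pr hpr).2.2.2
    have hN : (∑ pr ∈ Φ, statDist E W pr.1 * statDist E W pr.2 *
          ((symmDiff pr.1 pr.2).card : ℝ))
        ≤ (E.card : ℝ) * lamHat l ^ (4*ℓ) * minw / Z := by
      calc (∑ pr ∈ Φ, statDist E W pr.1 * statDist E W pr.2 *
            ((symmDiff pr.1 pr.2).card : ℝ))
          ≤ ∑ pr ∈ Φ, W pr.1 * W pr.2 * (E.card : ℝ) / Z^2 := Finset.sum_le_sum htermN
        _ = (∑ pr ∈ Φ, W pr.1 * W pr.2) * (E.card : ℝ) / Z^2 := by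
            rw [← Finset.sum_div, ← Finset.sum_mul]
        _ ≤ (lamHat l ^ (4*ℓ) * minw * Z) * (E.card : ℝ) / Z^2 := by
            have hZ2 : (0:ℝ) < Z^2 := pow_pos hZ 2
            exact (div_le_div_iff_of_pos_right hZ2).mpr
              (mul_le_mul_of_nonneg_right hsum2 (le_of_lt hmR))
        _ = (E.card : ℝ) * lamHat l ^ (4*ℓ) * minw / Z := by
            rw [my_div_helper _ _ _ (ne_of_gt hZ)]; ring
    have hmm : min 1 (W H' / W H) = minw / W H := by
      rw [hminwdef, ← min_div_div_right (hpos Finset.univ H).le,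
        div_self (ne_of_gt (hpos Finset.univ H))]
    have hDen : statDist E W H * transP E W H H' = minw / (2 * (E.card : ℝ) * Z) := by
      rw [statDist, ← hZdef, hPeval, hmm]
      exact my_den_helper _ _ _ _ (ne_of_gt (hpos _ _)) (ne_of_gt hZ) (ne_of_gt hmR)
    have hDenpos : 0 < statDist E W H * transP E W H H' := by
      rw [hDen]
      exact div_pos hminw0 (mul_pos (mul_pos two_pos hmR) hZ)
    rw [div_le_iff₀ hDenpos, hDen]
    have heq : 2 * (E.card : ℝ)^2 * lamHat l ^ (4*ℓ) * (minw / (2 * (E.card : ℝ) * Z))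
        = (E.card : ℝ) * lamHat l ^ (4*ℓ) * minw / Z :=
      my_heq_helper _ _ _ _ (ne_of_gt hmR) (ne_of_gt hZ)
    rw [heq]
    exact hN
end

section
/- Let G = (V,E), let K be a vertex cut separating V₁ and V₂, and let G' be obtained by splitting each vertex of K (disjoint union of (V₁∪K,E₁) and (V₂∪K,E₂) for an appropriate edge partition). Then Σ_i |κ(i,G) − κ(i,G')| ≤ 3|K|, where κ(i,H) denotes the number of connected components of H with exactly i vertices. -/
open Finset

variable {V : Type} [Fintype V] [DecidableEq V]

/-- `κ(i, ·)`: the number of connected components of order exactly `i` of the graph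
with vertex set `Vs` and edge set `S`. -/
noncomputable def kappaOrd (Vs : Finset V) (S : Finset (Sym2 V)) (i : ℕ) : ℕ :=
  Nat.card {c : ((SimpleGraph.fromEdgeSet (S : Set (Sym2 V))).induce
    (Vs : Set V)).ConnectedComponent // c.supp.ncard = i}

set_option linter.unusedSectionVars false
namespace Stmt16Aux

open SimpleGraph

variable {V : Type} [Fintype V] [DecidableEq V]

/-- Reachability on `V` through edges of `S`. -/
def Reach (S : Finset (Sym2 V)) (a b : V) : Prop :=
  Relation.ReflTransGen (fun x y => s(x, y) ∈ S ∧ x ≠ y) a b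

lemma Reach.symm {S : Finset (Sym2 V)} {a b : V} (h : Reach S a b) : Reach S b a := by
  refine (@Relation.ReflTransGen.symmetric _ _ ⟨?_⟩).symm _ _ h
  intro x y ⟨h1, h2⟩
  exact ⟨by rwa [Sym2.eq_swap], h2.symm⟩

lemma Reach.trans' {S : Finset (Sym2 V)} {a b c : V} (h : Reach S a b) (h' : Reach S b c) :
    Reach S a c := h.trans h'

/-- The graph on vertex set `Vs` with edges `S`. -/
noncomputable abbrev HG (Vs : Finset V) (S : Finset (Sym2 V)) :
    SimpleGraph (Vs : Set V) :=
  (SimpleGraph.fromEdgeSet (S : Set (Sym2 V))).induce (Vs : Set V)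

variable {Vs : Finset V} {S : Finset (Sym2 V)}

lemma reach_mem (hconf : ∀ e ∈ S, ∀ x ∈ e, x ∈ Vs) {a b : V} (h : Reach S a b)
    (ha : a ∈ Vs) : b ∈ Vs := by
  induction h with
  | refl => exact ha
  | tail _ hcb ih => exact hconf _ hcb.1 _ (Sym2.mem_mk_right _ _)

lemma hg_adj {a b : V} (ha : a ∈ (Vs : Set V)) (hb : b ∈ (Vs : Set V)) :
    (HG Vs S).Adj ⟨a, ha⟩ ⟨b, hb⟩ ↔ s(a, b) ∈ S ∧ a ≠ b := by
  show (SimpleGraph.fromEdgeSet (S : Set (Sym2 V))).Adj a b ↔ _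
  rw [SimpleGraph.fromEdgeSet_adj]
  simp

lemma reach_iff (hconf : ∀ e ∈ S, ∀ x ∈ e, x ∈ Vs) {a b : V} (ha : a ∈ (Vs : Set V))
    (hb : b ∈ (Vs : Set V)) :
    (HG Vs S).Reachable ⟨a, ha⟩ ⟨b, hb⟩ ↔ Reach S a b := by
  constructor
  · intro h
    have h2 : (SimpleGraph.fromEdgeSet (S : Set (Sym2 V))).Reachable a b :=
      SimpleGraph.Reachable.map
        (⟨Subtype.val, fun h => h⟩ : HG Vs S →g SimpleGraph.fromEdgeSet (S : Set (Sym2 V))) h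
    rw [SimpleGraph.reachable_iff_reflTransGen] at h2
    refine Relation.ReflTransGen.mono ?_ _ _ h2
    intro x y hxy
    rw [SimpleGraph.fromEdgeSet_adj] at hxy
    exact ⟨hxy.1, hxy.2⟩
  · intro h
    revert hb
    induction h with
    | refl => exact fun _ => Reachable.refl _
    | @tail c b hac hcb ih =>
        intro hb
        have hc : c ∈ Vs := reach_mem hconf hac ha
        have hb : b ∈ Vs := hconf _ hcb.1 _ (Sym2.mem_mk_right _ _)
        exact (ih hc).trans ((hg_adj hc hb).mpr ⟨hcb.1, hcb.2⟩).reachable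

lemma comp_eq_iff (hconf : ∀ e ∈ S, ∀ x ∈ e, x ∈ Vs) {a b : V} (ha : a ∈ (Vs : Set V))
    (hb : b ∈ (Vs : Set V)) :
    (HG Vs S).connectedComponentMk ⟨a, ha⟩ = (HG Vs S).connectedComponentMk ⟨b, hb⟩ ↔
      Reach S a b := by
  rw [SimpleGraph.ConnectedComponent.eq, reach_iff hconf ha hb]

/-- The support of a component as a subset of `V`. -/
def sV (c : (HG Vs S).ConnectedComponent) : Set V := Subtype.val '' c.supp

lemma mem_sV_iff (hconf : ∀ e ∈ S, ∀ x ∈ e, x ∈ Vs) {a : V} (ha : a ∈ (Vs : Set V)) {w : V} :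
    w ∈ sV ((HG Vs S).connectedComponentMk ⟨a, ha⟩) ↔ w ∈ Vs ∧ Reach S a w := by
  constructor
  · rintro ⟨x, hx, rfl⟩
    rw [SimpleGraph.ConnectedComponent.mem_supp_iff] at hx
    refine ⟨x.2, ?_⟩
    exact ((comp_eq_iff hconf x.2 ha).mp (by simpa using hx)).symm
  · rintro ⟨hw, hr⟩
    exact ⟨⟨w, hw⟩, by
      rw [SimpleGraph.ConnectedComponent.mem_supp_iff]
      exact (comp_eq_iff hconf (by exact hw) ha).mpr hr.symm, rfl⟩

lemma sV_ncard (c : (HG Vs S).ConnectedComponent) : (sV c).ncard = c.supp.ncard :=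
  Set.ncard_image_of_injective _ Subtype.val_injective


/-- The component of `a` avoids `K`. -/
def CleanR (K : Finset V) (S : Finset (Sym2 V)) (a : V) : Prop :=
  ∀ w, Reach S a w → w ∉ K

lemma clean_iff {K : Finset V} (hconf : ∀ e ∈ S, ∀ x ∈ e, x ∈ Vs) {a : V}
    (ha : a ∈ (Vs : Set V)) :
    (∀ x ∈ ((HG Vs S).connectedComponentMk ⟨a, ha⟩).supp, (x : V) ∉ K) ↔ CleanR K S a := by
  constructor
  · intro h w hr
    have hw : w ∈ Vs := reach_mem hconf hr ha
    refine h ⟨w, hw⟩ ?_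
    rw [SimpleGraph.ConnectedComponent.mem_supp_iff]
    exact (comp_eq_iff hconf (by exact hw) ha).mpr hr.symm
  · intro h x hx
    rw [SimpleGraph.ConnectedComponent.mem_supp_iff] at hx
    exact h _ ((comp_eq_iff hconf x.2 ha).mp hx).symm

section Side

variable {K W₁ : Finset V} {S S₁ : Finset (Sym2 V)}

/-- If the component of `a ∈ W₁` avoids `K`, it stays in `W₁`. -/
lemma claim1 (hN : ∀ a b : V, s(a, b) ∈ S → a ∈ W₁ → b ∈ W₁ ∨ b ∈ K)
    {a : V} (ha : a ∈ W₁) (hcl : CleanR K S a) {w : V} (h : Reach S a w) : w ∈ W₁ := by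
  induction h with
  | refl => exact ha
  | @tail c b hac hcb ih =>
      rcases hN c b hcb.1 ih with h | h
      · exact h
      · exact absurd h (hcl b (hac.tail hcb))

lemma claim2 (hA : ∀ e ∈ S, (∃ x ∈ e, x ∈ W₁) → e ∈ S₁)
    (hN : ∀ a b : V, s(a, b) ∈ S → a ∈ W₁ → b ∈ W₁ ∨ b ∈ K)
    {a : V} (ha : a ∈ W₁) (hcl : CleanR K S a) {w : V} (h : Reach S a w) : Reach S₁ a w := by
  induction h with
  | refl => exact Relation.ReflTransGen.refl
  | @tail c b hac hcb ih =>
      have hc : c ∈ W₁ := claim1 hN ha hcl hac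
      exact ih.tail ⟨hA _ hcb.1 ⟨c, Sym2.mem_mk_left _ _, hc⟩, hcb.2⟩

lemma claim3 (hB : S₁ ⊆ S) {a w : V} (h : Reach S₁ a w) : Reach S a w :=
  Relation.ReflTransGen.mono (r := fun x y => s(x, y) ∈ S₁ ∧ x ≠ y)
    (p := fun x y => s(x, y) ∈ S ∧ x ≠ y) (fun _ _ hxy => ⟨hB hxy.1, hxy.2⟩) _ _ h

lemma claim4 (hA : ∀ e ∈ S, (∃ x ∈ e, x ∈ W₁) → e ∈ S₁) (hB : S₁ ⊆ S)
    (hN : ∀ a b : V, s(a, b) ∈ S → a ∈ W₁ → b ∈ W₁ ∨ b ∈ K)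
    {a : V} (ha : a ∈ W₁) (hcl : CleanR K S₁ a) {w : V} (h : Reach S a w) : Reach S₁ a w := by
  have hN₁ : ∀ a b : V, s(a, b) ∈ S₁ → a ∈ W₁ → b ∈ W₁ ∨ b ∈ K :=
    fun a b hab => hN a b (hB hab)
  induction h with
  | refl => exact Relation.ReflTransGen.refl
  | @tail c b hac hcb ih =>
      have hc : c ∈ W₁ := claim1 hN₁ ha hcl ih
      exact ih.tail ⟨hA _ hcb.1 ⟨c, Sym2.mem_mk_left _ _, hc⟩, hcb.2⟩

lemma cleanR_iff (hA : ∀ e ∈ S, (∃ x ∈ e, x ∈ W₁) → e ∈ S₁) (hB : S₁ ⊆ S)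
    (hN : ∀ a b : V, s(a, b) ∈ S → a ∈ W₁ → b ∈ W₁ ∨ b ∈ K)
    {a : V} (ha : a ∈ W₁) : CleanR K S a ↔ CleanR K S₁ a := by
  constructor
  · exact fun h w hr => h w (claim3 hB hr)
  · exact fun h w hr => h w (claim4 hA hB hN ha h hr)

lemma reach_iff_clean (hA : ∀ e ∈ S, (∃ x ∈ e, x ∈ W₁) → e ∈ S₁) (hB : S₁ ⊆ S)
    (hN : ∀ a b : V, s(a, b) ∈ S → a ∈ W₁ → b ∈ W₁ ∨ b ∈ K)
    {a : V} (ha : a ∈ W₁) (hcl : CleanR K S a) {w : V} : Reach S a w ↔ Reach S₁ a w :=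
  ⟨claim2 hA hN ha hcl, claim3 hB⟩

end Side

section CompSets

/-- The family of vertex-supports of `K`-avoiding components of the graph `(Vs, S)`,
having exactly `i` vertices. -/
def compSets (Vs : Finset V) (S : Finset (Sym2 V)) (K : Finset V) (i : ℕ) : Set (Set V) :=
  {s | ∃ c : (HG Vs S).ConnectedComponent,
    (∀ x ∈ c.supp, (x : V) ∉ K) ∧ sV c = s ∧ c.supp.ncard = i}

variable {K W₁ Vall : Finset V} {S S₁ : Finset (Sym2 V)} {i : ℕ}

lemma compSets_subset_side (confS₁ : ∀ e ∈ S₁, ∀ x ∈ e, x ∈ W₁ ∪ K)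
    {s : Set V} (hs : s ∈ compSets (W₁ ∪ K) S₁ K i) : s ⊆ ↑W₁ ∧ s.Nonempty := by
  obtain ⟨c, hcl, rfl, hi⟩ := hs
  obtain ⟨u, hu⟩ := c.exists_rep
  have humem : u ∈ c.supp := by rw [SimpleGraph.ConnectedComponent.mem_supp_iff]; exact hu
  constructor
  · rintro w ⟨x, hx, rfl⟩
    have h1 : (x : V) ∈ W₁ ∪ K := x.2
    have h2 : (x : V) ∉ K := hcl x hx
    simp only [Finset.mem_coe]
    rcases Finset.mem_union.mp h1 with h | h
    · exact h
    · exact absurd h h2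
  · exact ⟨u, u, humem, rfl⟩

lemma sV_transfer (hA : ∀ e ∈ S, (∃ x ∈ e, x ∈ W₁) → e ∈ S₁) (hB : S₁ ⊆ S)
    (hN : ∀ a b : V, s(a, b) ∈ S → a ∈ W₁ → b ∈ W₁ ∨ b ∈ K)
    (confS : ∀ e ∈ S, ∀ x ∈ e, x ∈ Vall) (confS₁ : ∀ e ∈ S₁, ∀ x ∈ e, x ∈ W₁ ∪ K)
    (hsub : W₁ ⊆ Vall)
    {u : V} (hu : u ∈ W₁) (hcl : CleanR K S u) :
    sV ((HG Vall S).connectedComponentMk ⟨u, by exact_mod_cast hsub hu⟩) =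
      sV ((HG (W₁ ∪ K) S₁).connectedComponentMk
        ⟨u, by exact_mod_cast Finset.mem_union_left _ hu⟩) := by
  have hcl₁ : CleanR K S₁ u := (cleanR_iff hA hB hN hu).mp hcl
  have hN₁ : ∀ a b : V, s(a, b) ∈ S₁ → a ∈ W₁ → b ∈ W₁ ∨ b ∈ K :=
    fun a b hab => hN a b (hB hab)
  ext w
  rw [mem_sV_iff confS, mem_sV_iff confS₁]
  constructor
  · rintro ⟨hwall, hr⟩
    have hw1 : w ∈ W₁ := claim1 hN hu hcl hr
    exact ⟨Finset.mem_union_left _ hw1, claim2 hA hN hu hcl hr⟩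
  · rintro ⟨hwk, hr₁⟩
    have hw1 : w ∈ W₁ := claim1 hN₁ hu hcl₁ hr₁
    exact ⟨hsub hw1, claim3 hB hr₁⟩

lemma side_to (hA : ∀ e ∈ S, (∃ x ∈ e, x ∈ W₁) → e ∈ S₁) (hB : S₁ ⊆ S)
    (hN : ∀ a b : V, s(a, b) ∈ S → a ∈ W₁ → b ∈ W₁ ∨ b ∈ K)
    (confS : ∀ e ∈ S, ∀ x ∈ e, x ∈ Vall) (confS₁ : ∀ e ∈ S₁, ∀ x ∈ e, x ∈ W₁ ∪ K)
    (hsub : W₁ ⊆ Vall) :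
    compSets (W₁ ∪ K) S₁ K i ⊆ compSets Vall S K i := by
  rintro s ⟨c, hcl, rfl, hi⟩
  obtain ⟨u, hu⟩ := c.exists_rep
  have humem : u ∈ c.supp := by rw [SimpleGraph.ConnectedComponent.mem_supp_iff]; exact hu
  have huW : (u : V) ∈ W₁ := by
    rcases Finset.mem_union.mp (by exact_mod_cast u.2 : (u : V) ∈ W₁ ∪ K) with h | h
    · exact h
    · exact absurd h (hcl u humem)
  have hu' : (⟨(u : V), u.2⟩ : ((W₁ ∪ K : Finset V) : Set V)) = u := by ext; rfl
  have hmk : (HG (W₁ ∪ K) S₁).connectedComponentMk ⟨(u : V), u.2⟩ = c := by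
    rw [hu'] at *; exact hu
  have hclR₁ : CleanR K S₁ (u : V) := by
    rw [← clean_iff confS₁ (a := (u : V)) u.2]
    rw [hmk]; exact hcl
  have hclR : CleanR K S (u : V) := (cleanR_iff hA hB hN huW).mpr hclR₁
  have htrans := sV_transfer hA hB hN confS confS₁ hsub huW hclR
  rw [hmk] at htrans
  refine ⟨(HG Vall S).connectedComponentMk ⟨(u : V), by exact_mod_cast hsub huW⟩,
    ?_, htrans, ?_⟩
  · rw [clean_iff confS]; exact hclR
  · rw [← hi, ← sV_ncard, ← sV_ncard, htrans]

lemma side_from (hA : ∀ e ∈ S, (∃ x ∈ e, x ∈ W₁) → e ∈ S₁) (hB : S₁ ⊆ S)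
    (hN : ∀ a b : V, s(a, b) ∈ S → a ∈ W₁ → b ∈ W₁ ∨ b ∈ K)
    (confS : ∀ e ∈ S, ∀ x ∈ e, x ∈ Vall) (confS₁ : ∀ e ∈ S₁, ∀ x ∈ e, x ∈ W₁ ∪ K)
    (hsub : W₁ ⊆ Vall)
    {s : Set V} (hs : s ∈ compSets Vall S K i) {w : V} (hw : w ∈ s) (hw1 : w ∈ W₁) :
    s ∈ compSets (W₁ ∪ K) S₁ K i := by
  obtain ⟨c, hcl, rfl, hi⟩ := hs
  obtain ⟨x, hx, rfl⟩ := hw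
  have hmk : (HG Vall S).connectedComponentMk ⟨(x : V), x.2⟩ = c := by
    have hx' : (⟨(x : V), x.2⟩ : ((Vall : Finset V) : Set V)) = x := by ext; rfl
    rw [hx']; exact (SimpleGraph.ConnectedComponent.mem_supp_iff _ _).mp hx
  have hclR : CleanR K S (x : V) := by
    rw [← clean_iff confS (a := (x : V)) x.2, hmk]; exact hcl
  have htrans := sV_transfer hA hB hN confS confS₁ hsub hw1 hclR
  rw [hmk] at htrans
  refine ⟨(HG (W₁ ∪ K) S₁).connectedComponentMk
      ⟨(x : V), by exact_mod_cast Finset.mem_union_left _ hw1⟩, ?_, htrans.symm, ?_⟩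
  · rw [clean_iff confS₁]; exact (cleanR_iff hA hB hN hw1).mp hclR
  · rw [← hi, ← sV_ncard, ← sV_ncard, htrans]

end CompSets

section Counting

variable {K Vs : Finset V} {S : Finset (Sym2 V)} {i : ℕ}

lemma card_split {α : Type*} [Finite α] (p q : α → Prop) :
    Nat.card {x // p x} = Nat.card {x // q x ∧ p x} + Nat.card {x // ¬q x ∧ p x} := by
  classical
  have : Fintype α := Fintype.ofFinite α
  simp only [Nat.card_eq_fintype_card, Fintype.card_subtype]
  rw [← Finset.card_filter_add_card_filter_not (s := Finset.univ.filter p) q]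
  congr 1
  · rw [Finset.filter_filter]
    apply Finset.card_nbij id (by intro a ha; simpa [and_comm] using ha)
      (by intro a _ b _ h; exact h) (by intro a ha; exact ⟨a, by simpa [and_comm] using ha, rfl⟩)
  · rw [Finset.filter_filter]
    apply Finset.card_nbij id (by intro a ha; simpa [and_comm] using ha)
      (by intro a _ b _ h; exact h) (by intro a ha; exact ⟨a, by simpa [and_comm] using ha, rfl⟩)

lemma card_fiber_sum {α : Type*} [Finite α] (p : α → Prop) (f : α → ℕ) (n : ℕ)
    (hf : ∀ a, f a < n) :
    ∑ i ∈ Finset.range n, Nat.card {x // p x ∧ f x = i} = Nat.card {x // p x} := by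
  classical
  have : Fintype α := Fintype.ofFinite α
  simp only [Nat.card_eq_fintype_card, Fintype.card_subtype]
  rw [Finset.card_eq_sum_card_fiberwise (f := f) (t := Finset.range n)
    (fun x _ => Finset.mem_range.mpr (hf x))]
  refine Finset.sum_congr rfl fun j _ => ?_
  rw [Finset.filter_filter]

lemma sV_injective : Function.Injective (sV : (HG Vs S).ConnectedComponent → Set V) := by
  intro c d h
  exact SimpleGraph.ConnectedComponent.supp_injective
    ((Set.image_injective.mpr Subtype.val_injective) h)

lemma card_clean_eq :
    Nat.card {c : (HG Vs S).ConnectedComponent //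
        (∀ x ∈ c.supp, (x : V) ∉ K) ∧ c.supp.ncard = i} = (compSets Vs S K i).ncard := by
  have himg : compSets Vs S K i =
      sV '' {c : (HG Vs S).ConnectedComponent |
        (∀ x ∈ c.supp, (x : V) ∉ K) ∧ c.supp.ncard = i} := by
    ext s
    constructor
    · rintro ⟨c, h1, h2, h3⟩; exact ⟨c, ⟨h1, h3⟩, h2⟩
    · rintro ⟨c, ⟨h1, h3⟩, h2⟩; exact ⟨c, h1, h2, h3⟩
  rw [himg, Set.ncard_image_of_injective _ sV_injective, ← Nat.card_coe_set_eq]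
  rfl

lemma touch_le :
    Nat.card {c : (HG Vs S).ConnectedComponent // ¬∀ x ∈ c.supp, (x : V) ∉ K} ≤ K.card := by
  classical
  have hch : ∀ c : {c : (HG Vs S).ConnectedComponent // ¬∀ x ∈ c.supp, (x : V) ∉ K},
      ∃ x, x ∈ (c : (HG Vs S).ConnectedComponent).supp ∧ (x : V) ∈ K := by
    rintro ⟨c, hc⟩
    push_neg at hc
    obtain ⟨x, hx, hxk⟩ := hc
    exact ⟨x, hx, hxk⟩
  choose g hg1 hg2 using hch
  have hinj : Function.Injective (fun c => (⟨(g c : V), hg2 c⟩ : {v // v ∈ K})) := by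
    intro c d h
    have hval : (g c : V) = (g d : V) := by simpa using congrArg Subtype.val h
    have : g c = g d := Subtype.val_injective hval
    have h1 := (SimpleGraph.ConnectedComponent.mem_supp_iff _ _).mp (hg1 c)
    have h2 := (SimpleGraph.ConnectedComponent.mem_supp_iff _ _).mp (hg1 d)
    rw [this, h2] at h1
    exact Subtype.ext h1.symm
  calc Nat.card {c : (HG Vs S).ConnectedComponent // ¬∀ x ∈ c.supp, (x : V) ∉ K}
      ≤ Nat.card {v // v ∈ K} := Nat.card_le_card_of_injective _ hinj
    _ = K.card := by rw [Nat.card_eq_fintype_card, Fintype.card_coe]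

lemma supp_ncard_le (c : (HG Vs S).ConnectedComponent) :
    c.supp.ncard ≤ Fintype.card V := by
  calc c.supp.ncard ≤ (Set.univ : Set ((Vs : Set V) : Set V)).ncard :=
        Set.ncard_le_ncard (Set.subset_univ _) (Set.toFinite _)
    _ = Nat.card ((Vs : Set V) : Set V) := Set.ncard_univ _
    _ ≤ Nat.card V := Nat.card_le_card_of_injective Subtype.val Subtype.val_injective
    _ = Fintype.card V := Nat.card_eq_fintype_card

lemma compSets_elem {K Vs : Finset V} {S : Finset (Sym2 V)} {i : ℕ} {s : Set V}
    (hs : s ∈ compSets Vs S K i) : ∃ w ∈ s, w ∈ Vs ∧ w ∉ K := by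
  obtain ⟨c, hcl, rfl, hi⟩ := hs
  obtain ⟨u, hu⟩ := c.exists_rep
  have humem : u ∈ c.supp := by rw [SimpleGraph.ConnectedComponent.mem_supp_iff]; exact hu
  exact ⟨u, ⟨u, humem, rfl⟩, by exact_mod_cast u.2, hcl u humem⟩

end Counting

end Stmt16Aux

set_option linter.unusedSectionVars false
namespace Stmt16Aux

variable {V : Type} [Fintype V] [DecidableEq V]

lemma kappa_decomp (Vs : Finset V) (S : Finset (Sym2 V)) (K : Finset V) (i : ℕ) :
    kappaOrd Vs S i = (compSets Vs S K i).ncard +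
      Nat.card {c : (HG Vs S).ConnectedComponent //
        ¬(∀ x ∈ c.supp, (x : V) ∉ K) ∧ c.supp.ncard = i} := by
  rw [← card_clean_eq]
  exact card_split _ _

lemma kappa_sum_bound (Vs : Finset V) (S : Finset (Sym2 V)) (K : Finset V) :
    ∑ i ∈ Finset.range (Fintype.card V + 1),
      Nat.card {c : (HG Vs S).ConnectedComponent //
        ¬(∀ x ∈ c.supp, (x : V) ∉ K) ∧ c.supp.ncard = i} ≤ K.card := by
  rw [card_fiber_sum _ _ _ (fun c => Nat.lt_succ_of_le (supp_ncard_le c))]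
  exact touch_le

end Stmt16Aux

open Stmt16Aux in
/-- Splitting the vertices of a cut `K` (forming `G'`, the disjoint union of
`(V₁∪K, E₁)` and `(V₂∪K, E₂)`) changes the component-size profile by at most `3|K|`:
`Σ_i |κ(i,G) − κ(i,G')| ≤ 3|K|`. -/
theorem stmt16 (V₁ K V₂ : Finset V) (E E₁ E₂ : Finset (Sym2 V))
    (hcut : IsCutPartition V₁ K V₂ E) (happ : IsAppropriate V₁ V₂ E E₁ E₂) :
    ∑ i ∈ Finset.range (Fintype.card V + 1),
      ((kappaOrd (V₁ ∪ K ∪ V₂) E i : ℤ) -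
        ((kappaOrd (V₁ ∪ K) E₁ i : ℤ) + (kappaOrd (V₂ ∪ K) E₂ i : ℤ))).natAbs ≤
      3 * K.card := by
  obtain ⟨h1K, h12, hK2, hdiag, hEmem, hno12⟩ := hcut
  obtain ⟨hEun, hEdisj, hE1, hE2⟩ := happ
  classical
  have hB1 : E₁ ⊆ E := by rw [← hEun]; exact Finset.subset_union_left
  have hB2 : E₂ ⊆ E := by rw [← hEun]; exact Finset.subset_union_right
  have confE : ∀ e ∈ E, ∀ x ∈ e, x ∈ V₁ ∪ K ∪ V₂ := hEmem
  have conf1 : ∀ e ∈ E₁, ∀ x ∈ e, x ∈ V₁ ∪ K := by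
    intro e he x hx
    have h := hEmem e (hB1 he) x hx
    have h2 := hE1 e he x hx
    rcases Finset.mem_union.mp h with h | h
    · exact h
    · exact absurd h h2
  have conf2 : ∀ e ∈ E₂, ∀ x ∈ e, x ∈ V₂ ∪ K := by
    intro e he x hx
    have h := hEmem e (hB2 he) x hx
    have h2 := hE2 e he x hx
    rcases Finset.mem_union.mp h with h | h
    · rcases Finset.mem_union.mp h with h | h
      · exact absurd h h2
      · exact Finset.mem_union_right _ h
    · exact Finset.mem_union_left _ h
  have hA1 : ∀ e ∈ E, (∃ x ∈ e, x ∈ V₁) → e ∈ E₁ := by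
    rintro e he ⟨x, hx, hx1⟩
    rw [← hEun] at he
    rcases Finset.mem_union.mp he with h | h
    · exact h
    · exact absurd hx1 (hE2 e h x hx)
  have hA2 : ∀ e ∈ E, (∃ x ∈ e, x ∈ V₂) → e ∈ E₂ := by
    rintro e he ⟨x, hx, hx2⟩
    rw [← hEun] at he
    rcases Finset.mem_union.mp he with h | h
    · exact absurd hx2 (hE1 e h x hx)
    · exact h
  have hN1 : ∀ a b : V, s(a, b) ∈ E → a ∈ V₁ → b ∈ V₁ ∨ b ∈ K := by
    intro a b hab ha
    have hb := hEmem _ hab b (Sym2.mem_mk_right _ _)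
    have hb2 : b ∉ V₂ := hno12 a b hab ha
    rcases Finset.mem_union.mp hb with h | h
    · exact Finset.mem_union.mp h
    · exact absurd h hb2
  have hN2 : ∀ a b : V, s(a, b) ∈ E → a ∈ V₂ → b ∈ V₂ ∨ b ∈ K := by
    intro a b hab ha
    have hb := hEmem _ hab b (Sym2.mem_mk_right _ _)
    have hb1 : b ∉ V₁ := fun hb1 => hno12 b a (by rwa [Sym2.eq_swap] at hab) hb1 ha
    rcases Finset.mem_union.mp hb with h | h
    · rcases Finset.mem_union.mp h with h | h
      · exact absurd h hb1
      · exact Or.inr h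
    · exact Or.inl h
  have hsub1 : V₁ ⊆ V₁ ∪ K ∪ V₂ :=
    Finset.subset_union_left.trans Finset.subset_union_left
  have hsub2 : V₂ ⊆ V₁ ∪ K ∪ V₂ := Finset.subset_union_right
  have hunion : ∀ i, compSets (V₁ ∪ K ∪ V₂) E K i =
      compSets (V₁ ∪ K) E₁ K i ∪ compSets (V₂ ∪ K) E₂ K i := by
    intro i
    apply Set.Subset.antisymm
    · intro s hs
      obtain ⟨w, hw, hwall, hwk⟩ := compSets_elem hs
      rcases Finset.mem_union.mp hwall with h | h
      · rcases Finset.mem_union.mp h with h | h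
        · exact Or.inl (side_from hA1 hB1 hN1 confE conf1 hsub1 hs hw h)
        · exact absurd h hwk
      · exact Or.inr (side_from hA2 hB2 hN2 confE conf2 hsub2 hs hw h)
    · exact Set.union_subset (side_to hA1 hB1 hN1 confE conf1 hsub1)
        (side_to hA2 hB2 hN2 confE conf2 hsub2)
  have hdisjC : ∀ i, Disjoint (compSets (V₁ ∪ K) E₁ K i) (compSets (V₂ ∪ K) E₂ K i) := by
    intro i
    rw [Set.disjoint_left]
    intro s hs1 hs2
    obtain ⟨hs1', w, hw⟩ := compSets_subset_side conf1 hs1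
    obtain ⟨hs2', -⟩ := compSets_subset_side conf2 hs2
    exact Finset.disjoint_left.mp h12 (by exact_mod_cast hs1' hw) (by exact_mod_cast hs2' hw)
  have hstep : ∀ i ∈ Finset.range (Fintype.card V + 1),
      ((kappaOrd (V₁ ∪ K ∪ V₂) E i : ℤ) -
        ((kappaOrd (V₁ ∪ K) E₁ i : ℤ) + (kappaOrd (V₂ ∪ K) E₂ i : ℤ))).natAbs ≤
      Nat.card {c : (HG (V₁ ∪ K ∪ V₂) E).ConnectedComponent //
          ¬(∀ x ∈ c.supp, (x : V) ∉ K) ∧ c.supp.ncard = i} +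
      (Nat.card {c : (HG (V₁ ∪ K) E₁).ConnectedComponent //
          ¬(∀ x ∈ c.supp, (x : V) ∉ K) ∧ c.supp.ncard = i} +
       Nat.card {c : (HG (V₂ ∪ K) E₂).ConnectedComponent //
          ¬(∀ x ∈ c.supp, (x : V) ∉ K) ∧ c.supp.ncard = i}) := by
    intro i _
    have hci : (compSets (V₁ ∪ K ∪ V₂) E K i).ncard =
        (compSets (V₁ ∪ K) E₁ K i).ncard + (compSets (V₂ ∪ K) E₂ K i).ncard := by
      rw [hunion i]
      exact Set.ncard_union_eq (hdisjC i) (Set.toFinite _) (Set.toFinite _)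
    rw [kappa_decomp (V₁ ∪ K ∪ V₂) E K i, kappa_decomp (V₁ ∪ K) E₁ K i,
      kappa_decomp (V₂ ∪ K) E₂ K i, hci]
    push_cast
    omega
  calc ∑ i ∈ Finset.range (Fintype.card V + 1),
      ((kappaOrd (V₁ ∪ K ∪ V₂) E i : ℤ) -
        ((kappaOrd (V₁ ∪ K) E₁ i : ℤ) + (kappaOrd (V₂ ∪ K) E₂ i : ℤ))).natAbs
      ≤ ∑ i ∈ Finset.range (Fintype.card V + 1),
        (Nat.card {c : (HG (V₁ ∪ K ∪ V₂) E).ConnectedComponent //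
            ¬(∀ x ∈ c.supp, (x : V) ∉ K) ∧ c.supp.ncard = i} +
        (Nat.card {c : (HG (V₁ ∪ K) E₁).ConnectedComponent //
            ¬(∀ x ∈ c.supp, (x : V) ∉ K) ∧ c.supp.ncard = i} +
         Nat.card {c : (HG (V₂ ∪ K) E₂).ConnectedComponent //
            ¬(∀ x ∈ c.supp, (x : V) ∉ K) ∧ c.supp.ncard = i})) :=
        Finset.sum_le_sum hstep
    _ ≤ K.card + (K.card + K.card) := by
        rw [Finset.sum_add_distrib, Finset.sum_add_distrib]
        gcongr
        · exact kappa_sum_bound (V₁ ∪ K ∪ V₂) E K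
        · exact kappa_sum_bound (V₁ ∪ K) E₁ K
        · exact kappa_sum_bound (V₂ ∪ K) E₂ K
    _ ≤ 3 * K.card := by ring_nf; omega
end

section
/- For fixed x, y > 1, the interlace weight function w(G[S]) = (x-1)^{rank₂(S)} (y-1)^{|V|−rank₂(S)}, where rank₂(S) is the 𝔽₂-rank of the adjacency matrix of G[S], is vertex λ-multiplicative with λ = ((x-1)/(y-1))². -/
open Finset

variable {V : Type} [Fintype V] [DecidableEq V]

noncomputable def VertexLamMult (G : SimpleGraph V) (w : Finset V → ℝ) (l : ℝ) : Prop :=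
  ∀ V₁ K V₂ : Finset V,
    Disjoint V₁ K → Disjoint V₁ V₂ → Disjoint K V₂ →
    (∀ a ∈ V₁, ∀ b ∈ V₂, ¬ G.Adj a b) →
    lamHat l ^ (-(K.card : ℤ)) ≤ w V₁ * w (V₂ ∪ K) / w (V₁ ∪ K ∪ V₂) ∧
    w V₁ * w (V₂ ∪ K) / w (V₁ ∪ K ∪ V₂) ≤ lamHat l ^ (K.card : ℤ)

/-- `rank₂(S)`: the `𝔽₂`-rank of the adjacency matrix of the induced subgraph `G[S]`. -/
noncomputable def indAdjRank (G : SimpleGraph V) [DecidableRel G.Adj]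
    (S : Finset V) : ℕ :=
  (Matrix.of fun a b : V =>
    if a ∈ S ∧ b ∈ S ∧ G.Adj a b then (1 : ZMod 2) else 0).rank

/-- projection (diagonal indicator) matrix of a finset -/
noncomputable def projM (K : Finset V) : Matrix V V (ZMod 2) :=
  Matrix.diagonal fun a => if a ∈ K then 1 else 0

lemma rank_projM_le (K : Finset V) : (projM K).rank ≤ K.card := by
  rw [projM, Matrix.rank_diagonal]
  have : ∀ i : V, ((if i ∈ K then (1 : ZMod 2) else 0) ≠ 0) ↔ i ∈ K := by
    intro i; split <;> simp_all
  calc Fintype.card {i // (if i ∈ K then (1 : ZMod 2) else 0) ≠ 0}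
      = Fintype.card {i // i ∈ K} := Fintype.card_congr (Equiv.subtypeEquivRight this)
    _ ≤ K.card := (Fintype.card_coe K).le

lemma rank_le_of_rows_subset (N : Matrix V V (ZMod 2)) (K : Finset V)
    (h : ∀ a b, a ∉ K → N a b = 0) : N.rank ≤ K.card := by
  have hN : projM K * N = N := by
    ext a b
    rw [projM, Matrix.diagonal_mul]
    by_cases ha : a ∈ K
    · simp [ha]
    · simp [ha, h a b ha]
  calc N.rank = (projM K * N).rank := by rw [hN]
    _ ≤ (projM K).rank := Matrix.rank_mul_le_left _ _
    _ ≤ K.card := rank_projM_le K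

lemma rank_le_of_cols_subset (N : Matrix V V (ZMod 2)) (K : Finset V)
    (h : ∀ a b, b ∉ K → N a b = 0) : N.rank ≤ K.card := by
  have hN : N * projM K = N := by
    ext a b
    rw [projM, Matrix.mul_diagonal]
    by_cases hb : b ∈ K
    · simp [hb]
    · simp [hb, h a b hb]
  calc N.rank = (N * projM K).rank := by rw [hN]
    _ ≤ (projM K).rank := Matrix.rank_mul_le_right _ _
    _ ≤ K.card := rank_projM_le K

lemma rank_add_le' (A B : Matrix V V (ZMod 2)) : (A + B).rank ≤ A.rank + B.rank := by
  rw [Matrix.rank, Matrix.rank, Matrix.rank, Matrix.mulVecLin_add]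
  have h : LinearMap.range (A.mulVecLin + B.mulVecLin) ≤
      LinearMap.range A.mulVecLin ⊔ LinearMap.range B.mulVecLin := by
    rintro _ ⟨x, rfl⟩
    exact Submodule.add_mem_sup ⟨x, rfl⟩ ⟨x, rfl⟩
  refine (Submodule.finrank_mono h).trans ?_
  have := Submodule.finrank_sup_add_finrank_inf_eq
    (LinearMap.range A.mulVecLin) (LinearMap.range B.mulVecLin)
  omega

lemma rank_add_eq_of_disjoint_support (A B : Matrix V V (ZMod 2)) (SA SB : Finset V)
    (hd : Disjoint SA SB)
    (hA : ∀ a b, A a b ≠ 0 → a ∈ SA ∧ b ∈ SA)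
    (hB : ∀ a b, B a b ≠ 0 → a ∈ SB ∧ b ∈ SB) :
    (A + B).rank = A.rank + B.rank := by
  classical
  have hAm : ∀ x : V → ZMod 2, A.mulVec (fun i => if i ∈ SA then x i else 0) = A.mulVec x := by
    intro x; funext i
    simp only [Matrix.mulVec, dotProduct]
    refine Finset.sum_congr rfl fun b _ => ?_
    by_cases hb : b ∈ SA
    · simp [hb]
    · have : A i b = 0 := by_contra fun h => hb (hA i b h).2
      simp [this]
  have hBm0 : ∀ x : V → ZMod 2, B.mulVec (fun i => if i ∈ SA then x i else 0) = 0 := by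
    intro x; funext i
    simp only [Matrix.mulVec, dotProduct]
    refine Finset.sum_eq_zero fun b _ => ?_
    by_cases hb : b ∈ SA
    · have : B i b = 0 := by_contra fun h => (hd.forall_ne_finset hb (hB i b h).2) rfl
      simp [this]
    · simp [hb]
  have hBm : ∀ x : V → ZMod 2, B.mulVec (fun i => if i ∈ SB then x i else 0) = B.mulVec x := by
    intro x; funext i
    simp only [Matrix.mulVec, dotProduct]
    refine Finset.sum_congr rfl fun b _ => ?_
    by_cases hb : b ∈ SB
    · simp [hb]
    · have : B i b = 0 := by_contra fun h => hb (hB i b h).2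
      simp [this]
  have hAm0 : ∀ x : V → ZMod 2, A.mulVec (fun i => if i ∈ SB then x i else 0) = 0 := by
    intro x; funext i
    simp only [Matrix.mulVec, dotProduct]
    refine Finset.sum_eq_zero fun b _ => ?_
    by_cases hb : b ∈ SB
    · have : A i b = 0 := by_contra fun h => (hd.forall_ne_finset (hA i b h).2 hb) rfl
      simp [this]
    · simp [hb]
  have hrange : LinearMap.range (A + B).mulVecLin =
      LinearMap.range A.mulVecLin ⊔ LinearMap.range B.mulVecLin := by
    apply le_antisymm
    · rintro _ ⟨x, rfl⟩
      rw [Matrix.mulVecLin_add]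
      exact Submodule.add_mem_sup ⟨x, rfl⟩ ⟨x, rfl⟩
    · refine sup_le ?_ ?_
      · rintro _ ⟨x, rfl⟩
        refine ⟨fun i => if i ∈ SA then x i else 0, ?_⟩
        simp only [Matrix.mulVecLin_apply, Matrix.add_mulVec, hAm, hBm0, add_zero]
      · rintro _ ⟨x, rfl⟩
        refine ⟨fun i => if i ∈ SB then x i else 0, ?_⟩
        simp only [Matrix.mulVecLin_apply, Matrix.add_mulVec, hBm, hAm0, zero_add]
  have hdis : Disjoint (LinearMap.range A.mulVecLin) (LinearMap.range B.mulVecLin) := by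
    rw [Submodule.disjoint_def]
    rintro v ⟨xa, ha⟩ ⟨xb, hb⟩
    funext i
    by_cases hi : i ∈ SA
    · have hi' : i ∉ SB := fun h => (hd.forall_ne_finset hi h) rfl
      rw [← hb]
      simp only [Matrix.mulVecLin_apply, Matrix.mulVec, dotProduct]
      exact Finset.sum_eq_zero fun b _ => by
        have : B i b = 0 := by_contra fun h => hi' (hB i b h).1
        simp [this]
    · rw [← ha]
      simp only [Matrix.mulVecLin_apply, Matrix.mulVec, dotProduct]
      exact Finset.sum_eq_zero fun b _ => by
        have : A i b = 0 := by_contra fun h => hi (hA i b h).1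
        simp [this]
  rw [Matrix.rank, Matrix.rank, Matrix.rank, hrange]
  have h2 := Submodule.finrank_sup_add_finrank_inf_eq
    (LinearMap.range A.mulVecLin) (LinearMap.range B.mulVecLin)
  rw [hdis.eq_bot] at h2
  simpa using h2

noncomputable def MS (G : SimpleGraph V) [DecidableRel G.Adj] (S : Finset V) :
    Matrix V V (ZMod 2) :=
  Matrix.of fun a b : V => if a ∈ S ∧ b ∈ S ∧ G.Adj a b then (1 : ZMod 2) else 0

lemma rank_key (G : SimpleGraph V) [DecidableRel G.Adj] (V₁ K V₂ : Finset V)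
    (h1 : Disjoint V₁ K) (h2 : Disjoint V₁ V₂) (h3 : Disjoint K V₂)
    (hcut : ∀ a ∈ V₁, ∀ b ∈ V₂, ¬ G.Adj a b) :
    |((MS G V₁).rank : ℤ) + ((MS G (V₂ ∪ K)).rank : ℤ)
      - ((MS G (V₁ ∪ K ∪ V₂)).rank : ℤ)| ≤ 2 * K.card := by
  classical
  set A := MS G V₁ with hA
  set B := MS G (V₂ ∪ K) with hB
  set M := MS G (V₁ ∪ K ∪ V₂) with hM
  set E1 : Matrix V V (ZMod 2) :=
    Matrix.of fun a b => if a ∈ K ∧ b ∈ V₁ ∧ G.Adj a b then 1 else 0 with hE1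
  set E2 : Matrix V V (ZMod 2) :=
    Matrix.of fun a b => if a ∈ V₁ ∧ b ∈ K ∧ G.Adj a b then 1 else 0 with hE2
  have d1 : ∀ {c : V}, c ∈ V₁ → c ∉ K := fun h => Finset.disjoint_left.mp h1 h
  have d2 : ∀ {c : V}, c ∈ V₁ → c ∉ V₂ := fun h => Finset.disjoint_left.mp h2 h
  have d3 : ∀ {c : V}, c ∈ K → c ∉ V₂ := fun h => Finset.disjoint_left.mp h3 h
  -- the decomposition
  have hdec : M = A + B + (E1 + E2) := by
    ext a b
    simp only [hM, hA, hB, hE1, hE2, MS, Matrix.add_apply, Matrix.of_apply]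
    by_cases hab : G.Adj a b
    · by_cases ha1 : a ∈ V₁ <;> by_cases ha2 : a ∈ K <;> by_cases ha3 : a ∈ V₂ <;>
        by_cases hb1 : b ∈ V₁ <;> by_cases hb2 : b ∈ K <;> by_cases hb3 : b ∈ V₂ <;>
        first
          | (exact absurd ‹_ ∈ _› (d1 ‹_›))
          | (exact absurd ‹_ ∈ _› (d2 ‹_›))
          | (exact absurd ‹_ ∈ _› (d3 ‹_›))
          | (exact absurd hab (hcut a ‹_› b ‹_›))
          | (exact absurd hab.symm (hcut b ‹_› a ‹_›))
          | simp_all [Finset.mem_union]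
    · simp [hab]
  have hsuppA : ∀ a b, A a b ≠ 0 → a ∈ V₁ ∧ b ∈ V₁ := by
    intro a b h
    simp only [hA, MS, Matrix.of_apply] at h
    split_ifs at h with hc
    · exact ⟨hc.1, hc.2.1⟩
    · exact absurd rfl h
  have hsuppB : ∀ a b, B a b ≠ 0 → a ∈ V₂ ∪ K ∧ b ∈ V₂ ∪ K := by
    intro a b h
    simp only [hB, MS, Matrix.of_apply] at h
    split_ifs at h with hc
    · exact ⟨hc.1, hc.2.1⟩
    · exact absurd rfl h
  have hdAB : Disjoint V₁ (V₂ ∪ K) :=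
    Finset.disjoint_union_right.mpr ⟨h2, h1⟩
  have hAB : (A + B).rank = A.rank + B.rank :=
    rank_add_eq_of_disjoint_support A B V₁ (V₂ ∪ K) hdAB hsuppA hsuppB
  have hE1r : E1.rank ≤ K.card := by
    apply rank_le_of_rows_subset
    intro a b ha
    simp only [hE1, Matrix.of_apply]
    split_ifs with hc
    · exact absurd hc.1 ha
    · rfl
  have hE2r : E2.rank ≤ K.card := by
    apply rank_le_of_cols_subset
    intro a b hb
    simp only [hE2, Matrix.of_apply]
    split_ifs with hc
    · exact absurd hc.2.1 hb
    · rfl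
  have hEr : (E1 + E2).rank ≤ 2 * K.card := by
    have := rank_add_le' E1 E2; omega
  -- upper: rank M ≤ rank A + rank B + 2|K|
  have hup : M.rank ≤ A.rank + B.rank + 2 * K.card := by
    have h4 := rank_add_le' (A + B) (E1 + E2)
    rw [← hdec, hAB] at h4
    omega
  -- lower: rank A + rank B ≤ rank M + 2|K|
  have hlow : A.rank + B.rank ≤ M.rank + 2 * K.card := by
    have hEE : A + B = M + (E1 + E2) := by
      rw [hdec]
      ext a b
      simp only [Matrix.add_apply]
      ring_nf
      have h2z : (2 : ZMod 2) = 0 := rfl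
      rw [h2z]
      ring
    have h4 := rank_add_le' M (E1 + E2)
    rw [← hEE, hAB] at h4
    omega
  rw [abs_le]
  constructor <;> push_cast <;> omega

lemma zpow_le_max {t : ℝ} (ht : 0 < t) {e c : ℤ} (h : |e| ≤ c) :
    t ^ e ≤ (max t t⁻¹) ^ c := by
  set m := max t t⁻¹ with hm
  have hm1 : 1 ≤ m := by
    rcases le_total 1 t with h' | h'
    · exact h'.trans (le_max_left _ _)
    · exact ((one_le_inv₀ ht).mpr h').trans (le_max_right _ _)
  rcases le_or_gt 0 e with he | he
  · obtain ⟨n, rfl⟩ := Int.eq_ofNat_of_zero_le he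
    calc t ^ (n : ℤ) = t ^ n := zpow_natCast t n
      _ ≤ m ^ n := pow_le_pow_left₀ ht.le (le_max_left _ _) n
      _ = m ^ (n : ℤ) := (zpow_natCast m n).symm
      _ ≤ m ^ c := zpow_le_zpow_right₀ hm1 ((le_abs_self _).trans h)
  · obtain ⟨n, hn⟩ := Int.eq_ofNat_of_zero_le (neg_nonneg.mpr he.le)
    have : t ^ e = t⁻¹ ^ (n : ℤ) := by
      rw [_root_.inv_zpow, ← _root_.zpow_neg, ← hn, neg_neg]
    rw [this]
    calc t⁻¹ ^ (n : ℤ) = t⁻¹ ^ n := zpow_natCast _ n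
      _ ≤ m ^ n := pow_le_pow_left₀ (inv_pos.mpr ht).le (le_max_right _ _) n
      _ = m ^ (n : ℤ) := (zpow_natCast m n).symm
      _ ≤ m ^ c := by
          refine zpow_le_zpow_right₀ hm1 ?_
          have : (n : ℤ) = -e := hn.symm
          rw [this]
          exact (neg_le_abs e).trans h
  
lemma max_zpow_le {t : ℝ} (ht : 0 < t) {e c : ℤ} (h : |e| ≤ c) :
    (max t t⁻¹) ^ (-c) ≤ t ^ e := by
  have h1 : t ^ (-e) ≤ (max t t⁻¹) ^ c := zpow_le_max ht (by rwa [abs_neg])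
  have hmpos : 0 < max t t⁻¹ := lt_max_of_lt_left ht
  have htep : 0 < t ^ e := zpow_pos ht e
  rw [_root_.zpow_neg] at h1 ⊢
  calc ((max t t⁻¹) ^ c)⁻¹ ≤ ((t ^ e)⁻¹)⁻¹ := by
        apply inv_anti₀ (inv_pos.mpr htep) h1
    _ = t ^ e := inv_inv _

lemma lamHat_sq {t : ℝ} (ht : 0 < t) : lamHat (t ^ 2) = (max t t⁻¹) ^ 2 := by
  rw [lamHat, ← inv_pow]
  rcases le_total t t⁻¹ with h | h
  · rw [max_eq_right h, max_eq_right (pow_le_pow_left₀ ht.le h 2)]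
  · rw [max_eq_left h, max_eq_left (pow_le_pow_left₀ (inv_pos.mpr ht).le h 2)]

lemma lamHat_sq_zpow {t : ℝ} (ht : 0 < t) (e : ℤ) :
    lamHat (t ^ 2) ^ e = (max t t⁻¹) ^ (2 * e) := by
  rw [lamHat_sq ht, ← zpow_natCast (max t t⁻¹) 2, ← _root_.zpow_mul]
  norm_num


/-- For fixed `x, y > 1`, the interlace weight function
`w(G[S]) = (x-1)^{rank₂(S)} (y-1)^{|S| - rank₂(S)}` is vertex `λ`-multiplicative with
`λ = ((x-1)/(y-1))²`. -/
theorem stmt17 (G : SimpleGraph V) [DecidableRel G.Adj]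
    (x y : ℝ) (hx : 1 < x) (hy : 1 < y) :
    VertexLamMult G (fun S : Finset V =>
      (x - 1) ^ (indAdjRank G S : ℤ) *
        (y - 1) ^ ((S.card : ℤ) - (indAdjRank G S : ℤ)))
      (((x - 1) / (y - 1)) ^ 2) := by
  intro V₁ K V₂ h1 h2 h3 hcut
  set a := x - 1 with ha'
  set b := y - 1 with hb'
  have ha : 0 < a := by linarith
  have hb : 0 < b := by linarith
  set t := a / b with ht'
  have ht : 0 < t := div_pos ha hb
  have hrank : ∀ S : Finset V, indAdjRank G S = (MS G S).rank := fun _ => rfl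
  set r1 := indAdjRank G V₁ with hr1
  set r2 := indAdjRank G (V₂ ∪ K) with hr2
  set r := indAdjRank G (V₁ ∪ K ∪ V₂) with hr
  set d : ℤ := (r1 : ℤ) + r2 - r with hd
  have habs : |d| ≤ 2 * (K.card : ℤ) := by
    have := rank_key G V₁ K V₂ h1 h2 h3 hcut
    rw [hd, hr1, hr2, hr, hrank V₁, hrank (V₂ ∪ K), hrank (V₁ ∪ K ∪ V₂)]
    exact_mod_cast this
  have hcard : ((V₁ ∪ K ∪ V₂).card : ℤ) = (V₁.card : ℤ) + ((V₂ ∪ K).card : ℤ) := by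
    have e1 : V₁ ∪ K ∪ V₂ = V₁ ∪ (K ∪ V₂) := Finset.union_assoc _ _ _
    have e2 : Disjoint V₁ (K ∪ V₂) := Finset.disjoint_union_right.mpr ⟨h1, h2⟩
    rw [e1, Finset.card_union_of_disjoint e2, Finset.union_comm K V₂]
    push_cast; ring
  have hratio :
      (a ^ (r1 : ℤ) * b ^ ((V₁.card : ℤ) - r1)) *
        (a ^ (r2 : ℤ) * b ^ (((V₂ ∪ K).card : ℤ) - r2)) /
        (a ^ (r : ℤ) * b ^ (((V₁ ∪ K ∪ V₂).card : ℤ) - r)) = t ^ d := by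
    have key : (a ^ (r1 : ℤ) * b ^ ((V₁.card : ℤ) - r1)) *
        (a ^ (r2 : ℤ) * b ^ (((V₂ ∪ K).card : ℤ) - r2)) /
        (a ^ (r : ℤ) * b ^ (((V₁ ∪ K ∪ V₂).card : ℤ) - r)) =
        (a ^ (r1 : ℤ) * a ^ (r2 : ℤ) / a ^ (r : ℤ)) *
        (b ^ ((V₁.card : ℤ) - r1) * b ^ (((V₂ ∪ K).card : ℤ) - r2) /
          b ^ (((V₁ ∪ K ∪ V₂).card : ℤ) - r)) := by ring
    rw [key, ← zpow_add₀ ha.ne', ← zpow_sub₀ ha.ne',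
      ← zpow_add₀ hb.ne', ← zpow_sub₀ hb.ne']
    have he : (V₁.card : ℤ) - r1 + (((V₂ ∪ K).card : ℤ) - r2) -
        (((V₁ ∪ K ∪ V₂).card : ℤ) - r) = -d := by
      rw [hcard]; ring
    rw [he, ht', div_zpow, _root_.zpow_neg, div_eq_mul_inv]
  simp only []
  rw [hratio]
  constructor
  · rw [show (((x-1)/(y-1))^2 : ℝ) = t ^ 2 by rw [ht', ha', hb'],
      lamHat_sq_zpow ht, mul_neg]
    exact max_zpow_le ht habs
  · rw [show (((x-1)/(y-1))^2 : ℝ) = t ^ 2 by rw [ht', ha', hb'],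
      lamHat_sq_zpow ht]
    exact zpow_le_max ht habs
end
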